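/- arXiv:2206.13624 — 11 statements merged into one kernel-verified Lean document; each statement's English description precedes it below -/
import Mathlib

section
/- Let n and m be positive integers, let A be an n×n real matrix, B an m×n real matrix, and W an m×m real matrix. Define the (n+m)×(n+m) block matrices K = [[A, Bᵀ],[B, 0]] and K(W) = [[A + BᵀWB, Bᵀ],[B, 0]]. If K and K(W) are both invertible, then K⁻¹ = K(W)⁻¹ + [[0, 0],[0, W]], where [[0,0],[0,W]] denotes the (n+m)×(n+m) block matrix whose only nonzero block is W in the (2,2)-position. -/
open Matrix

/-! With `E = [[0,0],[0,W]]` one has `K(W) = K + K E K` and `E K E = 0`, so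
`(K + K E K)(K⁻¹ - E) = 1 + K E - K E - K E K E = 1`. -/

theorem mul_sub_eq_one_of_mul_mul_eq_zero {R : Type*} [Ring R] {K K' E : R}
    (hK : K * K' = 1) (hEKE : E * K * E = 0) : (K + K * E * K) * (K' - E) = 1 := by
  have hKEKE : K * E * K * E = 0 := by rw [mul_assoc K E K, mul_assoc K, hEKE, mul_zero]
  have hKEKK' : K * E * K * K' = K * E := by rw [mul_assoc (K * E), hK, mul_one]
  rw [add_mul, mul_sub, mul_sub, hK, hKEKE, hKEKK', sub_zero, sub_add_cancel]

theorem Matrix.inv_add_mul_mul_self {ι R : Type*} [Fintype ι] [DecidableEq ι] [CommRing R]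
    {K E : Matrix ι ι R} (hK : IsUnit K) (hEKE : E * K * E = 0) :
    (K + K * E * K)⁻¹ = K⁻¹ - E :=
  inv_eq_right_inv <|
    mul_sub_eq_one_of_mul_mul_eq_zero (mul_nonsing_inv K ((isUnit_iff_isUnit_det K).mp hK)) hEKE

section SaddlePoint

variable {l o R : Type*} [Fintype l] [Fintype o] [NonUnitalSemiring R]
  (A : Matrix l l R) (C : Matrix l o R) (B : Matrix o l R) (W : Matrix o o R)

theorem Matrix.fromBlocks_zero_mul_saddle_mul_fromBlocks_zero :
    fromBlocks 0 0 0 W * fromBlocks A C B 0 * fromBlocks 0 0 0 W = 0 := by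
  simp [fromBlocks_multiply]

theorem Matrix.saddle_add_mul_fromBlocks_zero_mul_saddle :
    fromBlocks A C B 0 + fromBlocks A C B 0 * fromBlocks 0 0 0 W * fromBlocks A C B 0 =
      fromBlocks (A + C * W * B) C B 0 := by
  simp [fromBlocks_multiply, fromBlocks_add, Matrix.mul_assoc]

end SaddlePoint

theorem saddle_inverse_augmented_general {n m : ℕ}
    (A : Matrix (Fin n) (Fin n) ℝ) (B : Matrix (Fin m) (Fin n) ℝ)
    (W : Matrix (Fin m) (Fin m) ℝ)
    (hK : IsUnit (Matrix.fromBlocks A Bᵀ B 0)) :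
    (Matrix.fromBlocks A Bᵀ B 0)⁻¹ =
      (Matrix.fromBlocks (A + Bᵀ * W * B) Bᵀ B 0)⁻¹ + Matrix.fromBlocks 0 0 0 W := by
  rw [← saddle_add_mul_fromBlocks_zero_mul_saddle,
    inv_add_mul_mul_self hK (fromBlocks_zero_mul_saddle_mul_fromBlocks_zero A Bᵀ B W),
    sub_add_cancel]

/-- If `K = [[A, Bᵀ],[B, 0]]` and `K(W) = [[A + BᵀWB, Bᵀ],[B, 0]]` are both
invertible, then `K⁻¹ = K(W)⁻¹ + [[0,0],[0,W]]`. -/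
theorem saddle_inverse_augmented {n m : ℕ} (hn : 0 < n) (hm : 0 < m)
    (A : Matrix (Fin n) (Fin n) ℝ) (B : Matrix (Fin m) (Fin n) ℝ)
    (W : Matrix (Fin m) (Fin m) ℝ)
    (hK : IsUnit (Matrix.fromBlocks A Bᵀ B 0))
    (hKW : IsUnit (Matrix.fromBlocks (A + Bᵀ * W * B) Bᵀ B 0)) :
    (Matrix.fromBlocks A Bᵀ B 0)⁻¹ =
      (Matrix.fromBlocks (A + Bᵀ * W * B) Bᵀ B 0)⁻¹ + Matrix.fromBlocks 0 0 0 W :=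
  saddle_inverse_augmented_general A B W hK
end

section
/- Let n be a positive integer and let M and N be n×n real matrices with rank(M) = r, rank(N) = n − r, and M + N invertible. Then the matrix P = (M+N)⁻¹M is idempotent (P·P = P) and rank(P) = r. -/
open Matrix

/-- If `rank M = r`, `rank N = n - r` and `M + N` is invertible, then
`(M + N)⁻¹ M` is an idempotent of rank `r`. -/
theorem inv_add_mul_isProjector {n r : ℕ} (hn : 0 < n)
    (M N : Matrix (Fin n) (Fin n) ℝ)
    (hM : M.rank = r) (hN : N.rank = n - r) (hMN : IsUnit (M + N)) :
    ((M + N)⁻¹ * M) * ((M + N)⁻¹ * M) = (M + N)⁻¹ * M ∧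
      ((M + N)⁻¹ * M).rank = r := by
  set A := M + N with hA
  have hdet : IsUnit A.det := (isUnit_iff_isUnit_det A).mp hMN
  have hdetinv : IsUnit A⁻¹.det := by
    rw [Matrix.det_nonsing_inv]
    exact hdet.ringInverse
  set P := A⁻¹ * M with hP
  set Q := A⁻¹ * N with hQ
  have hrP : P.rank = r := by
    rw [hP, Matrix.rank_mul_eq_right_of_isUnit_det _ _ hdetinv, hM]
  have hrQ : Q.rank = n - r := by
    rw [hQ, Matrix.rank_mul_eq_right_of_isUnit_det _ _ hdetinv, hN]
  have hrn : r ≤ n := by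
    rw [← hrP]; simpa using P.rank_le_card_width
  have hPQ : P + Q = 1 := by
    rw [hP, hQ, ← Matrix.mul_add, ← hA, Matrix.nonsing_inv_mul _ hdet]
  -- ranges
  set Sp := LinearMap.range P.mulVecLin with hSp
  set Sq := LinearMap.range Q.mulVecLin with hSq
  have hsup : Sp ⊔ Sq = ⊤ := by
    rw [eq_top_iff]
    intro x _
    have : x = P.mulVecLin x + Q.mulVecLin x := by
      have := congrArg (fun B => Matrix.mulVecLin B x) hPQ
      simpa [Matrix.mulVecLin_one] using this.symm
    rw [this]
    exact Submodule.add_mem _ (Submodule.mem_sup_left ⟨x, rfl⟩)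
      (Submodule.mem_sup_right ⟨x, rfl⟩)
  have hinf : Sp ⊓ Sq = ⊥ := by
    have h1 : Module.finrank ℝ ↥(Sp ⊔ Sq) + Module.finrank ℝ ↥(Sp ⊓ Sq)
        = Module.finrank ℝ ↥Sp + Module.finrank ℝ ↥Sq :=
      Submodule.finrank_sup_add_finrank_inf_eq Sp Sq
    have htop : Module.finrank ℝ ↥(Sp ⊔ Sq) = n := by
      rw [hsup, finrank_top]; simp [Module.finrank_fintype_fun_eq_card]
    have hrp : Module.finrank ℝ ↥Sp = r := hrP
    have hrq : Module.finrank ℝ ↥Sq = n - r := hrQ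
    rw [htop, hrp, hrq] at h1
    have : Module.finrank ℝ ↥(Sp ⊓ Sq) = 0 := by omega
    exact Submodule.finrank_eq_zero.mp this
  have key : ∀ x : Fin n → ℝ, Q.mulVec (P.mulVec x) = 0 := by
    intro x
    have hmem : Q.mulVec (P.mulVec x) ∈ Sp ⊓ Sq := by
      constructor
      · have hQ1P : Q.mulVec (P.mulVec x) = P.mulVec (x - P.mulVec x) := by
          have h1 : Q = 1 - P := by rw [← hPQ]; abel
          rw [h1, Matrix.sub_mulVec, Matrix.one_mulVec, Matrix.mulVec_sub]
        rw [hQ1P]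
        exact ⟨x - P.mulVec x, rfl⟩
      · exact ⟨P.mulVec x, rfl⟩
    rw [hinf] at hmem
    exact hmem
  have hQP : Q * P = 0 := by
    ext i j
    have h := congrFun (key (Pi.single j 1)) i
    rw [Matrix.mulVec_mulVec] at h
    simpa [Matrix.mulVec_single] using h
  constructor
  · have h1 : P = 1 - Q := by rw [← hPQ]; abel
    calc P * P = (1 - Q) * P := by rw [← h1]
    _ = P - Q * P := by rw [Matrix.sub_mul, Matrix.one_mul]
    _ = P := by rw [hQP, sub_zero]
  · exact hrP
end

section
/- Let n be a positive integer and let M and N be n×n real matrices with rank(M) = r, rank(N) = n − r, and M + N invertible. Then M(M+N)⁻¹N = 0. -/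
/-!
Since `M + N` is invertible, the column spaces of `M` and `N` span `ℝⁿ`; as their dimensions add up
to `n`, they meet only in `0`. The matrix `M (M + N)⁻¹ N = N (M + N)⁻¹ M` has its columns in both,
hence vanishes.
-/

open Matrix Module

theorem LinearMap.disjoint_range_of_surjective_add {K V W : Type*} [DivisionRing K]
    [AddCommGroup V] [Module K V] [AddCommGroup W] [Module K W] [FiniteDimensional K W]
    {f g : V →ₗ[K] W} (hfg : Function.Surjective (f + g))
    (hrank : finrank K (range f) + finrank K (range g) ≤ finrank K W) :
    Disjoint (range f) (range g) := by
  have hsup : range f ⊔ range g = ⊤ :=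
    top_le_iff.mp (range_eq_top.mpr hfg ▸ range_add_le f g)
  have hdim := Submodule.finrank_sup_add_finrank_inf_eq (range f) (range g)
  rw [hsup, finrank_top] at hdim
  rw [disjoint_iff, ← Submodule.finrank_eq_zero]
  omega

theorem Matrix.mul_eq_zero_of_mul_eq_mul_of_disjoint {R l m n o : Type*} [CommSemiring R]
    [Fintype m] [Fintype n] [Fintype o] {A : Matrix l m R} {B : Matrix l n R} {X : Matrix m o R}
    {Y : Matrix n o R} (h : A * X = B * Y)
    (hAB : Disjoint (LinearMap.range A.mulVecLin) (LinearMap.range B.mulVecLin)) :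
    A * X = 0 := by
  have hle : LinearMap.range (A * X).mulVecLin ≤ ⊥ := by
    refine hAB.eq_bot ▸ le_inf ?_ ?_
    · exact mulVecLin_mul A X ▸ LinearMap.range_comp_le_range _ _
    · exact h ▸ mulVecLin_mul B Y ▸ LinearMap.range_comp_le_range _ _
  rw [le_bot_iff, LinearMap.range_eq_bot] at hle
  exact mulVec_injective <| funext fun v => by simpa using LinearMap.congr_fun hle v

theorem Matrix.mul_nonsing_inv_add_mul_comm {R n : Type*} [CommRing R] [Fintype n] [DecidableEq n]
    {M N : Matrix n n R} (h : IsUnit (M + N)) :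
    M * (M + N)⁻¹ * N = N * (M + N)⁻¹ * M := by
  have hdet := (isUnit_iff_isUnit_det _).mp h
  calc M * (M + N)⁻¹ * N = (M + N - N) * (M + N)⁻¹ * N := by rw [add_sub_cancel_right]
    _ = N - N * (M + N)⁻¹ * N := by rw [sub_mul, mul_nonsing_inv _ hdet, sub_mul, one_mul]
    _ = N * (M + N)⁻¹ * (M + N - N) := by
      rw [mul_sub, Matrix.mul_assoc N _ (M + N), nonsing_inv_mul _ hdet, mul_one, Matrix.mul_assoc]
    _ = N * (M + N)⁻¹ * M := by rw [add_sub_cancel_right]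

theorem mul_inv_add_mul_eq_zero_general {n r : ℕ}
    (M N : Matrix (Fin n) (Fin n) ℝ)
    (hM : M.rank = r) (hN : N.rank = n - r) (hMN : IsUnit (M + N)) :
    M * (M + N)⁻¹ * N = 0 := by
  have hr : r ≤ n := hM ▸ M.rank_le_width
  have hdisj : Disjoint (LinearMap.range M.mulVecLin) (LinearMap.range N.mulVecLin) := by
    refine LinearMap.disjoint_range_of_surjective_add ?_ ?_
    · exact mulVecLin_add M N ▸ mulVec_surjective_iff_isUnit.mpr hMN
    · change M.rank + N.rank ≤ _
      rw [hM, hN, finrank_fin_fun]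
      omega
  rw [Matrix.mul_assoc]
  refine mul_eq_zero_of_mul_eq_mul_of_disjoint (Y := (M + N)⁻¹ * M) ?_ hdisj
  rw [← Matrix.mul_assoc, mul_nonsing_inv_add_mul_comm hMN, Matrix.mul_assoc]

/-- If `rank M = r`, `rank N = n - r` and `M + N` is invertible, then
`M (M + N)⁻¹ N = 0`. -/
theorem mul_inv_add_mul_eq_zero {n r : ℕ} (hn : 0 < n)
    (M N : Matrix (Fin n) (Fin n) ℝ)
    (hM : M.rank = r) (hN : N.rank = n - r) (hMN : IsUnit (M + N)) :
    M * (M + N)⁻¹ * N = 0 :=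
  mul_inv_add_mul_eq_zero_general M N hM hN hMN
end

section
/- Let n and m be positive integers with m < n, let A be an n×n real symmetric positive semidefinite matrix with rank(A) = n − m, and let B be an m×n real matrix with rank m, such that the (n+m)×(n+m) block matrix K = [[A, Bᵀ],[B, 0]] is invertible. Let μ⁺ be the smallest positive eigenvalue of A, let σ be the smallest singular value of B (i.e., σ² is the smallest eigenvalue of BBᵀ), and let c = sup { ⟨u, v⟩ : u in the column space of A, v in the column space of Bᵀ, ‖u‖ = ‖v‖ = 1 } (so c = cos θ_min where θ_min is the minimum principal angle between range(A) and range(Bᵀ)). Then every positive eigenvalue λ of K satisfies λ ≥ min{ μ⁺(1 − c), σ·√(1 − c) }. -/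
set_option maxHeartbeats 2000000

open scoped RealInnerProductSpace

section Aux

open scoped RealInnerProductSpace

lemma adjoint_lower_bound {E F : Type*} [NormedAddCommGroup E] [InnerProductSpace ℝ E]
    [NormedAddCommGroup F] [InnerProductSpace ℝ F] [FiniteDimensional ℝ E] [FiniteDimensional ℝ F]
    (T : E →L[ℝ] F) (hbij : Function.Bijective T) {γ : ℝ} (hγ : 0 < γ)
    (h : ∀ v, γ * ‖v‖ ≤ ‖T v‖) (w : F) : γ * ‖w‖ ≤ ‖ContinuousLinearMap.adjoint T w‖ := by
  set e : E ≃L[ℝ] F :=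
    (LinearEquiv.ofBijective (T : E →ₗ[ℝ] F) hbij).toContinuousLinearEquiv with he
  have hecoe : ∀ v : E, e v = T v := fun v => rfl
  set S : F →L[ℝ] E := (e.symm : F →L[ℝ] E) with hS
  have hTS : T.comp S = ContinuousLinearMap.id ℝ F := by
    ext y
    show T (e.symm y) = y
    rw [← hecoe]
    exact e.apply_symm_apply y
  have hSnorm : ‖S‖ ≤ γ⁻¹ := by
    apply ContinuousLinearMap.opNorm_le_bound _ (by positivity)
    intro y
    have h1 := h (S y)
    have h2 : T (S y) = y := by
      have := ContinuousLinearMap.ext_iff.mp hTS y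
      simpa using this
    rw [h2] at h1
    calc ‖S y‖ = γ⁻¹ * (γ * ‖S y‖) := by field_simp
    _ ≤ γ⁻¹ * ‖y‖ := mul_le_mul_of_nonneg_left h1 (by positivity)
  have hadj : (ContinuousLinearMap.adjoint S).comp (ContinuousLinearMap.adjoint T)
      = ContinuousLinearMap.id ℝ F := by
    rw [← ContinuousLinearMap.adjoint_comp, hTS, ContinuousLinearMap.adjoint_id]
  have hw : ContinuousLinearMap.adjoint S (ContinuousLinearMap.adjoint T w) = w := by
    have := ContinuousLinearMap.ext_iff.mp hadj w
    simpa using this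
  have hb : ‖w‖ ≤ γ⁻¹ * ‖ContinuousLinearMap.adjoint T w‖ := by
    calc ‖w‖ = ‖ContinuousLinearMap.adjoint S (ContinuousLinearMap.adjoint T w)‖ := by rw [hw]
    _ ≤ ‖ContinuousLinearMap.adjoint S‖ * ‖ContinuousLinearMap.adjoint T w‖ :=
        ContinuousLinearMap.le_opNorm _ _
    _ ≤ γ⁻¹ * ‖ContinuousLinearMap.adjoint T w‖ := by
        apply mul_le_mul_of_nonneg_right _ (norm_nonneg _)
        rw [ContinuousLinearMap.adjoint.norm_map S]
        exact hSnorm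
    _ = _ := rfl
  calc γ * ‖w‖ ≤ γ * (γ⁻¹ * ‖ContinuousLinearMap.adjoint T w‖) := by
        exact mul_le_mul_of_nonneg_left hb hγ.le
  _ = ‖ContinuousLinearMap.adjoint T w‖ := by field_simp


open scoped RealInnerProductSpace

variable {E : Type*} [NormedAddCommGroup E] [InnerProductSpace ℝ E] [FiniteDimensional ℝ E]

lemma inner_le_c_mul (R S : Submodule ℝ E) {c : ℝ} (hc0 : 0 ≤ c)
    (hub : ∀ u ∈ R, ∀ v ∈ S, ‖u‖ = 1 → ‖v‖ = 1 → ⟪u, v⟫ ≤ c) :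
    ∀ u ∈ R, ∀ v ∈ S, ⟪u, v⟫ ≤ c * (‖u‖ * ‖v‖) := by
  intro u hu v hv
  rcases eq_or_ne u 0 with rfl | hu0
  · simp
  rcases eq_or_ne v 0 with rfl | hv0
  · simp
  have hun : ‖u‖ ≠ 0 := norm_ne_zero_iff.mpr hu0
  have hvn : ‖v‖ ≠ 0 := norm_ne_zero_iff.mpr hv0
  have key := hub (‖u‖⁻¹ • u) (R.smul_mem _ hu) (‖v‖⁻¹ • v) (S.smul_mem _ hv)
    (norm_smul_inv_norm hu0) (norm_smul_inv_norm hv0)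
  rw [real_inner_smul_left, real_inner_smul_right] at key
  have h1 : ⟪u, v⟫ = (‖u‖ * ‖v‖) * (‖u‖⁻¹ * (‖v‖⁻¹ * ⟪u, v⟫)) := by
    field_simp
  rw [h1]
  calc (‖u‖ * ‖v‖) * (‖u‖⁻¹ * (‖v‖⁻¹ * ⟪u, v⟫)) ≤ (‖u‖ * ‖v‖) * c := by
        apply mul_le_mul_of_nonneg_left key (by positivity)
  _ = c * (‖u‖ * ‖v‖) := mul_comm _ _

lemma inner_proj_self (R : Submodule ℝ E) (x : E) :
    ⟪(Submodule.orthogonalProjectionOnto R x : E), x⟫ = ‖(Submodule.orthogonalProjectionOnto R x : E)‖ ^ 2 := by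
  have h : ⟪(Submodule.orthogonalProjectionOnto R x : E), x - Submodule.orthogonalProjectionOnto R x⟫ = 0 :=
    Submodule.inner_right_of_mem_orthogonal (Submodule.orthogonalProjectionOnto R x).2
      (Submodule.sub_starProjection_mem_orthogonal x)
  have := real_inner_self_eq_norm_sq ((Submodule.orthogonalProjectionOnto R x : E))
  nlinarith [inner_sub_right (𝕜 := ℝ) (Submodule.orthogonalProjectionOnto R x : E) x (Submodule.orthogonalProjectionOnto R x : E)]

lemma norm_proj_le_c (R S : Submodule ℝ E) {c : ℝ} (hc0 : 0 ≤ c)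
    (hub : ∀ u ∈ R, ∀ v ∈ S, ‖u‖ = 1 → ‖v‖ = 1 → ⟪u, v⟫ ≤ c)
    {v : E} (hv : v ∈ S) : ‖(Submodule.orthogonalProjectionOnto R v : E)‖ ≤ c * ‖v‖ := by
  set u := (Submodule.orthogonalProjectionOnto R v : E) with hu
  have h1 : ‖u‖ ^ 2 = ⟪u, v⟫ := (inner_proj_self R v).symm
  have h2 : ⟪u, v⟫ ≤ c * (‖u‖ * ‖v‖) := inner_le_c_mul R S hc0 hub u (Submodule.orthogonalProjectionOnto R v).2 v hv
  rcases eq_or_lt_of_le (norm_nonneg u) with h0 | h0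
  · rw [← h0]; positivity
  · nlinarith

/-- existence of a unit vector in `S` almost aligned with a given `w ∈ Rᗮ`. -/
lemma exists_good_unit (R S : Submodule ℝ E) (hsup : R ⊔ S = ⊤)
    (hdim : Module.finrank ℝ S = Module.finrank ℝ Rᗮ) (hSpos : 0 < Module.finrank ℝ S)
    {c : ℝ} (hc0 : 0 ≤ c) (hc1 : c < 1)
    (hub : ∀ u ∈ R, ∀ v ∈ S, ‖u‖ = 1 → ‖v‖ = 1 → ⟪u, v⟫ ≤ c)
    {w : E} (hw : w ∈ Rᗮ) :
    ∃ v ∈ S, ‖v‖ = 1 ∧ Real.sqrt (1 - c ^ 2) * ‖w‖ ≤ ⟪w, v⟫ := by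
  set γ := Real.sqrt (1 - c ^ 2) with hγdef
  have h1c2 : (0:ℝ) < 1 - c ^ 2 := by nlinarith
  have hγpos : 0 < γ := Real.sqrt_pos.mpr h1c2
  have hγsq : γ ^ 2 = 1 - c ^ 2 := Real.sq_sqrt h1c2.le
  set T : S →L[ℝ] Rᗮ := (Submodule.orthogonalProjectionOnto Rᗮ).comp (Submodule.subtypeL S) with hT
  -- lower bound on ‖T v‖
  have hTlb : ∀ v : S, γ * ‖v‖ ≤ ‖T v‖ := by
    intro v
    have hdecomp : ‖(v : E)‖ ^ 2 = ‖(Submodule.orthogonalProjectionOnto R (v : E) : E)‖ ^ 2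
        + ‖(Submodule.orthogonalProjectionOnto Rᗮ (v : E) : E)‖ ^ 2 := Submodule.norm_sq_eq_add_norm_sq_projection _ R
    have hPRv : ‖(Submodule.orthogonalProjectionOnto R (v : E) : E)‖ ≤ c * ‖(v : E)‖ :=
      norm_proj_le_c R S hc0 hub v.2
    have hTv : ‖T v‖ = ‖(Submodule.orthogonalProjectionOnto Rᗮ (v : E) : E)‖ := rfl
    have hnv : ‖(v : E)‖ = ‖v‖ := rfl
    rw [hTv]
    have h2 : γ ^ 2 * ‖v‖ ^ 2 ≤ ‖(Submodule.orthogonalProjectionOnto Rᗮ (v : E) : E)‖ ^ 2 := by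
      rw [hγsq, ← hnv]
      nlinarith [norm_nonneg (v : E), norm_nonneg (Submodule.orthogonalProjectionOnto R (v : E) : E)]
    nlinarith [norm_nonneg (Submodule.orthogonalProjectionOnto Rᗮ (v : E) : E), norm_nonneg v,
      mul_nonneg hγpos.le (norm_nonneg v)]
  -- T is bijective
  have hinj : Function.Injective T := by
    intro a b hab
    have h0 : T (a - b) = 0 := by rw [map_sub, hab, sub_self]
    have := hTlb (a - b)
    rw [h0, norm_zero] at this
    have : ‖a - b‖ ≤ 0 := by nlinarith [norm_nonneg (a - b)]
    have : a - b = 0 := norm_le_zero_iff.mp this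
    exact sub_eq_zero.mp this
  have hbij : Function.Bijective T := by
    refine ⟨hinj, ?_⟩
    exact (LinearMap.injective_iff_surjective_of_finrank_eq_finrank
      (f := T.toLinearMap) hdim).mp hinj
  -- adjoint bound
  have hadjb := adjoint_lower_bound T hbij hγpos hTlb
  set w' : Rᗮ := ⟨w, hw⟩ with hw'
  have hkey := hadjb w'
  set z : S := ContinuousLinearMap.adjoint T w' with hz
  -- inner product identity : ⟪w, (u:E)⟫ = ⟪z, u⟫ for u : S
  have hinner : ∀ u : S, ⟪w, (u : E)⟫ = ⟪z, u⟫ := by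
    intro u
    have h1 : ⟪z, u⟫ = ⟪w', T u⟫ := ContinuousLinearMap.adjoint_inner_left T u w'
    have h2 : ⟪w', T u⟫ = ⟪w, (Submodule.orthogonalProjectionOnto Rᗮ (u : E) : E)⟫ := rfl
    have h3 : ⟪w, (u : E) - (Submodule.orthogonalProjectionOnto Rᗮ (u : E) : E)⟫ = 0 :=
      Submodule.inner_right_of_mem_orthogonal hw (Submodule.sub_starProjection_mem_orthogonal _)
    rw [h1, h2]
    have h4 := inner_sub_right (𝕜 := ℝ) w (u : E) (Submodule.orthogonalProjectionOnto Rᗮ (u : E) : E)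
    rw [h3] at h4
    linarith [h4]
  rcases eq_or_ne z 0 with hz0 | hz0
  · -- then w = 0
    have hwz : ‖w'‖ = 0 := by
      rw [hz0, norm_zero] at hkey
      nlinarith [norm_nonneg w']
    have hw0 : w = 0 := by
      have : ‖w‖ = 0 := hwz
      exact norm_eq_zero.mp this
    have hSne : S ≠ ⊥ := by
      intro h
      rw [h] at hSpos
      simp at hSpos
    obtain ⟨v0, hv0S, hv00⟩ := (Submodule.ne_bot_iff S).mp hSne
    have hv0n : ‖v0‖ ≠ 0 := norm_ne_zero_iff.mpr hv00
    refine ⟨‖v0‖⁻¹ • v0, S.smul_mem _ hv0S, norm_smul_inv_norm hv00, ?_⟩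
    · rw [hw0]
      simp
  · have hzn : ‖z‖ ≠ 0 := fun h => hz0 (norm_eq_zero.mp h)
    have hzE0 : (z : E) ≠ 0 := by
      intro h
      exact hz0 (Subtype.ext h)
    have hnzE : ‖(z : E)‖ = ‖z‖ := rfl
    refine ⟨‖z‖⁻¹ • (z : E), S.smul_mem _ z.2, ?_, ?_⟩
    · rw [← hnzE]
      exact norm_smul_inv_norm hzE0
    · have h1 : ⟪w, ((z : E))⟫ = ‖z‖ ^ 2 := by
        rw [hinner z, real_inner_self_eq_norm_sq]
      rw [real_inner_smul_right, h1]
      have h2 : ‖z‖⁻¹ * ‖z‖ ^ 2 = ‖z‖ := by field_simp [pow_two]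
      rw [h2]
      have hnw : ‖w'‖ = ‖w‖ := rfl
      rw [← hnw]
      exact hkey

lemma geom_core (R S : Submodule ℝ E) (hsup : R ⊔ S = ⊤)
    (hdim : Module.finrank ℝ S = Module.finrank ℝ Rᗮ) (hSpos : 0 < Module.finrank ℝ S)
    {c : ℝ} (hc0 : 0 ≤ c) (hc1 : c ≤ 1)
    (hub : ∀ u ∈ R, ∀ v ∈ S, ‖u‖ = 1 → ‖v‖ = 1 → ⟪u, v⟫ ≤ c) (x : E) :
    (1 - c) * ‖x‖ ^ 2 ≤ ‖(Submodule.orthogonalProjectionOnto R x : E)‖ ^ 2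
      + ‖(Submodule.orthogonalProjectionOnto S x : E)‖ ^ 2 := by
  rcases eq_or_lt_of_le hc1 with rfl | hc1'
  · simp only [sub_self, zero_mul]
    positivity
  -- c < 1 case
  set u : E := (Submodule.orthogonalProjectionOnto R x : E) with hu
  set w : E := x - u with hwdef
  have hwmem : w ∈ Rᗮ := Submodule.sub_starProjection_mem_orthogonal x
  have hx : x = u + w := by rw [hwdef]; abel
  have huw : ⟪u, w⟫ = 0 :=
    Submodule.inner_right_of_mem_orthogonal (Submodule.orthogonalProjectionOnto R x).2 hwmem
  set t := ‖u‖
  set r := ‖w‖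
  have hxsq : ‖x‖ ^ 2 = t ^ 2 + r ^ 2 := by
    rw [hx, norm_add_sq_real, huw]
    ring
  obtain ⟨v, hvS, hv1, hvw⟩ := exists_good_unit R S hsup hdim hSpos hc0 hc1' hub hwmem
  set γ := Real.sqrt (1 - c ^ 2) with hγdef
  have h1c2 : (0:ℝ) < 1 - c ^ 2 := by nlinarith
  have hγsq : γ ^ 2 = 1 - c ^ 2 := Real.sq_sqrt h1c2.le
  have hγ0 : 0 ≤ γ := Real.sqrt_nonneg _
  set β := ‖(Submodule.orthogonalProjectionOnto S x : E)‖ with hβdef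
  have hβ0 : 0 ≤ β := norm_nonneg _
  -- ⟪x, v⟫ ≤ β
  have hxv : ⟪x, v⟫ ≤ β := by
    have h3 : ⟪x - (Submodule.orthogonalProjectionOnto S x : E), v⟫ = 0 :=
      Submodule.inner_left_of_mem_orthogonal hvS (Submodule.sub_starProjection_mem_orthogonal x)
    have h4 := inner_sub_left (𝕜 := ℝ) x (Submodule.orthogonalProjectionOnto S x : E) v
    rw [h3] at h4
    have h5 : ⟪(Submodule.orthogonalProjectionOnto S x : E), v⟫ ≤ β := by
      calc ⟪(Submodule.orthogonalProjectionOnto S x : E), v⟫ ≤ ‖(Submodule.orthogonalProjectionOnto S x : E)‖ * ‖v‖ :=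
            real_inner_le_norm _ _
      _ = β := by rw [hv1, mul_one]
    linarith
  -- lower bound ⟪x, v⟫ ≥ γ r - c t
  have huv : ⟪-u, v⟫ ≤ c * (‖(-u : E)‖ * ‖v‖) :=
    inner_le_c_mul R S hc0 hub (-u) (R.neg_mem (Submodule.orthogonalProjectionOnto R x).2) v hvS
  have huv' : -(c * t) ≤ ⟪u, v⟫ := by
    rw [inner_neg_left, norm_neg, hv1, mul_one] at huv
    linarith
  have hlow : γ * r - c * t ≤ β := by
    have h6 := inner_add_left (𝕜 := ℝ) u w v
    have : γ * r - c * t ≤ ⟪x, v⟫ := by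
      rw [hx, h6]
      have := hvw
      linarith
    linarith
  -- final algebra
  have hs1 : Real.sqrt (1 + c) ^ 2 = 1 + c := Real.sq_sqrt (by linarith)
  have hs2 : Real.sqrt (1 - c) ^ 2 = 1 - c := Real.sq_sqrt (by linarith)
  have hs12 : Real.sqrt (1 + c) * Real.sqrt (1 - c) = γ := by
    rw [hγdef, ← Real.sqrt_mul (by linarith)]
    ring_nf
  set s1 := Real.sqrt (1 + c)
  set s2 := Real.sqrt (1 - c)
  have ht0 : 0 ≤ t := norm_nonneg _
  have hr0 : 0 ≤ r := norm_nonneg _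
  rw [hxsq]
  rcases le_or_gt (γ * r) (c * t) with hcase | hcase
  · -- big projection on R
    have h7 : (γ * r) ^ 2 ≤ (c * t) ^ 2 := by
      nlinarith [mul_nonneg hγ0 hr0]
    nlinarith [sq_nonneg β, sq_nonneg t, sq_nonneg r, mul_nonneg hc0 (sq_nonneg t)]
  · have h8 : (γ * r - c * t) ^ 2 ≤ β ^ 2 := by
      nlinarith
    have hγr2 : (γ * r - c * t) ^ 2 = (1 - c ^ 2) * r ^ 2 - 2 * c * γ * t * r + c ^ 2 * t ^ 2 := by
      rw [sub_sq, mul_pow, hγsq]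
      ring
    have hkey : c * (s1 * t - s2 * r) ^ 2
        = (1 + c) * c * t ^ 2 - 2 * c * γ * t * r + (1 - c) * c * r ^ 2 := by
      have hexp : (s1 * t - s2 * r) ^ 2
          = s1 ^ 2 * t ^ 2 - 2 * (s1 * s2) * t * r + s2 ^ 2 * r ^ 2 := by ring
      rw [hexp, hs1, hs2, hs12]
      ring
    nlinarith [h8, hγr2, hkey, mul_nonneg hc0 (sq_nonneg (s1 * t - s2 * r))]

end Aux

section Spectral

variable {k : ℕ}

local notation "E" => EuclideanSpace ℝ (Fin k)

/-- Quadratic form of a PSD matrix bounded below by `μ` times the squared norm of the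
projection onto its range, where `μ` bounds all nonzero eigenvalues from below. -/
lemma quad_lower (M : Matrix (Fin k) (Fin k) ℝ) (hM : M.PosSemidef) {μ : ℝ} (hμ0 : 0 ≤ μ)
    (hμle : ∀ i, hM.1.eigenvalues i ≠ 0 → μ ≤ hM.1.eigenvalues i)
    (x : EuclideanSpace ℝ (Fin k)) :
    μ * ‖(Submodule.orthogonalProjectionOnto (LinearMap.range (Matrix.toEuclideanLin M)) x : E)‖ ^ 2
      ≤ ⟪x, Matrix.toEuclideanLin M x⟫ := by
  classical
  set L := Matrix.toEuclideanLin M with hL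
  set R := LinearMap.range L with hR
  set b := hM.1.eigenvectorBasis with hb
  set d := hM.1.eigenvalues with hd
  have hsym : ∀ y z : E, ⟪L y, z⟫ = ⟪y, L z⟫ :=
    (Matrix.isHermitian_iff_isSymmetric.mp hM.1)
  have heig : ∀ i, L (b i) = d i • b i := by
    intro i
    apply PiLp.ext
    intro j
    have := congrFun (hM.1.mulVec_eigenvectorBasis i) j
    simpa [hL, Matrix.toEuclideanLin_apply] using this
  have hdnn : ∀ i, 0 ≤ d i := fun i => hM.eigenvalues_nonneg i
  set c : Fin k → ℝ := fun i => ⟪b i, x⟫ with hc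
  have hinner_bL : ∀ i, ⟪b i, L x⟫ = d i * c i := by
    intro i
    rw [← hsym (b i) x, heig i, real_inner_smul_left]
  have hquad : ⟪x, L x⟫ = ∑ i, d i * c i ^ 2 := by
    rw [← OrthonormalBasis.sum_inner_mul_inner b x (L x)]
    apply Finset.sum_congr rfl
    intro i _
    rw [hinner_bL i, real_inner_comm (b i) x]
    ring
  set c' : Fin k → ℝ := fun i => if d i ≠ 0 then c i else 0 with hc'
  set x' : E := ∑ i, c' i • b i with hx'
  have hxsum : ∑ i, c i • b i = x := b.sum_repr' x
  have hx'mem : x' ∈ R := by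
    apply Submodule.sum_mem
    intro i _
    rcases eq_or_ne (d i) 0 with hdi | hdi
    · simp [hc', hdi]
    · apply Submodule.smul_mem
      exact ⟨(d i)⁻¹ • b i, by rw [map_smul, heig i, smul_smul, inv_mul_cancel₀ hdi, one_smul]⟩
  have hLdiff : L (x - x') = 0 := by
    rw [map_sub]
    have h1 : L x = ∑ i, (c i * d i) • b i := by
      conv_lhs => rw [← hxsum]
      rw [map_sum]
      apply Finset.sum_congr rfl
      intro i _
      rw [map_smul, heig i, smul_smul]
    have h2 : L x' = ∑ i, (c' i * d i) • b i := by
      rw [hx', map_sum]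
      apply Finset.sum_congr rfl
      intro i _
      rw [map_smul, heig i, smul_smul]
    rw [h1, h2, ← Finset.sum_sub_distrib]
    apply Finset.sum_eq_zero
    intro i _
    rcases eq_or_ne (d i) 0 with hdi | hdi
    · simp [hdi]
    · simp [hc', hdi]
  have hdiff_orth : x - x' ∈ Rᗮ := by
    rw [Submodule.mem_orthogonal]
    rintro y ⟨z, rfl⟩
    rw [hsym z (x - x'), hLdiff, inner_zero_right]
  have hproj_eq : (Submodule.orthogonalProjectionOnto R x : E) = (Submodule.orthogonalProjectionOnto R x' : E) := by
    have h3 : Submodule.orthogonalProjectionOnto R (x - x') = 0 :=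
      Submodule.orthogonalProjectionOnto_apply_of_mem_orthogonal hdiff_orth
    have h4 := map_sub (Submodule.orthogonalProjectionOnto R) x x'
    rw [h3] at h4
    exact congrArg _ (sub_eq_zero.mp h4.symm)
  have hnormproj : ‖(Submodule.orthogonalProjectionOnto R x : E)‖ ^ 2 ≤ ‖x'‖ ^ 2 := by
    rw [hproj_eq]
    have hdec : ‖x'‖ ^ 2 = ‖(Submodule.orthogonalProjectionOnto R x' : E)‖ ^ 2
        + ‖(Submodule.orthogonalProjectionOnto Rᗮ x' : E)‖ ^ 2 := Submodule.norm_sq_eq_add_norm_sq_projection x' R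
    nlinarith [sq_nonneg ‖(Submodule.orthogonalProjectionOnto Rᗮ x' : E)‖]
  have hx'norm : ‖x'‖ ^ 2 = ∑ i, c' i ^ 2 := by
    rw [← real_inner_self_eq_norm_sq, hx', b.orthonormal.inner_sum c' c' Finset.univ]
    apply Finset.sum_congr rfl
    intro i _
    simp [pow_two]
  calc μ * ‖(Submodule.orthogonalProjectionOnto R x : E)‖ ^ 2 ≤ μ * ∑ i, c' i ^ 2 := by
        rw [← hx'norm]
        exact mul_le_mul_of_nonneg_left hnormproj hμ0
  _ = ∑ i, μ * c' i ^ 2 := Finset.mul_sum _ _ _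
  _ ≤ ∑ i, d i * c i ^ 2 := by
        apply Finset.sum_le_sum
        intro i _
        rcases eq_or_ne (d i) 0 with hdi | hdi
        · have h6 : c' i = 0 := by simp [hc', hdi]
          rw [h6, hdi]
          simp
        · have h6 : c' i = c i := by simp [hc', hdi]
          rw [h6]
          exact mul_le_mul_of_nonneg_right (hμle i hdi) (sq_nonneg _)
  _ = ⟪x, L x⟫ := hquad.symm

/-- squared norm of `G z` is at least `s` times the quadratic form, when all eigenvalues
of the hermitian matrix `G` are at least `s ≥ 0`. -/
lemma sq_norm_image_lower (G : Matrix (Fin k) (Fin k) ℝ) (hG : G.IsHermitian) {s : ℝ}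
    (hs0 : 0 ≤ s) (hsle : ∀ i, s ≤ hG.eigenvalues i) (z : EuclideanSpace ℝ (Fin k)) :
    s * ⟪z, Matrix.toEuclideanLin G z⟫ ≤ ‖Matrix.toEuclideanLin G z‖ ^ 2 := by
  classical
  set L := Matrix.toEuclideanLin G with hL
  set b := hG.eigenvectorBasis with hb
  set d := hG.eigenvalues with hd
  have hsym : ∀ y w : E, ⟪L y, w⟫ = ⟪y, L w⟫ :=
    (Matrix.isHermitian_iff_isSymmetric.mp hG)
  have heig : ∀ i, L (b i) = d i • b i := by
    intro i
    apply PiLp.ext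
    intro j
    have := congrFun (hG.mulVec_eigenvectorBasis i) j
    simpa [hL, Matrix.toEuclideanLin_apply] using this
  set c : Fin k → ℝ := fun i => ⟪b i, z⟫ with hc
  have hinner_bL : ∀ i, ⟪b i, L z⟫ = d i * c i := by
    intro i
    rw [← hsym (b i) z, heig i, real_inner_smul_left]
  have hquad : ⟪z, L z⟫ = ∑ i, d i * c i ^ 2 := by
    rw [← OrthonormalBasis.sum_inner_mul_inner b z (L z)]
    apply Finset.sum_congr rfl
    intro i _
    rw [hinner_bL i, real_inner_comm (b i) z]
    ring
  have hnorm : ‖L z‖ ^ 2 = ∑ i, d i ^ 2 * c i ^ 2 := by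
    rw [← real_inner_self_eq_norm_sq, ← OrthonormalBasis.sum_inner_mul_inner b (L z) (L z)]
    apply Finset.sum_congr rfl
    intro i _
    rw [hinner_bL i, real_inner_comm (b i) (L z), hinner_bL i]
    ring
  rw [hquad, hnorm, Finset.mul_sum]
  apply Finset.sum_le_sum
  intro i _
  have h1 : s ≤ d i := hsle i
  have h2 : 0 ≤ (d i - s) * d i * (c i ^ 2) :=
    mul_nonneg (mul_nonneg (sub_nonneg.mpr h1) (hs0.trans h1)) (sq_nonneg (c i))
  nlinarith [h2]

end Spectral

section Helpers
open Matrix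

lemma inner_eq_dot {p : ℕ} (f g : EuclideanSpace ℝ (Fin p)) :
    ⟪f, g⟫ = dotProduct (WithLp.equiv 2 (Fin p → ℝ) f) (WithLp.equiv 2 (Fin p → ℝ) g) := by
  rw [EuclideanSpace.inner_eq_star_dotProduct]
  simp only [star_trivial]
  exact dotProduct_comm _ _

lemma dot_le_one_of_units {p : ℕ} (u v : Fin p → ℝ) (hu : u ⬝ᵥ u = 1) (hv : v ⬝ᵥ v = 1) :
    u ⬝ᵥ v ≤ 1 := by
  have h0 : (0:ℝ) ≤ (u - v) ⬝ᵥ (u - v) :=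
    Finset.sum_nonneg fun i _ => mul_self_nonneg _
  have hexp : (u - v) ⬝ᵥ (u - v) = u ⬝ᵥ u - u ⬝ᵥ v - (v ⬝ᵥ u - v ⬝ᵥ v) := by
    rw [sub_dotProduct, dotProduct_sub, dotProduct_sub]
  have hcomm : v ⬝ᵥ u = u ⬝ᵥ v := dotProduct_comm v u
  rw [hexp, hcomm, hu, hv] at h0
  linarith

lemma exists_unit_image {p q : ℕ} (M : Matrix (Fin p) (Fin q) ℝ) (hM : M ≠ 0) :
    ∃ (w : Fin q → ℝ) (u : Fin p → ℝ), M *ᵥ w = u ∧ u ⬝ᵥ u = 1 := by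
  classical
  have hw0 : ∃ w0, M *ᵥ w0 ≠ 0 := by
    by_contra h
    push_neg at h
    apply hM
    ext i j
    have := congrFun (h (Pi.single j 1)) i
    simpa [Matrix.mulVec_single] using this
  obtain ⟨w0, hw0⟩ := hw0
  set u0 := M *ᵥ w0 with hu0
  have hr0 : (0:ℝ) ≤ u0 ⬝ᵥ u0 := Finset.sum_nonneg fun i _ => mul_self_nonneg _
  have hrne : u0 ⬝ᵥ u0 ≠ 0 := fun h => hw0 (dotProduct_self_eq_zero.mp h)
  have hr : (0:ℝ) < u0 ⬝ᵥ u0 := lt_of_le_of_ne hr0 (Ne.symm hrne)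
  have hsq : Real.sqrt (u0 ⬝ᵥ u0) * Real.sqrt (u0 ⬝ᵥ u0) = u0 ⬝ᵥ u0 :=
    Real.mul_self_sqrt hr.le
  have hsne : Real.sqrt (u0 ⬝ᵥ u0) ≠ 0 := by positivity
  refine ⟨(Real.sqrt (u0 ⬝ᵥ u0))⁻¹ • w0, (Real.sqrt (u0 ⬝ᵥ u0))⁻¹ • u0,
    by rw [Matrix.mulVec_smul], ?_⟩
  rw [smul_dotProduct, dotProduct_smul, smul_eq_mul, smul_eq_mul]
  field_simp
  rw [Real.sq_sqrt hr.le]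

lemma finrank_range_toEuclideanLin {p q : ℕ} (M : Matrix (Fin p) (Fin q) ℝ) :
    Module.finrank ℝ (LinearMap.range (Matrix.toEuclideanLin M)) = M.rank := by
  have hcomp : Matrix.toEuclideanLin M
      = ((WithLp.linearEquiv 2 ℝ (Fin p → ℝ)).symm.toLinearMap.comp
        (M.mulVecLin.comp (WithLp.linearEquiv 2 ℝ (Fin q → ℝ)).toLinearMap)) := by
    apply LinearMap.ext
    intro v
    rfl
  rw [hcomp, LinearMap.range_comp, LinearMap.range_comp,
    LinearEquiv.range, Submodule.map_top]
  rw [LinearEquiv.finrank_map_eq]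
  rfl

end Helpers



open Matrix

/-- lower bound on the positive eigenvalues of the saddle-point matrix
`K = [[A, Bᵀ],[B, 0]]` when `rank A = n - m`. Here `μp` is the smallest positive
eigenvalue of `A`, `σ ≥ 0` is the smallest singular value of `B` (so `σ²` is the smallest
eigenvalue of `BBᵀ`), and `c` is the cosine of the minimum principal angle between
`range A` and `range Bᵀ`, i.e. the supremum of inner products of unit vectors from the
two column spaces. -/
theorem saddle_positive_eigenvalue_bound {n m : ℕ} (hn : 0 < n) (hm : 0 < m) (hmn : m < n)
    (A : Matrix (Fin n) (Fin n) ℝ) (B : Matrix (Fin m) (Fin n) ℝ)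
    (hA : A.PosSemidef) (hrA : A.rank = n - m) (hrB : B.rank = m)
    (hK : IsUnit (Matrix.fromBlocks A Bᵀ B 0))
    (μp σ c : ℝ)
    (hμ : IsLeast {t : ℝ | 0 < t ∧ ∃ x : Fin n → ℝ, x ≠ 0 ∧ A *ᵥ x = t • x} μp)
    (hσ : 0 ≤ σ)
    (hσ2 : IsLeast {t : ℝ | ∃ x : Fin m → ℝ, x ≠ 0 ∧ (B * Bᵀ) *ᵥ x = t • x} (σ ^ 2))
    (hc : IsLUB {t : ℝ | ∃ u v : Fin n → ℝ, (∃ w : Fin n → ℝ, A *ᵥ w = u) ∧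
        (∃ w : Fin m → ℝ, Bᵀ *ᵥ w = v) ∧ u ⬝ᵥ u = 1 ∧ v ⬝ᵥ v = 1 ∧ t = u ⬝ᵥ v} c) :
    ∀ (lam : ℝ) (x : Fin n ⊕ Fin m → ℝ), x ≠ 0 →
      (Matrix.fromBlocks A Bᵀ B 0) *ᵥ x = lam • x → 0 < lam →
      min (μp * (1 - c)) (σ * Real.sqrt (1 - c)) ≤ lam := by
  intro lam x hx0 heig hlam
  classical
  set x1 : Fin n → ℝ := x ∘ Sum.inl with hx1def
  set x2 : Fin m → ℝ := x ∘ Sum.inr with hx2def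
  rw [Matrix.fromBlocks_mulVec] at heig
  have h1 : A *ᵥ x1 + Bᵀ *ᵥ x2 = lam • x1 := by
    funext i
    have := congrFun heig (Sum.inl i)
    simpa [hx1def, hx2def] using this
  have h2 : B *ᵥ x1 = lam • x2 := by
    funext j
    have := congrFun heig (Sum.inr j)
    simpa [hx1def, hx2def] using this
  have hlam0 : lam ≠ 0 := ne_of_gt hlam
  have hx1ne : x1 ≠ 0 := by
    intro h
    have h2' := h2
    rw [h, Matrix.mulVec_zero] at h2'
    have hx2 : x2 = 0 := by
      rcases smul_eq_zero.mp h2'.symm with h' | h'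
      · exact absurd h' hlam0
      · exact h'
    apply hx0
    funext i
    cases i with
    | inl i => exact congrFun h i
    | inr j => exact congrFun hx2 j
  -- scalar identities
  set s := x1 ⬝ᵥ x1 with hsdef
  set a := x1 ⬝ᵥ (A *ᵥ x1) with hadef
  set b2 := (B *ᵥ x1) ⬝ᵥ (B *ᵥ x1) with hb2def
  set t2 := x2 ⬝ᵥ x2 with ht2def
  have hspos : 0 < s := by
    have h0 : (0:ℝ) ≤ s := Finset.sum_nonneg fun i _ => mul_self_nonneg _
    have hne : s ≠ 0 := fun h => hx1ne (dotProduct_self_eq_zero.mp h)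
    exact lt_of_le_of_ne h0 (Ne.symm hne)
  have hcross : x1 ⬝ᵥ (Bᵀ *ᵥ x2) = lam * t2 := by
    rw [Matrix.dotProduct_mulVec, Matrix.vecMul_transpose, h2, smul_dotProduct]
    simp [ht2def]
  have heq1 : a + lam * t2 = lam * s := by
    have hdot := congrArg (fun v => x1 ⬝ᵥ v) h1
    simp only [dotProduct_add] at hdot
    rw [hcross] at hdot
    rw [dotProduct_smul] at hdot
    simpa [hsdef, hadef] using hdot
  have heq2 : b2 = lam ^ 2 * t2 := by
    rw [hb2def, h2, smul_dotProduct, dotProduct_smul]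
    simp [ht2def]
    ring
  have hmain : lam ^ 2 * s = lam * a + b2 := by
    rw [heq2]
    nlinarith [heq1]
  -- transpose-swap dot product identity
  have hswap : ∀ (k : ℕ) (M : Matrix (Fin k) (Fin n) ℝ) (y : Fin k → ℝ) (v : Fin n → ℝ),
      (Mᵀ *ᵥ y) ⬝ᵥ v = y ⬝ᵥ (M *ᵥ v) := by
    intro k M y v
    calc (Mᵀ *ᵥ y) ⬝ᵥ v = v ⬝ᵥ (Mᵀ *ᵥ y) := dotProduct_comm _ _
    _ = (v ᵥ* Mᵀ) ⬝ᵥ y := Matrix.dotProduct_mulVec _ _ _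
    _ = (M *ᵥ v) ⬝ᵥ y := by rw [Matrix.vecMul_transpose]
    _ = y ⬝ᵥ (M *ᵥ v) := dotProduct_comm _ _
  -- Euclidean space setup
  set X : EuclideanSpace ℝ (Fin n) := (WithLp.equiv 2 (Fin n → ℝ)).symm x1 with hX
  set R : Submodule ℝ (EuclideanSpace ℝ (Fin n)) :=
    LinearMap.range (Matrix.toEuclideanLin A) with hR
  set S : Submodule ℝ (EuclideanSpace ℝ (Fin n)) :=
    LinearMap.range (Matrix.toEuclideanLin Bᵀ) with hS
  have hequivX : WithLp.equiv 2 (Fin n → ℝ) X = x1 := rfl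
  have hmulA : ∀ w : EuclideanSpace ℝ (Fin n),
      WithLp.equiv 2 (Fin n → ℝ) (Matrix.toEuclideanLin A w)
        = A *ᵥ (WithLp.equiv 2 (Fin n → ℝ) w) := fun w => rfl
  have hmulBt : ∀ w : EuclideanSpace ℝ (Fin m),
      WithLp.equiv 2 (Fin n → ℝ) (Matrix.toEuclideanLin Bᵀ w)
        = Bᵀ *ᵥ (WithLp.equiv 2 (Fin m → ℝ) w) := fun w => rfl
  -- c is between 0 and 1
  have hA0 : A ≠ 0 := by
    intro h
    rw [h, Matrix.rank_zero] at hrA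
    omega
  have hB0 : Bᵀ ≠ 0 := by
    intro h
    have hB : B = 0 := by
      have := congrArg Matrix.transpose h
      simpa using this
    rw [hB, Matrix.rank_zero] at hrB
    omega
  have hc1 : c ≤ 1 := by
    apply hc.2
    rintro t ⟨u, v, _, _, huu, hvv, rfl⟩
    exact dot_le_one_of_units u v huu hvv
  have hc0 : 0 ≤ c := by
    obtain ⟨w, u, hwu, huu⟩ := exists_unit_image A hA0
    obtain ⟨z, v, hzv, hvv⟩ := exists_unit_image Bᵀ hB0
    have ht : (u ⬝ᵥ v) ∈ {t : ℝ | ∃ u v : Fin n → ℝ, (∃ w : Fin n → ℝ, A *ᵥ w = u) ∧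
        (∃ w : Fin m → ℝ, Bᵀ *ᵥ w = v) ∧ u ⬝ᵥ u = 1 ∧ v ⬝ᵥ v = 1 ∧ t = u ⬝ᵥ v} :=
      ⟨u, v, ⟨w, hwu⟩, ⟨z, hzv⟩, huu, hvv, rfl⟩
    have ht' : (-(u ⬝ᵥ v)) ∈ {t : ℝ | ∃ u v : Fin n → ℝ, (∃ w : Fin n → ℝ, A *ᵥ w = u) ∧
        (∃ w : Fin m → ℝ, Bᵀ *ᵥ w = v) ∧ u ⬝ᵥ u = 1 ∧ v ⬝ᵥ v = 1 ∧ t = u ⬝ᵥ v} := by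
      refine ⟨-u, v, ⟨-w, by rw [Matrix.mulVec_neg, hwu]⟩, ⟨z, hzv⟩, ?_, hvv, ?_⟩
      · rw [neg_dotProduct, dotProduct_neg, neg_neg]
        exact huu
      · rw [neg_dotProduct]
    have l1 := hc.1 ht
    have l2 := hc.1 ht'
    linarith
  -- upper bound property in Euclidean form
  have hub : ∀ u ∈ R, ∀ v ∈ S, ‖u‖ = 1 → ‖v‖ = 1 → ⟪u, v⟫ ≤ c := by
    rintro u ⟨w, rfl⟩ v ⟨z, rfl⟩ hu1 hv1
    apply hc.1
    refine ⟨WithLp.equiv 2 (Fin n → ℝ) (Matrix.toEuclideanLin A w),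
      WithLp.equiv 2 (Fin n → ℝ) (Matrix.toEuclideanLin Bᵀ z),
      ⟨WithLp.equiv 2 (Fin n → ℝ) w, (hmulA w).symm⟩,
      ⟨WithLp.equiv 2 (Fin m → ℝ) z, (hmulBt z).symm⟩, ?_, ?_, ?_⟩
    · rw [← inner_eq_dot, real_inner_self_eq_norm_sq, hu1]
      norm_num
    · rw [← inner_eq_dot, real_inner_self_eq_norm_sq, hv1]
      norm_num
    · rw [← inner_eq_dot]
  -- R ⊔ S = ⊤
  have hsup : R ⊔ S = ⊤ := by
    by_contra hne
    have hbot : (R ⊔ S)ᗮ ≠ ⊥ := fun h => hne (Submodule.orthogonal_eq_bot_iff.mp h)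
    obtain ⟨g, hg, hgne⟩ := (Submodule.ne_bot_iff _).mp hbot
    set gf := WithLp.equiv 2 (Fin n → ℝ) g with hgf
    have horth := (Submodule.mem_orthogonal _ g).mp hg
    have hAdot : ∀ w : Fin n → ℝ, (A *ᵥ w) ⬝ᵥ gf = 0 := by
      intro w
      have hmem : Matrix.toEuclideanLin A ((WithLp.equiv 2 (Fin n → ℝ)).symm w) ∈ R ⊔ S :=
        Submodule.mem_sup_left (LinearMap.mem_range_self _ _)
      have h := horth _ hmem
      rw [inner_eq_dot] at h
      simpa [hgf] using h
    have hBdot : ∀ z : Fin m → ℝ, (Bᵀ *ᵥ z) ⬝ᵥ gf = 0 := by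
      intro z
      have hmem : Matrix.toEuclideanLin Bᵀ ((WithLp.equiv 2 (Fin m → ℝ)).symm z) ∈ R ⊔ S :=
        Submodule.mem_sup_right (LinearMap.mem_range_self _ _)
      have h := horth _ hmem
      rw [inner_eq_dot] at h
      simpa [hgf] using h
    have hAT : Aᵀ = A := by
      have h := hA.1
      rwa [Matrix.IsHermitian, Matrix.conjTranspose_eq_transpose_of_trivial] at h
    have hAg : A *ᵥ gf = 0 := by
      have h4 := hswap n A (A *ᵥ gf) gf
      rw [hAT] at h4
      rw [hAdot (A *ᵥ gf)] at h4
      exact dotProduct_self_eq_zero.mp h4.symm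
    have hBg : B *ᵥ gf = 0 := by
      have h4 := hswap m B (B *ᵥ gf) gf
      rw [hBdot (B *ᵥ gf)] at h4
      exact dotProduct_self_eq_zero.mp h4.symm
    have hinj := Matrix.mulVec_injective_iff_isUnit.mpr hK
    have hKg : Matrix.fromBlocks A Bᵀ B 0 *ᵥ (Sum.elim gf 0)
        = Matrix.fromBlocks A Bᵀ B 0 *ᵥ 0 := by
      rw [Matrix.fromBlocks_mulVec, Matrix.mulVec_zero]
      funext i
      cases i with
      | inl i =>
        have hcompl : (Sum.elim gf (0 : Fin m → ℝ)) ∘ Sum.inl = gf := rfl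
        have hcompr : (Sum.elim gf (0 : Fin m → ℝ)) ∘ Sum.inr = 0 := rfl
        simp [hcompl, hcompr, hAg]
      | inr j =>
        have hcompl : (Sum.elim gf (0 : Fin m → ℝ)) ∘ Sum.inl = gf := rfl
        have hcompr : (Sum.elim gf (0 : Fin m → ℝ)) ∘ Sum.inr = 0 := rfl
        simp [hcompl, hcompr, hBg]
    have hg0 := hinj hKg
    apply hgne
    have hgf0 : gf = 0 := by
      funext i
      exact congrFun hg0 (Sum.inl i)
    have : g = (WithLp.equiv 2 (Fin n → ℝ)).symm gf := rfl
    rw [this, hgf0]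
    rfl
  -- dimension facts
  have hfinR : Module.finrank ℝ R = n - m := by
    rw [hR, finrank_range_toEuclideanLin, hrA]
  have hfinS : Module.finrank ℝ S = m := by
    rw [hS, finrank_range_toEuclideanLin, Matrix.rank_transpose, hrB]
  have hsumdim := Submodule.finrank_add_finrank_orthogonal R
  have hfinE : Module.finrank ℝ (EuclideanSpace ℝ (Fin n)) = n := finrank_euclideanSpace_fin
  have hfinRp : Module.finrank ℝ Rᗮ = m := by
    rw [hfinR, hfinE] at hsumdim
    omega
  have hdim : Module.finrank ℝ S = Module.finrank ℝ Rᗮ := by rw [hfinS, hfinRp]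
  have hSpos : 0 < Module.finrank ℝ S := by rw [hfinS]; exact hm
  -- geometry
  have hXnorm : ‖X‖ ^ 2 = s := by
    rw [← real_inner_self_eq_norm_sq, inner_eq_dot, hequivX]
  have hgeom : (1 - c) * s ≤ ‖(Submodule.orthogonalProjectionOnto R X : EuclideanSpace ℝ (Fin n))‖ ^ 2
      + ‖(Submodule.orthogonalProjectionOnto S X : EuclideanSpace ℝ (Fin n))‖ ^ 2 := by
    rw [← hXnorm]
    exact geom_core R S hsup hdim hSpos hc0 hc1 hub X
  set α := ‖(Submodule.orthogonalProjectionOnto R X : EuclideanSpace ℝ (Fin n))‖ ^ 2 with hα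
  set β := ‖(Submodule.orthogonalProjectionOnto S X : EuclideanSpace ℝ (Fin n))‖ ^ 2 with hβ
  have hα0 : 0 ≤ α := by rw [hα]; positivity
  have hβ0 : 0 ≤ β := by rw [hβ]; positivity
  -- quadratic form lower bound
  have hμpos : 0 < μp := hμ.1.1
  have hμle : ∀ i, hA.1.eigenvalues i ≠ 0 → μp ≤ hA.1.eigenvalues i := by
    intro i hne
    apply hμ.2
    refine ⟨lt_of_le_of_ne (hA.eigenvalues_nonneg i) (Ne.symm hne),
      ⇑(hA.1.eigenvectorBasis i), ?_, hA.1.mulVec_eigenvectorBasis i⟩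
    intro h0
    apply hA.1.eigenvectorBasis.orthonormal.ne_zero i
    apply PiLp.ext
    intro j
    exact congrFun h0 j
  have hquadA : μp * α ≤ a := by
    have hq := quad_lower A hA hμpos.le hμle X
    have hinnerA : ⟪X, Matrix.toEuclideanLin A X⟫ = a := by
      rw [inner_eq_dot, hmulA X, hequivX]
    rw [hinnerA] at hq
    exact hq
  -- singular value part
  obtain ⟨z, hz⟩ := (Submodule.orthogonalProjectionOnto S X).2
  set p : EuclideanSpace ℝ (Fin n) :=
    (Submodule.orthogonalProjectionOnto S X : EuclideanSpace ℝ (Fin n)) with hp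
  set pf := WithLp.equiv 2 (Fin n → ℝ) p with hpf
  set zf := WithLp.equiv 2 (Fin m → ℝ) z with hzf
  have hBtz : Bᵀ *ᵥ zf = pf := by
    rw [← hmulBt z]
    exact congrArg (WithLp.equiv 2 (Fin n → ℝ)) hz
  have hqperp : ∀ z' : Fin m → ℝ, (Bᵀ *ᵥ z') ⬝ᵥ (x1 - pf) = 0 := by
    intro z'
    have hmem : X - p ∈ Sᗮ := Submodule.sub_starProjection_mem_orthogonal X
    have h := (Submodule.mem_orthogonal _ _).mp hmem _
      (LinearMap.mem_range_self (Matrix.toEuclideanLin Bᵀ)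
        ((WithLp.equiv 2 (Fin m → ℝ)).symm z'))
    rw [inner_eq_dot] at h
    simpa [hpf, hX] using h
  have hBq : B *ᵥ (x1 - pf) = 0 := by
    have h4 := hqperp (B *ᵥ (x1 - pf))
    rw [hswap m B (B *ᵥ (x1 - pf)) (x1 - pf)] at h4
    exact dotProduct_self_eq_zero.mp h4
  have hBx1p : B *ᵥ x1 = B *ᵥ pf := by
    have h5 : B *ᵥ (x1 - pf) = B *ᵥ x1 - B *ᵥ pf := Matrix.mulVec_sub B x1 pf
    rw [hBq] at h5
    exact sub_eq_zero.mp h5.symm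
  -- PSD of B*Bᵀ
  have hGpsd : (B * Bᵀ).PosSemidef := by
    have h := Matrix.posSemidef_self_mul_conjTranspose B
    rwa [Matrix.conjTranspose_eq_transpose_of_trivial] at h
  have hσle : ∀ i, σ ^ 2 ≤ hGpsd.1.eigenvalues i := by
    intro i
    apply hσ2.2
    refine ⟨⇑(hGpsd.1.eigenvectorBasis i), ?_, hGpsd.1.mulVec_eigenvectorBasis i⟩
    intro h0
    apply hGpsd.1.eigenvectorBasis.orthonormal.ne_zero i
    apply PiLp.ext
    intro j
    exact congrFun h0 j
  have hspec := sq_norm_image_lower (B * Bᵀ) hGpsd.1 (sq_nonneg σ) hσle z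
  have hGz : WithLp.equiv 2 (Fin m → ℝ) (Matrix.toEuclideanLin (B * Bᵀ) z) = B *ᵥ pf := by
    have h5 : WithLp.equiv 2 (Fin m → ℝ) (Matrix.toEuclideanLin (B * Bᵀ) z)
        = (B * Bᵀ) *ᵥ zf := rfl
    rw [h5, ← Matrix.mulVec_mulVec, hBtz]
  have hlhs : ⟪z, Matrix.toEuclideanLin (B * Bᵀ) z⟫ = β := by
    rw [inner_eq_dot, hGz]
    have h6 : zf ⬝ᵥ (B *ᵥ pf) = (Bᵀ *ᵥ zf) ⬝ᵥ pf := (hswap m B zf pf).symm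
    rw [h6, hBtz]
    rw [hβ, ← real_inner_self_eq_norm_sq, inner_eq_dot]
  have hrhs : ‖Matrix.toEuclideanLin (B * Bᵀ) z‖ ^ 2 = b2 := by
    rw [← real_inner_self_eq_norm_sq, inner_eq_dot, hGz, ← hBx1p]
  have hsigb : σ ^ 2 * β ≤ b2 := by
    rw [← hrhs, ← hlhs]
    exact hspec
  -- final contradiction
  by_contra hcon
  push_neg at hcon
  rw [lt_min_iff] at hcon
  obtain ⟨hcon1, hcon2⟩ := hcon
  have h1c : (0:ℝ) ≤ 1 - c := by linarith
  have hsq1c : Real.sqrt (1 - c) ^ 2 = 1 - c := Real.sq_sqrt h1c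
  have hbig : lam * (μp * α) + σ ^ 2 * β ≤ lam ^ 2 * s := by
    rw [hmain]
    have := mul_le_mul_of_nonneg_left hquadA hlam.le
    linarith [hsigb]
  rcases le_total (lam * μp) (σ ^ 2) with hmin | hmin
  · have e1 : lam * μp * (α + β) ≤ lam * (μp * α) + σ ^ 2 * β := by
      nlinarith [mul_nonneg (sub_nonneg.mpr hmin) hβ0]
    have e2 : lam * μp * ((1 - c) * s) ≤ lam * μp * (α + β) :=
      mul_le_mul_of_nonneg_left hgeom (by positivity)
    have hge : lam * μp * ((1 - c) * s) ≤ lam ^ 2 * s := by linarith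
    have hfin : μp * (1 - c) ≤ lam := by
      nlinarith [hge, mul_pos hlam hspos]
    exact absurd hfin (not_le.mpr hcon1)
  · have e1 : σ ^ 2 * (α + β) ≤ lam * (μp * α) + σ ^ 2 * β := by
      nlinarith [mul_nonneg (sub_nonneg.mpr hmin) hα0]
    have e2 : σ ^ 2 * ((1 - c) * s) ≤ σ ^ 2 * (α + β) :=
      mul_le_mul_of_nonneg_left hgeom (sq_nonneg σ)
    have hge : σ ^ 2 * ((1 - c) * s) ≤ lam ^ 2 * s := by linarith
    have hl2 : σ ^ 2 * (1 - c) ≤ lam ^ 2 := by nlinarith [hge, hspos]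
    have h6 : (σ * Real.sqrt (1 - c)) ^ 2 = σ ^ 2 * (1 - c) := by
      rw [mul_pow, hsq1c]
    have h7 : 0 ≤ σ * Real.sqrt (1 - c) := mul_nonneg hσ (Real.sqrt_nonneg _)
    have h8 : (σ * Real.sqrt (1 - c)) ^ 2 ≤ lam ^ 2 := by
      rw [h6]
      exact hl2
    have hfin : σ * Real.sqrt (1 - c) ≤ lam :=
      calc σ * Real.sqrt (1 - c) = Real.sqrt ((σ * Real.sqrt (1 - c)) ^ 2) :=
            (Real.sqrt_sq h7).symm
      _ ≤ Real.sqrt (lam ^ 2) := Real.sqrt_le_sqrt h8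
      _ = lam := Real.sqrt_sq hlam.le
    exact absurd hfin (not_le.mpr hcon2)
end

section
/- Let n and m be positive integers with m < n, let A be an n×n real symmetric positive semidefinite matrix with rank(A) = n − m, let B be an m×n real matrix with rank m, and let W be an m×m real symmetric positive definite matrix such that A_W = A + BᵀWB is symmetric positive definite. Then the matrix à = A_W^{-1/2} A A_W^{-1/2} (where A_W^{1/2} denotes the positive definite square root of A_W) is symmetric, idempotent, and has rank n − m; consequently every nonzero eigenvalue of à equals 1. -/
open Matrix

/-- The positive semidefinite square root of a positive semidefinite matrix
(the definition `Matrix.PosSemidef.sqrt` of the older Mathlib, since removed). -/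
noncomputable def Matrix.PosSemidef.sqrt {n 𝕜 : Type*} [Fintype n] [RCLike 𝕜] [DecidableEq n]
    [PartialOrder 𝕜] [StarOrderedRing 𝕜]
    {A : Matrix n n 𝕜} (hA : A.PosSemidef) : Matrix n n 𝕜 :=
  hA.1.eigenvectorUnitary.1 * diagonal ((↑) ∘ (√·) ∘ hA.1.eigenvalues) *
  (star hA.1.eigenvectorUnitary : Matrix n n 𝕜)

lemma Matrix.PosSemidef.posSemidef_sqrt {k : ℕ} {A : Matrix (Fin k) (Fin k) ℝ}
    (hA : A.PosSemidef) : hA.sqrt.PosSemidef := by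
  unfold Matrix.PosSemidef.sqrt
  rw [Matrix.star_eq_conjTranspose]
  apply Matrix.PosSemidef.mul_mul_conjTranspose_same
  apply Matrix.PosSemidef.diagonal
  intro i
  simp [Real.sqrt_nonneg]

lemma Matrix.PosSemidef.sqrt_mul_self {k : ℕ} {A : Matrix (Fin k) (Fin k) ℝ}
    (hA : A.PosSemidef) : hA.sqrt * hA.sqrt = A := by
  unfold Matrix.PosSemidef.sqrt
  have hU1' : star (hA.1.eigenvectorUnitary : Matrix (Fin k) (Fin k) ℝ)
      * (hA.1.eigenvectorUnitary : Matrix (Fin k) (Fin k) ℝ) = 1 :=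
    (Matrix.mem_unitaryGroup_iff').mp hA.1.eigenvectorUnitary.2
  have hsp := hA.1.spectral_theorem
  rw [RCLike.ofReal_real_eq_id, Function.id_comp] at hsp
  have hD : diagonal ((RCLike.ofReal : ℝ → ℝ) ∘ (√·) ∘ hA.1.eigenvalues)
      * diagonal ((RCLike.ofReal : ℝ → ℝ) ∘ (√·) ∘ hA.1.eigenvalues) = diagonal hA.1.eigenvalues := by
    rw [Matrix.diagonal_mul_diagonal]
    congr 1
    funext i
    simp [Real.mul_self_sqrt (hA.eigenvalues_nonneg i)]
  conv_rhs => rw [hsp]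
  simp only [Matrix.mul_assoc]
  rw [← Matrix.mul_assoc (star _) _ _, hU1', Matrix.one_mul, ← Matrix.mul_assoc _ _ (star _), hD]
  rw [← Matrix.mul_assoc]
  rfl

/-- If `P` and `Q` are real positive semidefinite with `P + Q = 1` and
`rank P + rank Q = n`, then `P` is idempotent. -/
lemma aux_idem_of_psd_compl {n : ℕ} {P Q : Matrix (Fin n) (Fin n) ℝ}
    (hP : P.PosSemidef) (hQ : Q.PosSemidef) (hPQ : P + Q = 1)
    (hr : P.rank + Q.rank = n) : P * P = P := by
  classical
  have hH := hP.isHermitian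
  set f : Fin n → ℝ := hH.eigenvalues with hf
  set U : Matrix (Fin n) (Fin n) ℝ := (hH.eigenvectorUnitary : Matrix (Fin n) (Fin n) ℝ) with hU
  have hUmem : U ∈ Matrix.unitaryGroup (Fin n) ℝ := hH.eigenvectorUnitary.2
  have hU1 : U * star U = 1 := (Matrix.mem_unitaryGroup_iff).mp hUmem
  have hU1' : star U * U = 1 := (Matrix.mem_unitaryGroup_iff').mp hUmem
  have hdetU : IsUnit U.det := Matrix.UnitaryGroup.det_isUnit hH.eigenvectorUnitary
  have hdetUs : IsUnit (star U).det := by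
    refine isUnit_iff_exists_inv.mpr ⟨U.det, ?_⟩
    rw [← Matrix.det_mul, hU1', Matrix.det_one]
  have hsp : P = U * Matrix.diagonal f * star U := by
    have := hH.spectral_theorem
    rwa [RCLike.ofReal_real_eq_id, Function.id_comp] at this
  have hQ1 : Q = 1 - P := eq_sub_of_add_eq' hPQ
  have hQsp : Q = U * Matrix.diagonal (fun i => 1 - f i) * star U := by
    have hdm : (Matrix.diagonal (fun i => 1 - f i) : Matrix (Fin n) (Fin n) ℝ)
        = 1 - Matrix.diagonal f := by
      rw [← Matrix.diagonal_one, Matrix.diagonal_sub]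
    rw [hQ1, hsp, hdm, Matrix.mul_sub, Matrix.sub_mul, Matrix.mul_one, hU1]
  -- ranks in terms of eigenvalues
  have hrankdiag : ∀ w : Fin n → ℝ,
      (U * Matrix.diagonal w * star U).rank
        = (Finset.univ.filter fun i => w i ≠ 0).card := by
    intro w
    rw [Matrix.rank_mul_eq_left_of_isUnit_det (star U) (U * Matrix.diagonal w) hdetUs,
      Matrix.rank_mul_eq_right_of_isUnit_det U (Matrix.diagonal w) hdetU,
      Matrix.rank_diagonal, Fintype.card_subtype]
  have hrP : P.rank = (Finset.univ.filter fun i => f i ≠ 0).card := by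
    rw [hsp]; exact hrankdiag f
  have hrQ : Q.rank = (Finset.univ.filter fun i => f i ≠ 1).card := by
    rw [hQsp]
    rw [hrankdiag (fun i => 1 - f i)]
    congr 1
    apply Finset.filter_congr
    intro i _
    constructor
    · intro h h'; exact h (by rw [h']; ring)
    · intro h h'; exact h (by linarith [sub_eq_zero.mp h'])
  -- counting
  have hc0 : (Finset.univ.filter fun i => f i = 0).card
      + (Finset.univ.filter fun i => f i ≠ 0).card = n := by
    have := Finset.card_filter_add_card_filter_not
      (s := (Finset.univ : Finset (Fin n))) (p := fun i => f i = 0)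
    simpa [Finset.card_univ] using this
  have hc1 : (Finset.univ.filter fun i => f i = 1).card
      + (Finset.univ.filter fun i => f i ≠ 1).card = n := by
    have := Finset.card_filter_add_card_filter_not
      (s := (Finset.univ : Finset (Fin n))) (p := fun i => f i = 1)
    simpa [Finset.card_univ] using this
  have hdisj : Disjoint (Finset.univ.filter fun i => f i = 0)
      (Finset.univ.filter fun i => f i = 1) := by
    rw [Finset.disjoint_left]
    intro i h0 h1
    rw [Finset.mem_filter] at h0 h1
    have := h0.2 ▸ h1.2
    norm_num at this
  have hunioncard : ((Finset.univ.filter fun i => f i = 0)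
      ∪ (Finset.univ.filter fun i => f i = 1)).card = n := by
    rw [Finset.card_union_of_disjoint hdisj]
    omega
  have hunion : ((Finset.univ.filter fun i => f i = 0)
      ∪ (Finset.univ.filter fun i => f i = 1)) = Finset.univ := by
    exact Finset.eq_univ_of_card _ (by rw [hunioncard, Fintype.card_fin])
  have hval : ∀ i, f i = 0 ∨ f i = 1 := by
    intro i
    have hi : i ∈ ((Finset.univ.filter fun i => f i = 0)
        ∪ (Finset.univ.filter fun i => f i = 1)) := by
      rw [hunion]; exact Finset.mem_univ i
    rcases Finset.mem_union.mp hi with h | h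
    · exact Or.inl (Finset.mem_filter.mp h).2
    · exact Or.inr (Finset.mem_filter.mp h).2
  -- conclude idempotence
  have hDD : Matrix.diagonal f * Matrix.diagonal f = Matrix.diagonal f := by
    rw [Matrix.diagonal_mul_diagonal]
    exact congrArg Matrix.diagonal (funext fun i => by
      rcases hval i with h | h <;> rw [h] <;> ring)
  have e1 : star U * (U * Matrix.diagonal f * star U)
      = Matrix.diagonal f * star U := by
    rw [Matrix.mul_assoc U, ← Matrix.mul_assoc (star U), hU1', Matrix.one_mul]
  have key : (U * Matrix.diagonal f * star U) * (U * Matrix.diagonal f * star U)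
      = U * Matrix.diagonal f * star U := by
    rw [Matrix.mul_assoc (U * Matrix.diagonal f) (star U), e1,
      ← Matrix.mul_assoc (U * Matrix.diagonal f), Matrix.mul_assoc U, hDD]
  rw [hsp]
  exact key

/-- with `rank A = n - m` and `A_W = A + BᵀWB` symmetric positive definite,
the matrix `Ã = A_W^{-1/2} A A_W^{-1/2}` is symmetric, idempotent, of rank `n - m`;
consequently every nonzero eigenvalue of `Ã` equals `1`. -/
theorem split_preconditioned_leading_block {n m : ℕ} (hn : 0 < n) (hm : 0 < m) (hmn : m < n)
    (A : Matrix (Fin n) (Fin n) ℝ) (B : Matrix (Fin m) (Fin n) ℝ)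
    (W : Matrix (Fin m) (Fin m) ℝ)
    (hA : A.PosSemidef) (hrA : A.rank = n - m) (hrB : B.rank = m)
    (hW : W.PosDef) (hAW : (A + Bᵀ * W * B).PosDef) :
    ((hAW.posSemidef.sqrt)⁻¹ * A * (hAW.posSemidef.sqrt)⁻¹).IsSymm ∧
    ((hAW.posSemidef.sqrt)⁻¹ * A * (hAW.posSemidef.sqrt)⁻¹) *
        ((hAW.posSemidef.sqrt)⁻¹ * A * (hAW.posSemidef.sqrt)⁻¹) =
      (hAW.posSemidef.sqrt)⁻¹ * A * (hAW.posSemidef.sqrt)⁻¹ ∧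
    ((hAW.posSemidef.sqrt)⁻¹ * A * (hAW.posSemidef.sqrt)⁻¹).rank = n - m ∧
    ∀ (μ : ℝ) (x : Fin n → ℝ), x ≠ 0 →
      ((hAW.posSemidef.sqrt)⁻¹ * A * (hAW.posSemidef.sqrt)⁻¹) *ᵥ x = μ • x →
      μ ≠ 0 → μ = 1 := by
  classical
  set S : Matrix (Fin n) (Fin n) ℝ := hAW.posSemidef.sqrt with hSdef
  have hSps : S.PosSemidef := hAW.posSemidef.posSemidef_sqrt
  have hSS : S * S = A + Bᵀ * W * B := hAW.posSemidef.sqrt_mul_self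
  have hdet : IsUnit S.det := by
    rw [isUnit_iff_ne_zero]
    intro h
    have h2 : S.det * S.det = (A + Bᵀ * W * B).det := by rw [← Matrix.det_mul, hSS]
    rw [h, zero_mul] at h2
    exact hAW.det_pos.ne' h2.symm
  have hdetInv : IsUnit (S⁻¹).det := Matrix.isUnit_nonsing_inv_det S hdet
  have hTi : S⁻¹ * S = 1 := Matrix.nonsing_inv_mul S hdet
  have hTi' : S * S⁻¹ = 1 := Matrix.mul_nonsing_inv S hdet
  have hTH : (S⁻¹).IsHermitian := hSps.isHermitian.inv
  set C : Matrix (Fin n) (Fin n) ℝ := Bᵀ * W * B with hCdef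
  set P : Matrix (Fin n) (Fin n) ℝ := S⁻¹ * A * S⁻¹ with hPdef
  set Q : Matrix (Fin n) (Fin n) ℝ := S⁻¹ * C * S⁻¹ with hQdef
  have hPps : P.PosSemidef := by
    have := hA.mul_mul_conjTranspose_same S⁻¹
    rwa [hTH.eq] at this
  have hCps : C.PosSemidef := by
    have := hW.posSemidef.conjTranspose_mul_mul_same B
    rwa [Matrix.conjTranspose_eq_transpose_of_trivial] at this
  have hQps : Q.PosSemidef := by
    have := hCps.mul_mul_conjTranspose_same S⁻¹
    rwa [hTH.eq] at this
  have hPQ : P + Q = 1 := by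
    have h1 : P + Q = S⁻¹ * (A + C) * S⁻¹ := by
      rw [hPdef, hQdef, Matrix.mul_add, Matrix.add_mul]
    rw [h1, ← hSS, ← Matrix.mul_assoc S⁻¹ S S, hTi, Matrix.one_mul, hTi']
  have hrP : P.rank = n - m := by
    rw [hPdef, Matrix.rank_mul_eq_left_of_isUnit_det S⁻¹ (S⁻¹ * A) hdetInv,
      Matrix.rank_mul_eq_right_of_isUnit_det S⁻¹ A hdetInv, hrA]
  -- rank of C
  set V : Matrix (Fin m) (Fin m) ℝ := hW.posSemidef.sqrt with hVdef
  have hVps : V.PosSemidef := hW.posSemidef.posSemidef_sqrt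
  have hVV : V * V = W := hW.posSemidef.sqrt_mul_self
  have hdetV : IsUnit V.det := by
    rw [isUnit_iff_ne_zero]
    intro h
    have h2 : V.det * V.det = W.det := by rw [← Matrix.det_mul, hVV]
    rw [h, zero_mul] at h2
    exact hW.det_pos.ne' h2.symm
  have hVt : Vᵀ = V := by
    have := hVps.isHermitian.eq
    rwa [Matrix.conjTranspose_eq_transpose_of_trivial] at this
  have hCeq : C = (V * B)ᵀ * (V * B) := by
    rw [Matrix.transpose_mul, hVt, hCdef, ← hVV]
    simp only [Matrix.mul_assoc]
  have hrC : C.rank = m := by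
    rw [hCeq, Matrix.rank_transpose_mul_self,
      Matrix.rank_mul_eq_right_of_isUnit_det V B hdetV, hrB]
  have hrQ : Q.rank = m := by
    rw [hQdef, Matrix.rank_mul_eq_left_of_isUnit_det S⁻¹ (S⁻¹ * C) hdetInv,
      Matrix.rank_mul_eq_right_of_isUnit_det S⁻¹ C hdetInv, hrC]
  have hsum : P.rank + Q.rank = n := by
    rw [hrP, hrQ]; omega
  have hidem : P * P = P := aux_idem_of_psd_compl hPps hQps hPQ hsum
  refine ⟨?_, hidem, hrP, ?_⟩
  · have := hPps.isHermitian.eq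
    rw [Matrix.conjTranspose_eq_transpose_of_trivial] at this
    exact this
  · intro μ x hx hev hμ
    have h1 : (μ * μ) • x = μ • x := by
      calc (μ * μ) • x = μ • (μ • x) := by rw [smul_smul]
        _ = μ • (P *ᵥ x) := by rw [hev]
        _ = P *ᵥ (μ • x) := by rw [Matrix.mulVec_smul]
        _ = P *ᵥ (P *ᵥ x) := by rw [hev]
        _ = (P * P) *ᵥ x := by rw [Matrix.mulVec_mulVec]
        _ = P *ᵥ x := by rw [hidem]
        _ = μ • x := hev
    have h2 : (μ * μ - μ) • x = 0 := by
      rw [sub_smul, h1, sub_self]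
    rcases smul_eq_zero.mp h2 with h | h
    · have : μ * (μ - 1) = 0 := by ring_nf; ring_nf at h; linarith
      rcases mul_eq_zero.mp this with h' | h'
      · exact absurd h' hμ
      · linarith [sub_eq_zero.mp h']
    · exact absurd h hx
end

section
/- Let n and m be positive integers with m < n, let A be an n×n real symmetric positive semidefinite matrix with rank(A) = n − m, let B be an m×n real matrix with rank m, and let W be an m×m real symmetric positive definite matrix such that A_W = A + BᵀWB is invertible. Then A · A_W⁻¹ · Bᵀ = 0, i.e., every column of A_W⁻¹Bᵀ lies in the kernel of A. -/
open Matrix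

/-
Since `A + BᵀWB` is invertible, the column spaces of `A` and `Bᵀ` together span `ℝⁿ`;
their dimensions `n - m` and `m` add up to `n`, so they meet only in `0`. Writing
`A = (A + BᵀWB) - BᵀWB` shows `A (A + BᵀWB)⁻¹ Bᵀ = Bᵀ (1 - WB (A + BᵀWB)⁻¹ Bᵀ)`, so every
column of this matrix lies in both column spaces and is therefore zero.
-/

theorem Submodule.disjoint_of_sup_eq_top_of_finrank_add_le {K V : Type*} [DivisionRing K]
    [AddCommGroup V] [Module K V] [FiniteDimensional K V] {s t : Submodule K V}
    (hst : s ⊔ t = ⊤) (hdim : Module.finrank K s + Module.finrank K t ≤ Module.finrank K V) :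
    Disjoint s t := by
  have hsum := s.finrank_sup_add_finrank_inf_eq t
  rw [hst, finrank_top] at hsum
  rw [disjoint_iff, ← Submodule.finrank_eq_zero]
  omega

namespace Matrix

variable {R k l m n : Type*} [Fintype l] [Fintype n]

theorem range_mulVecLin_add_mul_le [CommSemiring R] (A : Matrix m n R) (C : Matrix m l R)
    (D : Matrix l n R) :
    LinearMap.range (A + C * D).mulVecLin ≤
      LinearMap.range A.mulVecLin ⊔ LinearMap.range C.mulVecLin := by
  rintro _ ⟨v, rfl⟩
  rw [mulVecLin_apply, add_mulVec, ← mulVec_mulVec]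
  exact Submodule.add_mem_sup ⟨v, rfl⟩ ⟨D *ᵥ v, rfl⟩

theorem range_mulVecLin_sup_eq_top_of_isUnit_add_mul [CommRing R] [DecidableEq n]
    {A : Matrix n n R} {C : Matrix n l R} {D : Matrix l n R} (h : IsUnit (A + C * D)) :
    LinearMap.range A.mulVecLin ⊔ LinearMap.range C.mulVecLin = ⊤ :=
  top_unique <| (LinearMap.range_eq_top.mpr (mulVec_surjective_iff_isUnit.mpr h)).ge.trans
    (range_mulVecLin_add_mul_le A C D)

theorem mul_nonsing_inv_add_mul_mul_eq [CommRing R] [DecidableEq l] [DecidableEq n]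
    {A : Matrix n n R} {C : Matrix n l R} {D : Matrix l n R} (h : IsUnit (A + C * D)) :
    A * (A + C * D)⁻¹ * C = C * (1 - D * (A + C * D)⁻¹ * C) := by
  have hinv : (A + C * D) * (A + C * D)⁻¹ = 1 :=
    mul_nonsing_inv _ ((isUnit_iff_isUnit_det _).mp h)
  calc A * (A + C * D)⁻¹ * C
      = ((A + C * D) - C * D) * (A + C * D)⁻¹ * C := by rw [add_sub_cancel_right]
    _ = C * (1 - D * (A + C * D)⁻¹ * C) := by
      rw [Matrix.sub_mul, hinv, Matrix.sub_mul, Matrix.one_mul, Matrix.mul_sub, Matrix.mul_one]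
      simp only [Matrix.mul_assoc]

theorem mul_eq_zero_of_mul_eq_mul_of_disjoint_s7 [Fintype k] [CommSemiring R] {A : Matrix m n R}
    {C : Matrix m l R} {X : Matrix n k R} {Y : Matrix l k R} (h : A * X = C * Y)
    (hd : Disjoint (LinearMap.range A.mulVecLin) (LinearMap.range C.mulVecLin)) :
    A * X = 0 := by
  refine ext_iff_mulVec.mpr fun v => ?_
  rw [zero_mulVec, ← Submodule.mem_bot R]
  refine hd.le_bot ⟨⟨X *ᵥ v, ?_⟩, ⟨Y *ᵥ v, ?_⟩⟩
  · rw [mulVecLin_apply, mulVec_mulVec]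
  · rw [mulVecLin_apply, mulVec_mulVec, h]

end Matrix

theorem leading_block_annihilates_general {n m : ℕ} (hmn : m < n)
    (A : Matrix (Fin n) (Fin n) ℝ) (B : Matrix (Fin m) (Fin n) ℝ)
    (W : Matrix (Fin m) (Fin m) ℝ)
    (hrA : A.rank = n - m) (hrB : B.rank = m)
    (hAW : IsUnit (A + Bᵀ * W * B)) :
    A * (A + Bᵀ * W * B)⁻¹ * Bᵀ = 0 := by
  rw [Matrix.mul_assoc Bᵀ] at hAW ⊢
  have hspan := range_mulVecLin_sup_eq_top_of_isUnit_add_mul hAW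
  have hdisj : Disjoint (LinearMap.range A.mulVecLin) (LinearMap.range Bᵀ.mulVecLin) := by
    refine Submodule.disjoint_of_sup_eq_top_of_finrank_add_le hspan ?_
    change A.rank + Bᵀ.rank ≤ _
    rw [rank_transpose, hrA, hrB, Module.finrank_fin_fun]
    omega
  have hcols := mul_nonsing_inv_add_mul_mul_eq hAW
  rw [Matrix.mul_assoc A] at hcols ⊢
  exact mul_eq_zero_of_mul_eq_mul_of_disjoint_s7 hcols hdisj

/-- with `rank A = n - m` and `A_W = A + BᵀWB` invertible,
`A A_W⁻¹ Bᵀ = 0`, i.e. the columns of `A_W⁻¹ Bᵀ` lie in the kernel of `A`. -/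
theorem leading_block_annihilates {n m : ℕ} (hn : 0 < n) (hm : 0 < m) (hmn : m < n)
    (A : Matrix (Fin n) (Fin n) ℝ) (B : Matrix (Fin m) (Fin n) ℝ)
    (W : Matrix (Fin m) (Fin m) ℝ)
    (hA : A.PosSemidef) (hrA : A.rank = n - m) (hrB : B.rank = m)
    (hW : W.PosDef) (hAW : IsUnit (A + Bᵀ * W * B)) :
    A * (A + Bᵀ * W * B)⁻¹ * Bᵀ = 0 :=
  leading_block_annihilates_general hmn A B W hrA hrB hAW
end

section
/- Let n and m be positive integers with m < n, let A be an n×n real symmetric positive semidefinite matrix with rank(A) = n − m, let B be an m×n real matrix with rank m, and let W be an m×m real symmetric positive definite matrix such that A_W = A + BᵀWB is symmetric positive definite. Let K = [[A, Bᵀ],[B, 0]] and let M_W = [[A_W, 0],[0, W⁻¹]] be the block diagonal matrix with diagonal blocks A_W and W⁻¹. Then the matrix T = M_W⁻¹·K satisfies T² = I_{n+m}, rank(T − I) = m, and rank(T + I) = n; in particular T has exactly the two eigenvalues 1 and −1, with algebraic multiplicities n and m respectively. -/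
open Matrix

lemma rank_neg_eq {k : Type*} [Fintype k] [DecidableEq k] (X : Matrix k k ℝ) :
    (-X).rank = X.rank := by
  have h : IsUnit ((-1 : Matrix k k ℝ)).det :=
    (Matrix.isUnit_iff_isUnit_det _).mp (isUnit_one.neg : IsUnit (-1 : Matrix k k ℝ))
  calc (-X).rank = ((-1 : Matrix k k ℝ) * X).rank := by rw [neg_one_mul]
    _ = X.rank := Matrix.rank_mul_eq_right_of_isUnit_det _ _ h

lemma eq_zero_of_forall_mulVec {p q : Type*} [Fintype q] [DecidableEq q]
    (X : Matrix p q ℝ) (h : ∀ x, X *ᵥ x = 0) : X = 0 := by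
  ext i j
  have := congrFun (h (Pi.single j 1)) i
  simpa using this

/-- The four key identities satisfied by `AW⁻¹ = (A + BᵀWB)⁻¹`. -/
lemma aux_key_identities {n m : ℕ} (hmn : m ≤ n)
    (A AW : Matrix (Fin n) (Fin n) ℝ) (B : Matrix (Fin m) (Fin n) ℝ)
    (W : Matrix (Fin m) (Fin m) ℝ)
    (hAWdef : AW = A + Bᵀ * W * B)
    (hAsymm : Aᵀ = A) (hWsymm : Wᵀ = W)
    (hrA : A.rank = n - m) (hrB : B.rank = m)
    (hWdet : IsUnit W.det) (hAWdet : IsUnit AW.det) :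
    A * (AW⁻¹ * A) = A ∧ A * (AW⁻¹ * Bᵀ) = 0 ∧
      B * (AW⁻¹ * A) = 0 ∧ B * (AW⁻¹ * Bᵀ) = W⁻¹ := by
  classical
  have hAWsymm : AWᵀ = AW := by
    rw [hAWdef, transpose_add, hAsymm, transpose_mul, transpose_mul, transpose_transpose,
      hWsymm, Matrix.mul_assoc]
  have hXsymm : (AW⁻¹)ᵀ = AW⁻¹ := by
    rw [Matrix.transpose_nonsing_inv, hAWsymm]
  -- the two ranges
  have hUrank : Module.finrank ℝ ↥(LinearMap.range A.mulVecLin) = n - m := hrA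
  have hVrank : Module.finrank ℝ ↥(LinearMap.range (Bᵀ).mulVecLin) = m := by
    have : (Bᵀ).rank = m := by rw [Matrix.rank_transpose]; exact hrB
    exact this
  have hsup : LinearMap.range A.mulVecLin ⊔ LinearMap.range (Bᵀ).mulVecLin = ⊤ := by
    rw [eq_top_iff]
    rintro y -
    have h1 : AW *ᵥ (AW⁻¹ *ᵥ y) = y := by
      rw [Matrix.mulVec_mulVec, Matrix.mul_nonsing_inv _ hAWdet, Matrix.one_mulVec]
    have key : ∀ z, AW *ᵥ z = A *ᵥ z + Bᵀ *ᵥ ((W * B) *ᵥ z) := by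
      intro z
      rw [hAWdef, Matrix.add_mulVec]
      simp only [Matrix.mulVec_mulVec, Matrix.mul_assoc]
    have hy := key (AW⁻¹ *ᵥ y)
    rw [h1] at hy
    rw [hy]
    exact Submodule.add_mem_sup ⟨_, rfl⟩ ⟨_, rfl⟩
  have hinf : LinearMap.range A.mulVecLin ⊓ LinearMap.range (Bᵀ).mulVecLin = ⊥ := by
    have hfr := Submodule.finrank_sup_add_finrank_inf_eq
      (LinearMap.range A.mulVecLin) (LinearMap.range (Bᵀ).mulVecLin)
    rw [hsup, hUrank, hVrank, finrank_top, Module.finrank_fintype_fun_eq_card,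
      Fintype.card_fin, Nat.sub_add_cancel hmn] at hfr
    have h0 : Module.finrank ℝ
        ↥(LinearMap.range A.mulVecLin ⊓ LinearMap.range (Bᵀ).mulVecLin) = 0 := by omega
    exact Submodule.finrank_eq_zero.mp h0
  have hdisj : ∀ v : Fin n → ℝ,
      v ∈ LinearMap.range A.mulVecLin → v ∈ LinearMap.range (Bᵀ).mulVecLin → v = 0 := by
    intro v hvU hvV
    have hv : v ∈ LinearMap.range A.mulVecLin ⊓ LinearMap.range (Bᵀ).mulVecLin := ⟨hvU, hvV⟩
    rw [hinf] at hv
    simpa using hv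
  -- injectivity of Bᵀ
  have hBtker : LinearMap.ker (Bᵀ).mulVecLin = ⊥ := by
    have h1 := LinearMap.finrank_range_add_finrank_ker (Bᵀ).mulVecLin
    rw [Module.finrank_fintype_fun_eq_card, Fintype.card_fin, hVrank] at h1
    exact Submodule.finrank_eq_zero.mp (by omega)
  have hBtinj : ∀ (Y : Matrix (Fin m) (Fin m) ℝ), Bᵀ * Y = 0 → Y = 0 := by
    intro Y hY
    apply eq_zero_of_forall_mulVec
    intro x
    have h2 : Bᵀ *ᵥ (Y *ᵥ x) = 0 := by rw [Matrix.mulVec_mulVec, hY, Matrix.zero_mulVec]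
    have hmem : Y *ᵥ x ∈ LinearMap.ker (Bᵀ).mulVecLin :=
      LinearMap.mem_ker.mpr (by rw [Matrix.mulVecLin_apply]; exact h2)
    rw [hBtker] at hmem
    simpa using hmem
  -- the key identities
  have hEq : AW * (AW⁻¹ * Bᵀ) = Bᵀ := by
    rw [← Matrix.mul_assoc, Matrix.mul_nonsing_inv _ hAWdet, Matrix.one_mul]
  have h1 : A * (AW⁻¹ * Bᵀ) + Bᵀ * W * B * (AW⁻¹ * Bᵀ) = Bᵀ := by
    have h2 : (A + Bᵀ * W * B) * (AW⁻¹ * Bᵀ) = Bᵀ := by rw [← hAWdef]; exact hEq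
    rw [Matrix.add_mul] at h2
    exact h2
  have hsplit : A * (AW⁻¹ * Bᵀ) = Bᵀ * (1 - W * (B * (AW⁻¹ * Bᵀ))) := by
    have h2 := eq_sub_of_add_eq h1
    rw [h2]
    simp only [Matrix.mul_sub, Matrix.mul_one, Matrix.mul_assoc]
  have hAXBt : A * (AW⁻¹ * Bᵀ) = 0 := by
    apply eq_zero_of_forall_mulVec
    intro x
    apply hdisj
    · exact ⟨(AW⁻¹ * Bᵀ) *ᵥ x, by rw [Matrix.mulVecLin_apply, Matrix.mulVec_mulVec]⟩
    · rw [hsplit]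
      exact ⟨(1 - W * (B * (AW⁻¹ * Bᵀ))) *ᵥ x,
        by rw [Matrix.mulVecLin_apply, Matrix.mulVec_mulVec]⟩
  have hBXBt : B * (AW⁻¹ * Bᵀ) = W⁻¹ := by
    have h2 : Bᵀ * (1 - W * (B * (AW⁻¹ * Bᵀ))) = 0 := by rw [← hsplit, hAXBt]
    have h3 : 1 - W * (B * (AW⁻¹ * Bᵀ)) = 0 := hBtinj _ h2
    have h4 : W * (B * (AW⁻¹ * Bᵀ)) = 1 := (sub_eq_zero.mp h3).symm
    exact (Matrix.inv_eq_right_inv h4).symm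
  have hBXA : B * (AW⁻¹ * A) = 0 := by
    have h2 := congrArg Matrix.transpose hAXBt
    rwa [Matrix.transpose_mul, Matrix.transpose_mul, transpose_transpose, hXsymm, hAsymm,
      Matrix.transpose_zero, Matrix.mul_assoc] at h2
  have hAXA : A * (AW⁻¹ * A) = A := by
    have h := Matrix.nonsing_inv_mul AW hAWdet
    calc A * (AW⁻¹ * A)
        = A * (AW⁻¹ * A) + A * (AW⁻¹ * Bᵀ) * (W * B) := by
          rw [hAXBt, Matrix.zero_mul, add_zero]
      _ = A * (AW⁻¹ * (A + Bᵀ * W * B)) := by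
          simp only [Matrix.mul_add, Matrix.mul_assoc]
      _ = A * (AW⁻¹ * AW) := by rw [← hAWdef]
      _ = A := by rw [h, Matrix.mul_one]
  exact ⟨hAXA, hAXBt, hBXA, hBXBt⟩

/-- The saddle-point matrix `K = [[A, Bᵀ],[B, 0]]`. -/
def saddleK {n m : ℕ} (A : Matrix (Fin n) (Fin n) ℝ) (B : Matrix (Fin m) (Fin n) ℝ) :
    Matrix (Fin n ⊕ Fin m) (Fin n ⊕ Fin m) ℝ :=
  Matrix.fromBlocks A Bᵀ B 0

/-- The preconditioned operator `T = M_W⁻¹ K` where `M_W = [[A + BᵀWB, 0],[0, W⁻¹]]`. -/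
noncomputable def precondT {n m : ℕ} (A : Matrix (Fin n) (Fin n) ℝ)
    (B : Matrix (Fin m) (Fin n) ℝ) (W : Matrix (Fin m) (Fin m) ℝ) :
    Matrix (Fin n ⊕ Fin m) (Fin n ⊕ Fin m) ℝ :=
  (Matrix.fromBlocks (A + Bᵀ * W * B) 0 0 W⁻¹)⁻¹ * saddleK A B

/-- with `rank A = n - m` and `A_W = A + BᵀWB` symmetric positive definite,
the preconditioned operator `T = M_W⁻¹ K` satisfies `T² = I`, `rank (T - I) = m` and
`rank (T + I) = n`; in particular `T` has exactly the eigenvalues `1` (multiplicity `n`)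
and `-1` (multiplicity `m`). -/
theorem precond_maximal_nullity_two_eigenvalues {n m : ℕ}
    (hn : 0 < n) (hm : 0 < m) (hmn : m < n)
    (A : Matrix (Fin n) (Fin n) ℝ) (B : Matrix (Fin m) (Fin n) ℝ)
    (W : Matrix (Fin m) (Fin m) ℝ)
    (hA : A.PosSemidef) (hrA : A.rank = n - m) (hrB : B.rank = m)
    (hW : W.PosDef) (hAW : (A + Bᵀ * W * B).PosDef) :
    precondT A B W * precondT A B W = 1 ∧
    (precondT A B W - 1).rank = m ∧
    (precondT A B W + 1).rank = n ∧
    ∀ μ : ℝ, (∃ x : Fin n ⊕ Fin m → ℝ, x ≠ 0 ∧ precondT A B W *ᵥ x = μ • x) ↔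
      (μ = 1 ∨ μ = -1) := by
  classical
  have hWdet : IsUnit W.det := (Matrix.isUnit_iff_isUnit_det W).mp hW.isUnit
  have hAWdet : IsUnit (A + Bᵀ * W * B).det := (Matrix.isUnit_iff_isUnit_det _).mp hAW.isUnit
  have hWinvdet : IsUnit W⁻¹.det := W.isUnit_nonsing_inv_det hWdet
  have hAsymm : Aᵀ = A := by
    have h := hA.1; rwa [Matrix.IsHermitian, conjTranspose_eq_transpose_of_trivial] at h
  have hWsymm : Wᵀ = W := by
    have h := hW.1; rwa [Matrix.IsHermitian, conjTranspose_eq_transpose_of_trivial] at h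
  obtain ⟨hAXA, hAXBt, hBXA, hBXBt⟩ :=
    aux_key_identities hmn.le A (A + Bᵀ * W * B) B W rfl hAsymm hWsymm hrA hrB hWdet hAWdet
  -- block form of M⁻¹ and T
  have hMdet : IsUnit (Matrix.fromBlocks (A + Bᵀ * W * B) 0 0 W⁻¹ :
      Matrix (Fin n ⊕ Fin m) (Fin n ⊕ Fin m) ℝ).det := by
    rw [Matrix.det_fromBlocks_zero₂₁]
    exact hAWdet.mul hWinvdet
  have hMinvdet : IsUnit (Matrix.fromBlocks (A + Bᵀ * W * B) 0 0 W⁻¹ :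
      Matrix (Fin n ⊕ Fin m) (Fin n ⊕ Fin m) ℝ)⁻¹.det :=
    Matrix.isUnit_nonsing_inv_det _ hMdet
  have hMinv : (Matrix.fromBlocks (A + Bᵀ * W * B) 0 0 W⁻¹ :
      Matrix (Fin n ⊕ Fin m) (Fin n ⊕ Fin m) ℝ)⁻¹ =
      Matrix.fromBlocks (A + Bᵀ * W * B)⁻¹ 0 0 W := by
    apply Matrix.inv_eq_right_inv
    rw [Matrix.fromBlocks_multiply]
    simp only [Matrix.mul_zero, Matrix.zero_mul, add_zero, zero_add,
      Matrix.mul_nonsing_inv _ hAWdet, Matrix.nonsing_inv_mul _ hWdet]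
    exact Matrix.fromBlocks_one
  have hT : precondT A B W =
      Matrix.fromBlocks ((A + Bᵀ * W * B)⁻¹ * A) ((A + Bᵀ * W * B)⁻¹ * Bᵀ) (W * B) 0 := by
    rw [precondT, hMinv, saddleK, Matrix.fromBlocks_multiply]
    simp only [Matrix.mul_zero, Matrix.zero_mul, add_zero, zero_add, Matrix.mul_one]
  -- T² = 1
  have hT2 : precondT A B W * precondT A B W = 1 := by
    rw [hT, Matrix.fromBlocks_multiply]
    have hXAW : (A + Bᵀ * W * B)⁻¹ * (A + Bᵀ * W * B) = 1 := Matrix.nonsing_inv_mul _ hAWdet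
    have hWWinv : W * W⁻¹ = 1 := Matrix.mul_nonsing_inv _ hWdet
    rw [← Matrix.fromBlocks_one, Matrix.fromBlocks_inj]
    generalize hXg : (A + Bᵀ * W * B)⁻¹ = X at hXAW hAXA hAXBt hBXA hBXBt ⊢
    refine ⟨?_, ?_, ?_, ?_⟩
    · simp only [Matrix.mul_assoc]
      rw [hAXA]
      have h := hXAW
      rw [Matrix.mul_add] at h
      simpa only [Matrix.mul_assoc] using h
    · simp only [Matrix.mul_assoc, Matrix.mul_zero, add_zero]
      rw [hAXBt, Matrix.mul_zero]
    · simp only [Matrix.mul_assoc, Matrix.zero_mul, add_zero]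
      rw [hBXA, Matrix.mul_zero]
    · simp only [Matrix.mul_assoc, Matrix.zero_mul, Matrix.mul_zero, add_zero]
      rw [hBXBt]
      exact hWWinv
  -- rank (T - 1) = m
  have hTm1 : precondT A B W - 1 =
      (Matrix.fromBlocks (A + Bᵀ * W * B) 0 0 W⁻¹)⁻¹ *
        (saddleK A B - Matrix.fromBlocks (A + Bᵀ * W * B) 0 0 W⁻¹) := by
    rw [Matrix.mul_sub, Matrix.nonsing_inv_mul _ hMdet, precondT]
  have hD : saddleK A B - Matrix.fromBlocks (A + Bᵀ * W * B) 0 0 W⁻¹ =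
      Matrix.fromBlocks (-(Bᵀ * W * B)) Bᵀ B (-W⁻¹) := by
    rw [saddleK, sub_eq_add_neg, Matrix.fromBlocks_neg, Matrix.fromBlocks_add,
      Matrix.fromBlocks_inj]
    refine ⟨by abel, by simp, by simp, by simp⟩
  have hDfact : saddleK A B - Matrix.fromBlocks (A + Bᵀ * W * B) 0 0 W⁻¹ =
      -(Matrix.fromRows Bᵀ (-W⁻¹) * (W * Matrix.fromCols B (-W⁻¹))) := by
    rw [hD, Matrix.mul_fromCols, Matrix.fromRows_mul_fromCols, Matrix.fromBlocks_neg,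
      Matrix.fromBlocks_inj]
    refine ⟨?_, ?_, ?_, ?_⟩
    · rw [Matrix.mul_assoc]
    · rw [Matrix.mul_neg, Matrix.mul_nonsing_inv _ hWdet, Matrix.mul_neg, Matrix.mul_one,
        neg_neg]
    · rw [Matrix.neg_mul, neg_neg, ← Matrix.mul_assoc, Matrix.nonsing_inv_mul _ hWdet,
        Matrix.one_mul]
    · rw [Matrix.mul_neg, Matrix.mul_nonsing_inv _ hWdet, Matrix.mul_neg, Matrix.mul_one,
        neg_neg]
  have hrankD : (saddleK A B - Matrix.fromBlocks (A + Bᵀ * W * B) 0 0 W⁻¹).rank = m := by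
    apply le_antisymm
    · rw [hDfact, rank_neg_eq]
      calc (Matrix.fromRows Bᵀ (-W⁻¹) * (W * Matrix.fromCols B (-W⁻¹))).rank
          ≤ (Matrix.fromRows Bᵀ (-W⁻¹)).rank := Matrix.rank_mul_le_left _ _
        _ ≤ Fintype.card (Fin m) := Matrix.rank_le_card_width _
        _ = m := Fintype.card_fin m
    · have hRDC : Matrix.fromCols (0 : Matrix (Fin m) (Fin n) ℝ) (1 : Matrix (Fin m) (Fin m) ℝ) *
          (saddleK A B - Matrix.fromBlocks (A + Bᵀ * W * B) 0 0 W⁻¹) *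
          Matrix.fromRows (0 : Matrix (Fin n) (Fin m) ℝ) (1 : Matrix (Fin m) (Fin m) ℝ) = -W⁻¹ := by
        rw [hD, Matrix.mul_assoc, Matrix.fromBlocks_mul_fromRows,
          Matrix.fromCols_mul_fromRows]
        simp
      have h1 : (-W⁻¹ : Matrix (Fin m) (Fin m) ℝ).rank = m := by
        rw [rank_neg_eq, Matrix.rank_of_isUnit _ ((Matrix.isUnit_iff_isUnit_det _).mpr hWinvdet)]
        exact Fintype.card_fin m
      calc m = (-W⁻¹ : Matrix (Fin m) (Fin m) ℝ).rank := h1.symm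
        _ = (Matrix.fromCols (0 : Matrix (Fin m) (Fin n) ℝ) (1 : Matrix (Fin m) (Fin m) ℝ) *
            (saddleK A B - Matrix.fromBlocks (A + Bᵀ * W * B) 0 0 W⁻¹) *
            Matrix.fromRows (0 : Matrix (Fin n) (Fin m) ℝ) (1 : Matrix (Fin m) (Fin m) ℝ)).rank := by rw [hRDC]
        _ ≤ (Matrix.fromCols (0 : Matrix (Fin m) (Fin n) ℝ) (1 : Matrix (Fin m) (Fin m) ℝ) *
            (saddleK A B - Matrix.fromBlocks (A + Bᵀ * W * B) 0 0 W⁻¹)).rank :=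
            Matrix.rank_mul_le_left _ _
        _ ≤ (saddleK A B - Matrix.fromBlocks (A + Bᵀ * W * B) 0 0 W⁻¹).rank :=
            Matrix.rank_mul_le_right _ _
  have hrankTm1 : (precondT A B W - 1).rank = m := by
    rw [hTm1, Matrix.rank_mul_eq_right_of_isUnit_det _ _ hMinvdet]
    exact hrankD
  -- rank (T + 1) = n
  have hmul0 : (precondT A B W - 1) * (precondT A B W + 1) = 0 := by
    have h : (precondT A B W - 1) * (precondT A B W + 1) =
        precondT A B W * precondT A B W - 1 := by noncomm_ring
    rw [h, hT2, sub_self]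
  have hupper : (precondT A B W - 1).rank + (precondT A B W + 1).rank ≤ n + m := by
    have h := Matrix.rank_add_rank_le_card_of_mul_eq_zero hmul0
    simpa using h
  have hkerTm1 : Module.finrank ℝ ↥(LinearMap.ker (precondT A B W - 1).mulVecLin) = n := by
    have h1 := LinearMap.finrank_range_add_finrank_ker (precondT A B W - 1).mulVecLin
    rw [Module.finrank_fintype_fun_eq_card] at h1
    simp only [Fintype.card_sum, Fintype.card_fin] at h1
    have h2 : Module.finrank ℝ ↥(LinearMap.range (precondT A B W - 1).mulVecLin) = m := hrankTm1
    omega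
  have hlower : n ≤ (precondT A B W + 1).rank := by
    have hle : LinearMap.ker (precondT A B W - 1).mulVecLin ≤
        LinearMap.range (precondT A B W + 1).mulVecLin := by
      intro x hx
      have hx' : precondT A B W *ᵥ x - x = 0 := by
        have h := hx
        rwa [LinearMap.mem_ker, Matrix.mulVecLin_apply, Matrix.sub_mulVec,
          Matrix.one_mulVec] at h
      have hTx : precondT A B W *ᵥ x = x := sub_eq_zero.mp hx'
      refine LinearMap.mem_range.mpr ⟨(1/2 : ℝ) • x, ?_⟩
      rw [Matrix.mulVecLin_apply, Matrix.add_mulVec, Matrix.one_mulVec,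
        Matrix.mulVec_smul, hTx, ← smul_add, ← two_smul ℝ x, smul_smul]
      norm_num
    calc n = Module.finrank ℝ ↥(LinearMap.ker (precondT A B W - 1).mulVecLin) := hkerTm1.symm
      _ ≤ Module.finrank ℝ ↥(LinearMap.range (precondT A B W + 1).mulVecLin) :=
          Submodule.finrank_mono hle
      _ = (precondT A B W + 1).rank := rfl
  have hrankTp1 : (precondT A B W + 1).rank = n := le_antisymm (by omega) hlower
  -- eigenvalues
  refine ⟨hT2, hrankTm1, hrankTp1, ?_⟩
  intro μ
  constructor
  · rintro ⟨x, hx0, hx⟩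
    have hxx : x = (μ * μ) • x := by
      calc x = (1 : Matrix (Fin n ⊕ Fin m) (Fin n ⊕ Fin m) ℝ) *ᵥ x := (Matrix.one_mulVec x).symm
        _ = precondT A B W *ᵥ (precondT A B W *ᵥ x) := by
            rw [Matrix.mulVec_mulVec, hT2]
        _ = precondT A B W *ᵥ (μ • x) := by rw [hx]
        _ = μ • (precondT A B W *ᵥ x) := Matrix.mulVec_smul _ _ _
        _ = μ • (μ • x) := by rw [hx]
        _ = (μ * μ) • x := smul_smul μ μ x
    obtain ⟨i, hi⟩ := Function.ne_iff.mp hx0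
    have hxi : x i = (μ * μ) * x i := by
      have h := congrFun hxx i; simpa using h
    have hμ : μ * μ = 1 := by
      have h' : (μ * μ - 1) * x i = 0 := by linear_combination (-1 : ℝ) * hxi
      rcases mul_eq_zero.mp h' with h | h
      · linarith
      · exact absurd h hi
    exact mul_self_eq_one_iff.mp hμ
  · intro hμ
    rcases hμ with rfl | rfl
    · have hne : LinearMap.ker (precondT A B W - 1).mulVecLin ≠ ⊥ := by
        intro hbot
        rw [hbot] at hkerTm1
        simp only [finrank_bot] at hkerTm1
        omega
      obtain ⟨x, hxmem, hx0⟩ := (Submodule.ne_bot_iff _).mp hne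
      refine ⟨x, hx0, ?_⟩
      have h : precondT A B W *ᵥ x - x = 0 := by
        have h' := hxmem
        rwa [LinearMap.mem_ker, Matrix.mulVecLin_apply, Matrix.sub_mulVec,
          Matrix.one_mulVec] at h'
      rw [one_smul]
      exact sub_eq_zero.mp h
    · have hkerTp1 : Module.finrank ℝ ↥(LinearMap.ker (precondT A B W + 1).mulVecLin) = m := by
        have h1 := LinearMap.finrank_range_add_finrank_ker (precondT A B W + 1).mulVecLin
        rw [Module.finrank_fintype_fun_eq_card] at h1
        simp only [Fintype.card_sum, Fintype.card_fin] at h1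
        have h2 : Module.finrank ℝ ↥(LinearMap.range (precondT A B W + 1).mulVecLin) = n :=
          hrankTp1
        omega
      have hne : LinearMap.ker (precondT A B W + 1).mulVecLin ≠ ⊥ := by
        intro hbot
        rw [hbot] at hkerTp1
        simp only [finrank_bot] at hkerTp1
        omega
      obtain ⟨x, hxmem, hx0⟩ := (Submodule.ne_bot_iff _).mp hne
      refine ⟨x, hx0, ?_⟩
      have h : precondT A B W *ᵥ x + x = 0 := by
        have h' := hxmem
        rwa [LinearMap.mem_ker, Matrix.mulVecLin_apply, Matrix.add_mulVec,
          Matrix.one_mulVec] at h'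
      have h2 := eq_neg_of_add_eq_zero_left h
      rw [h2]
      ext i; simp
end

section
/- Let n, m, k be positive integers with k < m < n. Let A be an n×n real symmetric positive semidefinite matrix with rank(A) = n − k, let B be an m×n real matrix with rank m, and let W_k be an m×m real symmetric positive semidefinite matrix of rank k such that A_k = A + BᵀW_kB is symmetric positive definite. Let Z be an n×(n−m) real matrix whose columns form a basis of the kernel of B (so BZ = 0 and rank(Z) = n − m), suppose ZᵀAZ is invertible, and set V = Z(ZᵀAZ)⁻¹Zᵀ. Then B·A_k⁻¹·Bᵀ is invertible and (B·A_k⁻¹·Bᵀ)⁻¹ = W_k + (BBᵀ)⁻¹·B·(A − A·V·A)·Bᵀ·(BBᵀ)⁻¹. -/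
open Matrix

lemma aux_isUnit_of_rank_eq_card {m : ℕ} (M : Matrix (Fin m) (Fin m) ℝ)
    (h : M.rank = m) : IsUnit M := by
  rw [← Matrix.mulVec_surjective_iff_isUnit]
  have hr : LinearMap.range M.mulVecLin = ⊤ := by
    apply Submodule.eq_top_of_finrank_eq
    rw [show Module.finrank ℝ (LinearMap.range M.mulVecLin) = M.rank from rfl, h]
    simp [Module.finrank_pi]
  intro y
  obtain ⟨x, hx⟩ := LinearMap.range_eq_top.mp hr y
  exact ⟨x, hx⟩

lemma aux_eq_zero {n m : ℕ}
    (B : Matrix (Fin m) (Fin n) ℝ) (Z : Matrix (Fin n) (Fin (n-m)) ℝ)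
    (hrB : B.rank = m) (hrZ : Z.rank = n - m) (hBZ : B * Z = 0)
    (hBBt : IsUnit (B * Bᵀ))
    (R : Matrix (Fin n) (Fin n) ℝ) (h1 : R * Bᵀ = 0) (h2 : R * Z = 0) : R = 0 := by
  have hle : LinearMap.range Z.mulVecLin ≤ LinearMap.ker B.mulVecLin := by
    rintro x ⟨v, rfl⟩
    simp [LinearMap.mem_ker, Matrix.mulVecLin_apply, Matrix.mulVec_mulVec, hBZ]
  have hkerB : Module.finrank ℝ (LinearMap.ker B.mulVecLin) = n - m := by
    have := LinearMap.finrank_range_add_finrank_ker B.mulVecLin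
    rw [show Module.finrank ℝ (LinearMap.range B.mulVecLin) = B.rank from rfl, hrB] at this
    simp [Module.finrank_pi] at this
    omega
  have heq : LinearMap.range Z.mulVecLin = LinearMap.ker B.mulVecLin := by
    apply Submodule.eq_of_le_of_finrank_le hle
    rw [hkerB, show Module.finrank ℝ (LinearMap.range Z.mulVecLin) = Z.rank from rfl, hrZ]
  -- decomposition
  have hdec : ∀ x : Fin n → ℝ, ∃ u v, x = Bᵀ *ᵥ u + Z *ᵥ v := by
    intro x
    set u := (B * Bᵀ)⁻¹ *ᵥ (B *ᵥ x) with hu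
    have hy : B *ᵥ (x - Bᵀ *ᵥ u) = 0 := by
      have : B *ᵥ (Bᵀ *ᵥ u) = B *ᵥ x := by
        rw [hu]
        simp only [Matrix.mulVec_mulVec]
        rw [← Matrix.mul_assoc, ← Matrix.mul_assoc, Matrix.mul_nonsing_inv _ ((Matrix.isUnit_iff_isUnit_det _).mp hBBt),
          Matrix.one_mul]
      rw [Matrix.mulVec_sub, this, sub_self]
    have hmem : x - Bᵀ *ᵥ u ∈ LinearMap.range Z.mulVecLin := by
      rw [heq]; exact hy
    obtain ⟨v, hv⟩ := hmem
    refine ⟨u, v, ?_⟩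
    have hv' : Z *ᵥ v = x - Bᵀ *ᵥ u := hv
    rw [hv']; abel
  ext i j
  have := hdec (Pi.single j 1)
  obtain ⟨u, v, huv⟩ := this
  have : R *ᵥ Pi.single j 1 = 0 := by
    rw [huv, Matrix.mulVec_add, Matrix.mulVec_mulVec, Matrix.mulVec_mulVec, h1, h2]
    simp
  have := congr_fun this i
  simpa [Matrix.mulVec_single] using this


/-- with `rank A = n - k`, `rank B = m`, `W_k` of rank `k` such that
`A_k = A + BᵀW_kB` is symmetric positive definite, `Z` a null-space matrix of `B`
and `V = Z (ZᵀAZ)⁻¹ Zᵀ`, the Schur complement `B A_k⁻¹ Bᵀ` is invertible and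
`(B A_k⁻¹ Bᵀ)⁻¹ = W_k + (BBᵀ)⁻¹ B (A - AVA) Bᵀ (BBᵀ)⁻¹`. -/
theorem schur_complement_inverse_formula {n m k : ℕ}
    (hk : 0 < k) (hkm : k < m) (hmn : m < n)
    (A : Matrix (Fin n) (Fin n) ℝ) (B : Matrix (Fin m) (Fin n) ℝ)
    (Wk : Matrix (Fin m) (Fin m) ℝ)
    (hA : A.PosSemidef) (hrA : A.rank = n - k) (hrB : B.rank = m)
    (hWk : Wk.PosSemidef) (hrWk : Wk.rank = k)
    (hAk : (A + Bᵀ * Wk * B).PosDef)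
    (Z : Matrix (Fin n) (Fin (n - m)) ℝ) (hBZ : B * Z = 0) (hrZ : Z.rank = n - m)
    (hZAZ : IsUnit (Zᵀ * A * Z)) :
    IsUnit (B * (A + Bᵀ * Wk * B)⁻¹ * Bᵀ) ∧
    (B * (A + Bᵀ * Wk * B)⁻¹ * Bᵀ)⁻¹ =
      Wk + (B * Bᵀ)⁻¹ * B *
        (A - A * (Z * (Zᵀ * A * Z)⁻¹ * Zᵀ) * A) * Bᵀ * (B * Bᵀ)⁻¹ := by
  have hAt : Aᵀ = A := by
    have h1 : Aᴴ = A := hA.1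
    rwa [Matrix.conjTranspose_eq_transpose_of_trivial] at h1
  set E : Matrix (Fin (n-m)) (Fin (n-m)) ℝ := Zᵀ * A * Z with hE
  set V : Matrix (Fin n) (Fin n) ℝ := Z * E⁻¹ * Zᵀ with hV
  set Ak : Matrix (Fin n) (Fin n) ℝ := A + Bᵀ * Wk * B with hAkdef
  have hAkt : Akᵀ = Ak := by
    have h1 : Akᴴ = Ak := hAk.1
    rwa [Matrix.conjTranspose_eq_transpose_of_trivial] at h1
  have hdetE : IsUnit E.det := (Matrix.isUnit_iff_isUnit_det _).mp hZAZ
  have hEiE : E⁻¹ * E = 1 := Matrix.nonsing_inv_mul _ hdetE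
  have hEEi : E * E⁻¹ = 1 := Matrix.mul_nonsing_inv _ hdetE
  have hEt : Eᵀ = E := by
    rw [hE, Matrix.transpose_mul, Matrix.transpose_mul, Matrix.transpose_transpose, hAt,
      Matrix.mul_assoc]
  have hEit : E⁻¹ᵀ = E⁻¹ := by rw [Matrix.transpose_nonsing_inv, hEt]
  have hVt : Vᵀ = V := by
    rw [hV, Matrix.transpose_mul, Matrix.transpose_mul, Matrix.transpose_transpose, hEit,
      Matrix.mul_assoc]
  have hBBt : IsUnit (B * Bᵀ) :=
    aux_isUnit_of_rank_eq_card _ (by rw [Matrix.rank_self_mul_transpose, hrB])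
  have hdetBBt : IsUnit (B * Bᵀ).det := (Matrix.isUnit_iff_isUnit_det _).mp hBBt
  -- quantified helper identities (right-associated)
  have hBZ' : ∀ {p : Type} (M : Matrix (Fin (n-m)) p ℝ), B * (Z * M) = 0 := by
    intro p M; rw [← Matrix.mul_assoc, hBZ, Matrix.zero_mul]
  have hZtBt : Zᵀ * Bᵀ = 0 := by rw [← Matrix.transpose_mul, hBZ, Matrix.transpose_zero]
  have hZtBt' : ∀ {p : Type} (M : Matrix (Fin m) p ℝ), Zᵀ * (Bᵀ * M) = 0 := by
    intro p M; rw [← Matrix.mul_assoc, hZtBt, Matrix.zero_mul]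
  have hBV : B * V = 0 := by
    rw [hV, ← Matrix.mul_assoc, ← Matrix.mul_assoc, hBZ, Matrix.zero_mul, Matrix.zero_mul]
  have hBV' : ∀ {p : Type} (M : Matrix (Fin n) p ℝ), B * (V * M) = 0 := by
    intro p M; rw [← Matrix.mul_assoc, hBV, Matrix.zero_mul]
  have hVBt : V * Bᵀ = 0 := by
    rw [hV, Matrix.mul_assoc, hZtBt, Matrix.mul_zero]
  have hVBt' : ∀ {p : Type} (M : Matrix (Fin m) p ℝ), V * (Bᵀ * M) = 0 := by
    intro p M; rw [← Matrix.mul_assoc, hVBt, Matrix.zero_mul]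
  have hVAZ : V * (A * Z) = Z := by
    have h1 : Zᵀ * (A * Z) = E := by rw [hE, Matrix.mul_assoc]
    calc V * (A * Z) = Z * E⁻¹ * (Zᵀ * (A * Z)) := by rw [hV, Matrix.mul_assoc (Z * E⁻¹)]
      _ = Z * E⁻¹ * E := by rw [h1]
      _ = Z := by rw [Matrix.mul_assoc, hEiE, Matrix.mul_one]
  have hVAZ' : ∀ {p : Type} (M : Matrix (Fin (n-m)) p ℝ), V * (A * (Z * M)) = Z * M := by
    intro p M
    rw [← Matrix.mul_assoc, ← Matrix.mul_assoc, Matrix.mul_assoc V, hVAZ]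
  have hVAV : V * (A * V) = V := by
    calc V * (A * V) = V * (A * (Z * (E⁻¹ * Zᵀ))) := by rw [hV, Matrix.mul_assoc Z]
      _ = Z * (E⁻¹ * Zᵀ) := hVAZ' _
      _ = V := by rw [hV, Matrix.mul_assoc]
  have hVAV' : ∀ {p : Type} (M : Matrix (Fin n) p ℝ), V * (A * (V * M)) = V * M := by
    intro p M
    rw [← Matrix.mul_assoc, ← Matrix.mul_assoc, Matrix.mul_assoc V, hVAV]
  -- K and F
  set K : Matrix (Fin n) (Fin m) ℝ := Bᵀ - V * (A * Bᵀ) with hK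
  have hKt : Kᵀ = B - B * A * V := by
    rw [hK, Matrix.transpose_sub, Matrix.transpose_transpose, Matrix.transpose_mul,
      Matrix.transpose_mul, Matrix.transpose_transpose, hAt, hVt]
  have hBK : B * K = B * Bᵀ := by
    rw [hK, Matrix.mul_sub, hBV', sub_zero]
  have hKtBt : Kᵀ * Bᵀ = B * Bᵀ := by
    rw [← Matrix.transpose_mul, hBK, Matrix.transpose_mul, Matrix.transpose_transpose]
  have hAkZ : Ak * Z = A * Z := by
    rw [hAkdef, Matrix.add_mul, Matrix.mul_assoc (Bᵀ * Wk), hBZ, Matrix.mul_zero, add_zero]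
  have hKtAkZ : Kᵀ * (Ak * Z) = 0 := by
    rw [hAkZ, hKt, Matrix.sub_mul, Matrix.mul_assoc (B * A) V (A * Z), hVAZ,
      Matrix.mul_assoc, sub_self]
  set F : Matrix (Fin m) (Fin m) ℝ := Kᵀ * Ak * K with hF
  have hKtAkV : Kᵀ * Ak * V = 0 := by
    rw [hV, Matrix.mul_assoc Z, ← Matrix.mul_assoc (Kᵀ * Ak), Matrix.mul_assoc Kᵀ Ak Z,
      hKtAkZ, Matrix.zero_mul]
  have hKtAkBt : Kᵀ * (Ak * Bᵀ) = F := by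
    have hBt : Bᵀ = K + V * (A * Bᵀ) := by rw [hK]; abel
    calc Kᵀ * (Ak * Bᵀ) = Kᵀ * Ak * Bᵀ := by rw [Matrix.mul_assoc]
      _ = Kᵀ * Ak * (K + V * (A * Bᵀ)) := by rw [← hBt]
      _ = F + Kᵀ * Ak * V * (A * Bᵀ) := by
          rw [Matrix.mul_add, hF, Matrix.mul_assoc (Kᵀ * Ak) V (A * Bᵀ)]
      _ = F := by rw [hKtAkV, Matrix.zero_mul, add_zero]
  -- F is positive definite
  have hFpd : F.PosDef := by
    refine Matrix.PosDef.of_dotProduct_mulVec_pos ?_ ?_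
    · rw [Matrix.IsHermitian, Matrix.conjTranspose_eq_transpose_of_trivial, hF,
        Matrix.transpose_mul, Matrix.transpose_mul, Matrix.transpose_transpose, hAkt,
        Matrix.mul_assoc]
    · intro x hx
      have hKx : K *ᵥ x ≠ 0 := by
        intro h0
        have h1 : (B * Bᵀ) *ᵥ x = 0 := by
          rw [← hBK, ← Matrix.mulVec_mulVec, h0, Matrix.mulVec_zero]
        have h2 := Matrix.mulVec_injective_iff_isUnit.mpr hBBt
        apply hx
        have := h2 (by rw [h1, Matrix.mulVec_zero] : (B * Bᵀ) *ᵥ x = (B * Bᵀ) *ᵥ 0)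
        exact this
      have key : star x ⬝ᵥ F *ᵥ x = star (K *ᵥ x) ⬝ᵥ Ak *ᵥ (K *ᵥ x) := by
        rw [hF, ← Matrix.mulVec_mulVec, ← Matrix.mulVec_mulVec]
        simp only [star_trivial]
        rw [Matrix.dotProduct_mulVec x Kᵀ, Matrix.vecMul_transpose]
      rw [key]
      exact hAk.dotProduct_mulVec_pos hKx
  have hFU : IsUnit F := hFpd.isUnit
  have hdetF : IsUnit F.det := (Matrix.isUnit_iff_isUnit_det _).mp hFU
  have hFiF : F⁻¹ * F = 1 := Matrix.nonsing_inv_mul _ hdetF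
  have hFFi : F * F⁻¹ = 1 := Matrix.mul_nonsing_inv _ hdetF
  -- the inverse of Ak
  set X : Matrix (Fin n) (Fin n) ℝ := V + K * (F⁻¹ * Kᵀ) with hX
  have hVAk : V * Ak = V * A := by
    rw [hAkdef, Matrix.mul_add, Matrix.mul_assoc Bᵀ Wk B, hVBt', add_zero]
  have hVAk' : ∀ {p : Type} (M : Matrix (Fin n) p ℝ), V * (Ak * M) = V * (A * M) := by
    intro p M; rw [← Matrix.mul_assoc, hVAk, Matrix.mul_assoc]
  have hXAk : X * Ak = 1 := by
    have h1 : (1 - X * Ak) * Bᵀ = 0 := by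
      have e1 : X * Ak * Bᵀ = Bᵀ := by
        calc X * Ak * Bᵀ = V * (Ak * Bᵀ) + K * (F⁻¹ * (Kᵀ * (Ak * Bᵀ))) := by
              simp only [hX, Matrix.add_mul, Matrix.mul_assoc]
          _ = V * (A * Bᵀ) + K := by rw [hKtAkBt, hFiF, Matrix.mul_one, hVAk']
          _ = Bᵀ := by rw [hK]; abel
      rw [Matrix.sub_mul, Matrix.one_mul, e1, sub_self]
    have h2 : (1 - X * Ak) * Z = 0 := by
      have e2 : X * Ak * Z = Z := by
        calc X * Ak * Z = V * (Ak * Z) + K * (F⁻¹ * (Kᵀ * (Ak * Z))) := by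
              simp only [hX, Matrix.add_mul, Matrix.mul_assoc]
          _ = V * (A * Z) := by rw [hKtAkZ, Matrix.mul_zero, Matrix.mul_zero, add_zero, hVAk']
          _ = Z := hVAZ
      rw [Matrix.sub_mul, Matrix.one_mul, e2, sub_self]
    have h0 := aux_eq_zero B Z hrB hrZ hBZ hBBt (1 - X * Ak) h1 h2
    exact (sub_eq_zero.mp h0).symm
  have hAkinv : Ak⁻¹ = X := Matrix.inv_eq_left_inv hXAk
  have hcan1 : ∀ {p : Type} (M : Matrix (Fin m) p ℝ), (B * Bᵀ)⁻¹ * (B * (Bᵀ * M)) = M := by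
    intro p M
    rw [← Matrix.mul_assoc, ← Matrix.mul_assoc, Matrix.mul_assoc (B * Bᵀ)⁻¹ B Bᵀ,
      Matrix.nonsing_inv_mul _ hdetBBt, Matrix.one_mul]
  have hcan2 : B * (Bᵀ * (B * Bᵀ)⁻¹) = 1 := by
    rw [← Matrix.mul_assoc, Matrix.mul_nonsing_inv _ hdetBBt]
  have hFeq : F = B * (A * Bᵀ) - B * (A * (V * (A * Bᵀ))) + B * (Bᵀ * (Wk * (B * Bᵀ))) := by
    rw [hF, hKt, hK, hAkdef]
    simp only [Matrix.mul_sub, Matrix.sub_mul, Matrix.mul_add, Matrix.add_mul, Matrix.mul_assoc,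
      hVAV', hVBt', hBV', Matrix.mul_zero, Matrix.zero_mul, sub_zero]
    abel
  have hSchur : B * Ak⁻¹ * Bᵀ = B * Bᵀ * F⁻¹ * (B * Bᵀ) := by
    rw [hAkinv, hX, Matrix.mul_add, Matrix.add_mul, hBV, Matrix.zero_mul, zero_add,
      ← Matrix.mul_assoc B K, hBK, ← Matrix.mul_assoc (B * Bᵀ) F⁻¹ Kᵀ,
      Matrix.mul_assoc (B * Bᵀ * F⁻¹) Kᵀ Bᵀ, hKtBt]
  constructor
  · rw [hSchur]
    exact (hBBt.mul hFpd.inv.isUnit).mul hBBt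
  · rw [hSchur, Matrix.mul_inv_rev (B * Bᵀ * F⁻¹) (B * Bᵀ), Matrix.mul_inv_rev (B * Bᵀ) F⁻¹,
      Matrix.nonsing_inv_nonsing_inv F hdetF, hFeq]
    simp only [Matrix.sub_mul, Matrix.add_mul, Matrix.mul_sub, Matrix.mul_add, Matrix.mul_assoc,
      hcan1, hcan2, Matrix.mul_one, Matrix.one_mul]
    abel
end

section
/- Let n, m, k be positive integers with k < m < n. Let A be an n×n real symmetric positive semidefinite matrix with rank(A) = n − k, let B be an m×n real matrix with rank m, and let W_k be an m×m real symmetric positive semidefinite matrix of rank k such that A_k = A + BᵀW_kB is symmetric positive definite. Let Z be an n×(n−m) real matrix whose columns form a basis of the kernel of B, suppose ZᵀAZ is invertible, and set V = Z(ZᵀAZ)⁻¹Zᵀ and S_k = B·A_k⁻¹·Bᵀ. Then S_k is invertible and A_k⁻¹·Bᵀ·S_k⁻¹·B = I_n − V·A. -/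
open Matrix

-- auxiliary: injectivity of Bᵀ *ᵥ from full row rank of B
lemma aux_transpose_mulVec_inj {n m : ℕ} (B : Matrix (Fin m) (Fin n) ℝ)
    (hrB : B.rank = m) : Function.Injective (Bᵀ.mulVec) := by
  have h1 : Bᵀ.rank = m := by rw [Matrix.rank_transpose]; exact hrB
  have h2 : Module.finrank ℝ (LinearMap.range Bᵀ.mulVecLin) +
      Module.finrank ℝ (LinearMap.ker Bᵀ.mulVecLin) = m := by
    rw [LinearMap.finrank_range_add_finrank_ker]
    simp [Module.finrank_fintype_fun_eq_card]
  have h3 : Module.finrank ℝ (LinearMap.ker Bᵀ.mulVecLin) = 0 := by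
    have : Module.finrank ℝ (LinearMap.range Bᵀ.mulVecLin) = m := h1
    omega
  have hker : LinearMap.ker Bᵀ.mulVecLin = ⊥ :=
    Submodule.finrank_eq_zero.mp h3
  have := LinearMap.ker_eq_bot.mp hker
  exact this

lemma aux_range_eq_ker {n m : ℕ} (hmn : m < n) (B : Matrix (Fin m) (Fin n) ℝ)
    (Z : Matrix (Fin n) (Fin (n - m)) ℝ) (hrB : B.rank = m) (hrZ : Z.rank = n - m)
    (hBZ : B * Z = 0) :
    LinearMap.range Z.mulVecLin = LinearMap.ker B.mulVecLin := by
  apply Submodule.eq_of_le_of_finrank_eq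
  · rintro x ⟨v, rfl⟩
    simp only [LinearMap.mem_ker, ← Matrix.mulVecLin_mul, ← LinearMap.comp_apply]
    rw [hBZ]
    simp
  · have h2 : Module.finrank ℝ (LinearMap.range B.mulVecLin) +
        Module.finrank ℝ (LinearMap.ker B.mulVecLin) = n := by
      rw [LinearMap.finrank_range_add_finrank_ker]
      simp [Module.finrank_fintype_fun_eq_card]
    have h1 : Module.finrank ℝ (LinearMap.range B.mulVecLin) = m := hrB
    have h3 : Module.finrank ℝ (LinearMap.range Z.mulVecLin) = n - m := hrZ
    omega


/-- with `rank A = n - k`, `A_k = A + BᵀW_kB` positive definite,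
`V = Z (ZᵀAZ)⁻¹ Zᵀ` and `S_k = B A_k⁻¹ Bᵀ`, the matrix `S_k` is invertible and
`A_k⁻¹ Bᵀ S_k⁻¹ B = I - V A`. -/
theorem Ak_inv_Bt_Sk_inv_B {n m k : ℕ}
    (hk : 0 < k) (hkm : k < m) (hmn : m < n)
    (A : Matrix (Fin n) (Fin n) ℝ) (B : Matrix (Fin m) (Fin n) ℝ)
    (Wk : Matrix (Fin m) (Fin m) ℝ)
    (hA : A.PosSemidef) (hrA : A.rank = n - k) (hrB : B.rank = m)
    (hWk : Wk.PosSemidef) (hrWk : Wk.rank = k)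
    (hAk : (A + Bᵀ * Wk * B).PosDef)
    (Z : Matrix (Fin n) (Fin (n - m)) ℝ) (hBZ : B * Z = 0) (hrZ : Z.rank = n - m)
    (hZAZ : IsUnit (Zᵀ * A * Z)) :
    IsUnit (B * (A + Bᵀ * Wk * B)⁻¹ * Bᵀ) ∧
    (A + Bᵀ * Wk * B)⁻¹ * Bᵀ * (B * (A + Bᵀ * Wk * B)⁻¹ * Bᵀ)⁻¹ * B =
      1 - (Z * (Zᵀ * A * Z)⁻¹ * Zᵀ) * A := by
    classical
  set Ak := A + Bᵀ * Wk * B with hAkdef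
  set Sk := B * Ak⁻¹ * Bᵀ with hSkdef
  set G := Zᵀ * A * Z with hGdef
  -- Ak is invertible
  have hAkU : IsUnit Ak := by
    rw [Matrix.isUnit_iff_isUnit_det]
    exact isUnit_iff_ne_zero.mpr hAk.det_pos.ne'
  have hAkd : IsUnit Ak.det := (Matrix.isUnit_iff_isUnit_det Ak).mp hAkU
  have hAkinv : (Ak⁻¹).PosDef := hAk.inv
  -- Sk is positive definite, hence invertible
  have hBtinj : Function.Injective (Bᵀ.mulVec) := aux_transpose_mulVec_inj B hrB
  have hSkPD : Sk.PosDef := by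
    refine Matrix.PosDef.of_dotProduct_mulVec_pos ?_ ?_
    · have := (hAkinv.posSemidef.mul_mul_conjTranspose_same B).1
      simpa [Matrix.conjTranspose_eq_transpose_of_trivial] using this
    · intro x hx
      have hy : Bᵀ.mulVec x ≠ 0 := by
        intro h
        exact hx (hBtinj (by simpa using h))
      have := hAkinv.dotProduct_mulVec_pos hy
      simpa [hSkdef, ← Matrix.mulVec_mulVec, dotProduct_mulVec,
        ← Matrix.mulVec_transpose] using this
  have hSkU : IsUnit Sk := by
    rw [Matrix.isUnit_iff_isUnit_det]
    exact isUnit_iff_ne_zero.mpr hSkPD.det_pos.ne'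
  have hSkd : IsUnit Sk.det := (Matrix.isUnit_iff_isUnit_det Sk).mp hSkU
  have hGd : IsUnit G.det := (Matrix.isUnit_iff_isUnit_det G).mp hZAZ
  refine ⟨hSkU, ?_⟩
  -- ZᵀBᵀ = 0, so Zᵀ Ak = Zᵀ A
  have hZBt : Zᵀ * Bᵀ = 0 := by
    have := congrArg Matrix.transpose hBZ
    simpa [Matrix.transpose_mul] using this
  have hZAk : Zᵀ * Ak = Zᵀ * A := by
    rw [hAkdef, Matrix.mul_add]
    have h0 : Zᵀ * (Bᵀ * Wk * B) = 0 := by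
      have e : Zᵀ * (Bᵀ * Wk * B) = (Zᵀ * Bᵀ) * (Wk * B) := by
        simp only [Matrix.mul_assoc]
      rw [e, hZBt, Matrix.zero_mul]
    rw [h0, add_zero]
  -- the two projection summands
  set X := Ak⁻¹ * Bᵀ * Sk⁻¹ * B with hXdef
  set Y := Z * G⁻¹ * Zᵀ * A with hYdef
  set N : Matrix (Fin n) (Fin n) ℝ := 1 - X - Y with hNdef
  -- B * N = 0
  have hBX : B * X = B := by
    have e : B * X = Sk * (Sk⁻¹ * B) := by
      rw [hXdef, hSkdef]; simp only [Matrix.mul_assoc]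
    rw [e, Matrix.mul_nonsing_inv_cancel_left _ _ hSkd]
  have hBY : B * Y = 0 := by
    have e : B * Y = (B * Z) * (G⁻¹ * (Zᵀ * A)) := by
      rw [hYdef]; simp only [Matrix.mul_assoc]
    rw [e, hBZ, Matrix.zero_mul]
  have hBN : B * N = 0 := by
    rw [hNdef, Matrix.mul_sub, Matrix.mul_sub, Matrix.mul_one, hBX, hBY,
      sub_self, sub_zero]
  -- (Zᵀ A) * N = 0
  have hZAX : (Zᵀ * A) * X = 0 := by
    have e1 : (Zᵀ * A) * X = (Zᵀ * Ak) * X := by rw [hZAk]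
    have e2 : (Zᵀ * Ak) * X = Zᵀ * (Ak * (Ak⁻¹ * (Bᵀ * (Sk⁻¹ * B)))) := by
      rw [hXdef]; simp only [Matrix.mul_assoc]
    have e3 : Zᵀ * (Bᵀ * (Sk⁻¹ * B)) = (Zᵀ * Bᵀ) * (Sk⁻¹ * B) :=
      (Matrix.mul_assoc _ _ _).symm
    rw [e1, e2, Matrix.mul_nonsing_inv_cancel_left _ _ hAkd, e3, hZBt,
      Matrix.zero_mul]
  have hZAY : (Zᵀ * A) * Y = Zᵀ * A := by
    have e : (Zᵀ * A) * Y = G * (G⁻¹ * (Zᵀ * A)) := by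
      rw [hYdef, hGdef]; simp only [Matrix.mul_assoc]
    rw [e, Matrix.mul_nonsing_inv_cancel_left _ _ hGd]
  have hZAN : (Zᵀ * A) * N = 0 := by
    rw [hNdef, Matrix.mul_sub, Matrix.mul_sub, Matrix.mul_one, hZAX, hZAY,
      sub_zero, sub_self]
  -- columns of N vanish
  have hN : N = 0 := by
    ext i j
    have hx : B.mulVecLin (fun l => N l j) = 0 := by
      ext i'
      have h0 : (B * N) i' j = 0 := by rw [hBN]; rfl
      simpa [Matrix.mulVecLin, Matrix.mulVec, Matrix.mul_apply,
        dotProduct] using h0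
    have hmem : (fun l => N l j) ∈ LinearMap.range Z.mulVecLin := by
      rw [aux_range_eq_ker hmn B Z hrB hrZ hBZ]
      exact hx
    obtain ⟨w, hw⟩ := hmem
    have hGw : G.mulVec w = 0 := by
      have h0 : (Zᵀ * A).mulVec (fun l => N l j) = 0 := by
        ext i'
        have h1 : ((Zᵀ * A) * N) i' j = 0 := by rw [hZAN]; rfl
        simpa [Matrix.mulVec, Matrix.mul_apply, dotProduct] using h1
      have h2 : (Zᵀ * A).mulVec (Z.mulVec w) = 0 := by
        rw [show Z.mulVec w = (fun l => N l j) from hw]; exact h0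
      rw [Matrix.mulVec_mulVec] at h2
      rw [hGdef]
      exact h2
    have hw0 : w = 0 := by
      have hinj : Function.Injective (G.mulVec) :=
        (Matrix.mulVec_injective_iff_isUnit).mpr hZAZ
      apply hinj
      simpa using hGw
    have hcol : (fun l => N l j) = (0 : Fin n → ℝ) := by
      rw [← hw, hw0]; simp
    have := congrFun hcol i
    simpa using this
  -- conclude
  have h : (1 - Y) - X = 0 := by rw [← hN, hNdef]; abel
  exact (sub_eq_zero.mp h).symm
end

section
/- Let n, m, k be positive integers with k < m < n. Let A be an n×n real symmetric positive semidefinite matrix with rank(A) = n − k, let B be an m×n real matrix with rank m such that K = [[A, Bᵀ],[B, 0]] is invertible, and let W_k be an m×m real symmetric positive semidefinite matrix of rank k such that A_k = A + BᵀW_kB is symmetric positive definite. Set S_k = B·A_k⁻¹·Bᵀ, M_k = [[A_k, 0],[0, S_k]] (block diagonal), and T = M_k⁻¹·K. Then (T + I)·(T − I)·(T² − T − I) = 0, where I is the (n+m)×(n+m) identity matrix; consequently every eigenvalue of T lies in {−1, 1, (1+√5)/2, (1−√5)/2}. -/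
open Matrix

lemma extMulVec {p q : Type*} [Fintype q] [DecidableEq q] {M N : Matrix p q ℝ}
    (h : ∀ x, M *ᵥ x = N *ᵥ x) : M = N := by
  ext i j
  simpa [Matrix.mulVec_single] using congr_fun (h (Pi.single j 1)) i

lemma cancelLeft {p q r : Type*} [Fintype q] [Fintype p] [Fintype r] [DecidableEq q]
    [DecidableEq r]
    (L : Matrix p q ℝ) (hL : ∀ v, L *ᵥ v = 0 → v = 0) {M N : Matrix q r ℝ}
    (h : L * M = L * N) : M = N := by
  apply extMulVec
  intro x
  have h1 : L *ᵥ (M *ᵥ x - N *ᵥ x) = 0 := by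
    rw [Matrix.mulVec_sub, Matrix.mulVec_mulVec, Matrix.mulVec_mulVec, h, sub_self]
  exact sub_eq_zero.mp (hL _ h1)

lemma posDefConj {q p : Type*} [Fintype q] [Fintype p] [DecidableEq q] [DecidableEq p]
    (M : Matrix q q ℝ) (hM : M.PosDef) (B : Matrix p q ℝ)
    (hB : ∀ v, Bᵀ *ᵥ v = 0 → v = 0) : (B * (M * Bᵀ)).PosDef := by
  have hpsd : (B * M * Bᵀ).PosSemidef := by
    have := hM.posSemidef.mul_mul_conjTranspose_same B
    rwa [Matrix.conjTranspose_eq_transpose_of_trivial] at this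
  rw [Matrix.posDef_iff_dotProduct_mulVec]
  constructor
  · have := hpsd.isHermitian
    rwa [Matrix.mul_assoc] at this
  · intro x hx
    have hy : Bᵀ *ᵥ x ≠ 0 := fun h => hx (hB x h)
    have key : star x ⬝ᵥ (B * (M * Bᵀ)) *ᵥ x
        = star (Bᵀ *ᵥ x) ⬝ᵥ M *ᵥ (Bᵀ *ᵥ x) := by
      rw [← Matrix.mulVec_mulVec, ← Matrix.mulVec_mulVec]
      simp only [star_trivial]
      rw [Matrix.dotProduct_mulVec x B, ← Matrix.mulVec_transpose]
    rw [key]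
    exact hM.dotProduct_mulVec_pos hy

/-- crux: if A is psd with rank n-k, G has rank ≤ k, and A+G is invertible, then G(A+G)⁻¹G = G. -/
lemma cruxLemma {n k : ℕ} (hkn : k ≤ n) (A G : Matrix (Fin n) (Fin n) ℝ)
    (hrA : A.rank = n - k) (hrG : G.rank ≤ k)
    (hAk : IsUnit (A + G)) : G * (A + G)⁻¹ * G = G := by
  set Ak := A + G with hAkdef
  have hdet : IsUnit Ak.det := (Matrix.isUnit_iff_isUnit_det Ak).mp hAk
  have hinv : Ak⁻¹ * Ak = 1 := Matrix.nonsing_inv_mul Ak hdet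
  have hrn : ∀ M : Matrix (Fin n) (Fin n) ℝ,
      M.rank + Module.finrank ℝ (LinearMap.ker M.mulVecLin) = n := by
    intro M
    have := LinearMap.finrank_range_add_finrank_ker M.mulVecLin
    simpa [Matrix.rank] using this
  have hKAdim : Module.finrank ℝ (LinearMap.ker A.mulVecLin) = k := by
    have := hrn A; rw [hrA] at this; omega
  have hKGdim : n - k ≤ Module.finrank ℝ (LinearMap.ker G.mulVecLin) := by
    have := hrn G; omega
  have hinf : LinearMap.ker A.mulVecLin ⊓ LinearMap.ker G.mulVecLin = ⊥ := by
    rw [Submodule.eq_bot_iff]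
    rintro x ⟨hxA, hxG⟩
    have hxA' : A *ᵥ x = 0 := hxA
    have hxG' : G *ᵥ x = 0 := hxG
    have h0 : Ak *ᵥ x = 0 := by rw [hAkdef, Matrix.add_mulVec, hxA', hxG', add_zero]
    calc x = (Ak⁻¹ * Ak) *ᵥ x := by rw [hinv, Matrix.one_mulVec]
    _ = Ak⁻¹ *ᵥ (Ak *ᵥ x) := by rw [Matrix.mulVec_mulVec]
    _ = 0 := by rw [h0, Matrix.mulVec_zero]
  have hsup : LinearMap.ker A.mulVecLin ⊔ LinearMap.ker G.mulVecLin = ⊤ := by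
    apply Submodule.eq_top_of_finrank_eq
    have hle : Module.finrank ℝ
        (LinearMap.ker A.mulVecLin ⊔ LinearMap.ker G.mulVecLin : Submodule ℝ (Fin n → ℝ)) ≤
        Module.finrank ℝ (Fin n → ℝ) := Submodule.finrank_le _
    have heq := Submodule.finrank_sup_add_finrank_inf_eq
      (LinearMap.ker A.mulVecLin) (LinearMap.ker G.mulVecLin)
    rw [hinf] at heq
    simp only [finrank_bot, add_zero] at heq
    have hfr : Module.finrank ℝ (Fin n → ℝ) = n := by simp
    omega
  apply extMulVec
  intro x
  have hx : x ∈ LinearMap.ker A.mulVecLin ⊔ LinearMap.ker G.mulVecLin := by rw [hsup]; trivial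
  obtain ⟨u, hu, v, hv, rfl⟩ := Submodule.mem_sup.mp hx
  have hu' : A *ᵥ u = 0 := hu
  have hv' : G *ᵥ v = 0 := hv
  have hGu : G *ᵥ u = Ak *ᵥ u := by rw [hAkdef, Matrix.add_mulVec, hu', zero_add]
  have key : (G * Ak⁻¹ * G) *ᵥ u = G *ᵥ u := by
    conv_lhs => rw [← Matrix.mulVec_mulVec, hGu, Matrix.mulVec_mulVec, Matrix.mul_assoc,
      hinv, Matrix.mul_one]
  have keyv : (G * Ak⁻¹ * G) *ᵥ v = 0 := by
    rw [← Matrix.mulVec_mulVec, hv', Matrix.mulVec_zero]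
  rw [Matrix.mulVec_add, Matrix.mulVec_add, key, keyv, hv', add_zero]
theorem blockAux {n m : Type} [Fintype n] [Fintype m] [DecidableEq n] [DecidableEq m]
    (E : Matrix n n ℝ) (X : Matrix n m ℝ) (Y : Matrix m n ℝ)
    (h1 : Y * X = 1) (h2 : E * E = E) (h3 : E * X * Y = E) (h4 : X * (Y * E) = E) :
    (fromBlocks (1 - E) X Y 0 + 1) * (fromBlocks (1 - E) X Y 0 - 1) *
      (fromBlocks (1 - E) X Y 0 * fromBlocks (1 - E) X Y 0 - fromBlocks (1 - E) X Y 0 - 1) = 0 := by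
  have h4' : X * Y * E = E := by rw [Matrix.mul_assoc, h4]
  have h3' : E * (X * Y) = E := by rw [← Matrix.mul_assoc, h3]
  have e1 : ∀ {p : Type} (C : Matrix m p ℝ), Y * (X * C) = C := by
    intro p C; rw [← Matrix.mul_assoc, h1, Matrix.one_mul]
  have e2 : ∀ {p : Type} (C : Matrix n p ℝ), E * (E * C) = E * C := by
    intro p C; rw [← Matrix.mul_assoc, h2]
  have e3 : ∀ {p : Type} (C : Matrix n p ℝ), E * (X * (Y * C)) = E * C := by
    intro p C; rw [← Matrix.mul_assoc, ← Matrix.mul_assoc, h3]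
  have e4 : ∀ {p : Type} (C : Matrix n p ℝ), X * (Y * (E * C)) = E * C := by
    intro p C; rw [← Matrix.mul_assoc, ← Matrix.mul_assoc, h4']
  rw [← fromBlocks_one, ← fromBlocks_zero]
  simp only [sub_eq_add_neg, fromBlocks_neg, fromBlocks_multiply, fromBlocks_add]
  rw [fromBlocks_inj]
  refine ⟨?_, ?_, ?_, ?_⟩ <;>
    simp only [Matrix.mul_add, Matrix.add_mul, Matrix.mul_neg, Matrix.neg_mul, neg_neg,
      Matrix.mul_assoc, Matrix.mul_one, Matrix.one_mul, Matrix.mul_zero, Matrix.zero_mul,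
      add_zero, zero_add, neg_zero, e1, e2, e3, e4, h1, h2, h3, h4, h3', h4'] <;>
    abel

/-- The preconditioned operator `T = M_k⁻¹ K` where `K = [[A, Bᵀ],[B, 0]]`,
`A_k = A + BᵀW_kB`, `S_k = B A_k⁻¹ Bᵀ` and `M_k = [[A_k, 0],[0, S_k]]`. -/
noncomputable def precondTk {n m : ℕ} (A : Matrix (Fin n) (Fin n) ℝ)
    (B : Matrix (Fin m) (Fin n) ℝ) (Wk : Matrix (Fin m) (Fin m) ℝ) :
    Matrix (Fin n ⊕ Fin m) (Fin n ⊕ Fin m) ℝ :=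
  (Matrix.fromBlocks (A + Bᵀ * Wk * B) 0 0
      (B * (A + Bᵀ * Wk * B)⁻¹ * Bᵀ))⁻¹ * Matrix.fromBlocks A Bᵀ B 0

/-- the preconditioned operator `T = M_k⁻¹ K` satisfies the polynomial
identity `(T + I)(T - I)(T² - T - I) = 0`; consequently every eigenvalue of `T` lies in
`{-1, 1, (1 + √5)/2, (1 - √5)/2}`. -/
theorem precondTk_annihilating_polynomial {n m k : ℕ}
    (hk : 0 < k) (hkm : k < m) (hmn : m < n)
    (A : Matrix (Fin n) (Fin n) ℝ) (B : Matrix (Fin m) (Fin n) ℝ)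
    (Wk : Matrix (Fin m) (Fin m) ℝ)
    (hA : A.PosSemidef) (hrA : A.rank = n - k) (hrB : B.rank = m)
    (hK : IsUnit (Matrix.fromBlocks A Bᵀ B 0))
    (hWk : Wk.PosSemidef) (hrWk : Wk.rank = k)
    (hAk : (A + Bᵀ * Wk * B).PosDef) :
    (precondTk A B Wk + 1) * (precondTk A B Wk - 1) *
        (precondTk A B Wk * precondTk A B Wk - precondTk A B Wk - 1) = 0 ∧
    ∀ (μ : ℝ) (x : Fin n ⊕ Fin m → ℝ), x ≠ 0 → precondTk A B Wk *ᵥ x = μ • x →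
      μ = -1 ∨ μ = 1 ∨ μ = (1 + Real.sqrt 5) / 2 ∨ μ = (1 - Real.sqrt 5) / 2 := by
  have hkn : k ≤ n := le_of_lt (hkm.trans hmn)
  set Ak : Matrix (Fin n) (Fin n) ℝ := A + Bᵀ * (Wk * B) with hAkdef
  have hAk' : Ak.PosDef := by rw [hAkdef, ← Matrix.mul_assoc]; exact hAk
  have hdAk : IsUnit Ak.det := (Matrix.isUnit_iff_isUnit_det _).mp hAk'.isUnit
  have hAA : Ak⁻¹ * Ak = 1 := Matrix.nonsing_inv_mul Ak hdAk
  have hAA' : Ak * Ak⁻¹ = 1 := Matrix.mul_nonsing_inv Ak hdAk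
  have hAkinv : Ak⁻¹.PosDef := hAk'.inv
  -- Bᵀ has trivial kernel
  have hBinj : ∀ v, Bᵀ *ᵥ v = 0 → v = 0 := by
    have hrBt : Bᵀ.rank = m := by rw [Matrix.rank_transpose]; exact hrB
    have hrn := LinearMap.finrank_range_add_finrank_ker Bᵀ.mulVecLin
    have hrange : Module.finrank ℝ (LinearMap.range Bᵀ.mulVecLin) = m := hrBt
    have hdom : Module.finrank ℝ (Fin m → ℝ) = m := by simp
    have hker : LinearMap.ker Bᵀ.mulVecLin = ⊥ := by
      apply Submodule.finrank_eq_zero.mp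
      omega
    intro v hv
    have : v ∈ LinearMap.ker Bᵀ.mulVecLin := hv
    rwa [hker, Submodule.mem_bot] at this
  set S : Matrix (Fin m) (Fin m) ℝ := B * (Ak⁻¹ * Bᵀ) with hSdef
  have hS : S.PosDef := posDefConj _ hAkinv B hBinj
  have hdS : IsUnit S.det := (Matrix.isUnit_iff_isUnit_det _).mp hS.isUnit
  have hSS : S⁻¹ * S = 1 := Matrix.nonsing_inv_mul S hdS
  have hSS' : S * S⁻¹ = 1 := Matrix.mul_nonsing_inv S hdS
  -- crux identity
  have hGr : (Bᵀ * (Wk * B)).rank ≤ k := by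
    calc (Bᵀ * (Wk * B)).rank ≤ (Wk * B).rank := Matrix.rank_mul_le_right _ _
    _ ≤ Wk.rank := Matrix.rank_mul_le_left _ _
    _ = k := hrWk
  have hGSG : (Bᵀ * (Wk * B)) * (A + Bᵀ * (Wk * B))⁻¹ * (Bᵀ * (Wk * B)) = Bᵀ * (Wk * B) :=
    cruxLemma hkn A (Bᵀ * (Wk * B)) hrA hGr (by rw [← hAkdef]; exact hAk'.isUnit)
  rw [← hAkdef] at hGSG
  have c2 : Wk * (B * (Ak⁻¹ * (Bᵀ * (Wk * B)))) = Wk * B := by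
    apply cancelLeft Bᵀ hBinj
    simp only [Matrix.mul_assoc] at hGSG ⊢
    exact hGSG
  have c4' : B * (Ak⁻¹ * (Bᵀ * (S⁻¹ * B))) = B := by
    have hfold : B * (Ak⁻¹ * (Bᵀ * (S⁻¹ * B))) = S * (S⁻¹ * B) := by
      rw [hSdef]; simp only [Matrix.mul_assoc]
    rw [hfold, ← Matrix.mul_assoc, hSS', Matrix.one_mul]
  have c3' : S⁻¹ * (B * (Ak⁻¹ * (Bᵀ * (Wk * B)))) = Wk * B := by
    have hfold : B * (Ak⁻¹ * (Bᵀ * (Wk * B))) = S * (Wk * B) := by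
      rw [hSdef]; simp only [Matrix.mul_assoc]
    rw [hfold, ← Matrix.mul_assoc, hSS, Matrix.one_mul]
  -- the blocks
  have h1 : (S⁻¹ * B) * (Ak⁻¹ * Bᵀ) = 1 := by
    have : (S⁻¹ * B) * (Ak⁻¹ * Bᵀ) = S⁻¹ * S := by
      rw [hSdef]; simp only [Matrix.mul_assoc]
    rw [this, hSS]
  have h2 : (Ak⁻¹ * (Bᵀ * (Wk * B))) * (Ak⁻¹ * (Bᵀ * (Wk * B))) = Ak⁻¹ * (Bᵀ * (Wk * B)) := by
    calc (Ak⁻¹ * (Bᵀ * (Wk * B))) * (Ak⁻¹ * (Bᵀ * (Wk * B)))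
        = Ak⁻¹ * (Bᵀ * (Wk * (B * (Ak⁻¹ * (Bᵀ * (Wk * B)))))) := by
          simp only [Matrix.mul_assoc]
    _ = Ak⁻¹ * (Bᵀ * (Wk * B)) := by rw [c2]
  have h3 : (Ak⁻¹ * (Bᵀ * (Wk * B))) * (Ak⁻¹ * Bᵀ) * (S⁻¹ * B) = Ak⁻¹ * (Bᵀ * (Wk * B)) := by
    calc (Ak⁻¹ * (Bᵀ * (Wk * B))) * (Ak⁻¹ * Bᵀ) * (S⁻¹ * B)
        = Ak⁻¹ * (Bᵀ * (Wk * (B * (Ak⁻¹ * (Bᵀ * (S⁻¹ * B)))))) := by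
          simp only [Matrix.mul_assoc]
    _ = Ak⁻¹ * (Bᵀ * (Wk * B)) := by rw [c4']
  have h4 : (Ak⁻¹ * Bᵀ) * ((S⁻¹ * B) * (Ak⁻¹ * (Bᵀ * (Wk * B)))) = Ak⁻¹ * (Bᵀ * (Wk * B)) := by
    calc (Ak⁻¹ * Bᵀ) * ((S⁻¹ * B) * (Ak⁻¹ * (Bᵀ * (Wk * B))))
        = Ak⁻¹ * (Bᵀ * (S⁻¹ * (B * (Ak⁻¹ * (Bᵀ * (Wk * B)))))) := by
          simp only [Matrix.mul_assoc]
    _ = Ak⁻¹ * (Bᵀ * (Wk * B)) := by rw [c3']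
  -- identify T
  have hT : precondTk A B Wk
      = fromBlocks (1 - Ak⁻¹ * (Bᵀ * (Wk * B))) (Ak⁻¹ * Bᵀ) (S⁻¹ * B) 0 := by
    unfold precondTk
    rw [show A + Bᵀ * Wk * B = Ak from by rw [hAkdef, Matrix.mul_assoc]]
    rw [show B * Ak⁻¹ * Bᵀ = S from by rw [hSdef, Matrix.mul_assoc]]
    have hMk : (fromBlocks Ak 0 0 S)⁻¹
        = fromBlocks Ak⁻¹ (0 : Matrix (Fin n) (Fin m) ℝ) (0 : Matrix (Fin m) (Fin n) ℝ) S⁻¹ := by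
      apply Matrix.inv_eq_right_inv
      rw [fromBlocks_multiply]
      simp only [Matrix.mul_zero, Matrix.zero_mul, add_zero, zero_add, hAA', hSS',
        fromBlocks_one]
    rw [hMk, fromBlocks_multiply]
    have hA1 : Ak⁻¹ * A = 1 - Ak⁻¹ * (Bᵀ * (Wk * B)) := by
      conv_lhs => rw [show A = Ak - Bᵀ * (Wk * B) from by rw [hAkdef, add_sub_cancel_right]]
      rw [mul_sub, hAA]
    simp only [Matrix.mul_zero, Matrix.zero_mul, add_zero, zero_add, hA1]
  have hpoly : (precondTk A B Wk + 1) * (precondTk A B Wk - 1) *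
      (precondTk A B Wk * precondTk A B Wk - precondTk A B Wk - 1) = 0 := by
    rw [hT]
    exact blockAux _ _ _ h1 h2 h3 h4
  refine ⟨hpoly, ?_⟩
  intro μ x hx hTx
  set T := precondTk A B Wk with hTdef
  have hT2 : (T * T) *ᵥ x = (μ * μ) • x := by
    rw [← Matrix.mulVec_mulVec, hTx, Matrix.mulVec_smul, hTx, smul_smul]
  have e3 : (T * T - T - 1) *ᵥ x = (μ * μ - μ - 1) • x := by
    rw [Matrix.sub_mulVec, Matrix.sub_mulVec, hT2, hTx, Matrix.one_mulVec,
      sub_smul, sub_smul, one_smul]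
  have e1 : (T - 1) *ᵥ x = (μ - 1) • x := by
    rw [Matrix.sub_mulVec, hTx, Matrix.one_mulVec, sub_smul, one_smul]
  have e2 : (T + 1) *ᵥ x = (μ + 1) • x := by
    rw [Matrix.add_mulVec, hTx, Matrix.one_mulVec, add_smul, one_smul]
  have hchain : (T + 1) *ᵥ ((T - 1) *ᵥ ((T * T - T - 1) *ᵥ x))
      = ((μ + 1) * ((μ - 1) * (μ * μ - μ - 1))) • x := by
    rw [e3, Matrix.mulVec_smul, e1, Matrix.mulVec_smul, Matrix.mulVec_smul, e2, smul_smul, smul_smul]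
    congr 1
    ring
  have hzero : ((μ + 1) * ((μ - 1) * (μ * μ - μ - 1))) • x = 0 := by
    rw [← hchain, Matrix.mulVec_mulVec, Matrix.mulVec_mulVec, hpoly, Matrix.zero_mulVec]
  have hsc : (μ + 1) * ((μ - 1) * (μ * μ - μ - 1)) = 0 :=
    (smul_eq_zero.mp hzero).resolve_right hx
  rcases mul_eq_zero.mp hsc with h | h
  · left; linarith
  rcases mul_eq_zero.mp h with h | h
  · right; left; linarith
  · have h5 : Real.sqrt 5 ^ 2 = 5 := Real.sq_sqrt (by norm_num)
    have hfac : (μ - (1 + Real.sqrt 5) / 2) * (μ - (1 - Real.sqrt 5) / 2) = 0 := by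
      linear_combination h - (1/4) * h5
    rcases mul_eq_zero.mp hfac with h' | h'
    · right; right; left; linarith
    · right; right; right; linarith
end

section
/- Let n, m, k be positive integers with k < m < n. Let A be an n×n real symmetric positive semidefinite matrix with rank(A) = n − k, let B be an m×n real matrix with rank m such that K = [[A, Bᵀ],[B, 0]] is invertible, and let W_k be an m×m real symmetric positive semidefinite matrix of rank k such that A_k = A + BᵀW_kB is symmetric positive definite. Set S_k = B·A_k⁻¹·Bᵀ, M_k = [[A_k, 0],[0, S_k]] (block diagonal), and T = M_k⁻¹·K. Then the kernel of T + I has dimension k, the kernel of T − I has dimension n − m + k, and the kernel of T² − T − I has dimension 2(m − k); that is, T has eigenvalue −1 with multiplicity k, eigenvalue 1 with multiplicity n − m + k, and eigenvalues (1±√5)/2 each with multiplicity m − k. -/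
open Matrix


section AuxLemmas

variable {n m : ℕ}

private lemma dot_symm (M : Matrix (Fin n) (Fin n) ℝ) (hM : Mᵀ = M) (a b : Fin n → ℝ) :
    a ⬝ᵥ M *ᵥ b = (M *ᵥ a) ⬝ᵥ b := by
  rw [dotProduct_mulVec, ← mulVec_transpose, hM]

private lemma dot_transpose (M : Matrix (Fin m) (Fin n) ℝ) (y : Fin m → ℝ) (x : Fin n → ℝ) :
    (Mᵀ *ᵥ y) ⬝ᵥ x = y ⬝ᵥ (M *ᵥ x) := by
  rw [mulVec_transpose, ← dotProduct_mulVec]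

private lemma nullity_add_rank {p q : ℕ} (M : Matrix (Fin p) (Fin q) ℝ) :
    Module.finrank ℝ (LinearMap.ker M.mulVecLin) + M.rank = q := by
  have h := LinearMap.finrank_range_add_finrank_ker M.mulVecLin
  rw [Module.finrank_pi, Fintype.card_fin] at h
  have h2 : M.rank = Module.finrank ℝ (LinearMap.range M.mulVecLin) := rfl
  omega

private lemma eq_zero_of_mulVec_eq_zero {p q : ℕ} (M : Matrix (Fin p) (Fin q) ℝ)
    (h : ∀ v, M *ᵥ v = 0) : M = 0 := by
  ext i j
  have := congrFun (h (Pi.single j 1)) i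
  simpa [mulVec_single] using this

private lemma rank_W {n m k : ℕ} (B : Matrix (Fin m) (Fin n) ℝ)
    (Wk : Matrix (Fin m) (Fin m) ℝ) (hWk : Wk.PosSemidef) (hrWk : Wk.rank = k)
    (hrB : B.rank = m) : (Bᵀ * Wk * B).rank = k := by
  obtain ⟨C, hC⟩ : ∃ C : Matrix (Fin m) (Fin m) ℝ, Wk = Cᴴ * C :=
    by open scoped MatrixOrder Matrix.Norms.L2Operator in
      exact CStarAlgebra.nonneg_iff_eq_star_mul_self.mp hWk.nonneg
  have hCt : Cᴴ = Cᵀ := conjTranspose_eq_transpose_of_trivial C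
  have hBW : Bᵀ * Wk * B = (C * B)ᵀ * (C * B) := by
    rw [hC, hCt, transpose_mul]
    simp only [Matrix.mul_assoc]
  have hrangeB : LinearMap.range B.mulVecLin = ⊤ := by
    apply Submodule.eq_top_of_finrank_eq
    have h1 : Module.finrank ℝ (Fin m → ℝ) = m := by
      rw [Module.finrank_pi, Fintype.card_fin]
    rw [h1]
    exact hrB
  have hCB : (C * B).rank = C.rank := by
    unfold Matrix.rank
    rw [mulVecLin_mul, LinearMap.range_comp_of_range_eq_top _ hrangeB]
  have hrC : C.rank = k := by
    have := rank_transpose_mul_self C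
    rw [hCt] at hC
    rw [← hC] at this
    omega
  rw [hBW, rank_transpose_mul_self, hCB, hrC]

private lemma key_zero {n m k : ℕ} (hkn : k ≤ n)
    (A : Matrix (Fin n) (Fin n) ℝ) (B : Matrix (Fin m) (Fin n) ℝ)
    (Wk : Matrix (Fin m) (Fin m) ℝ)
    (hrA : A.rank = n - k) (hrW : (Bᵀ * Wk * B).rank = k)
    (hAkd : IsUnit (A + Bᵀ * Wk * B).det) :
    A * (A + Bᵀ * Wk * B)⁻¹ * (Bᵀ * Wk * B) = 0 := by
  set W := Bᵀ * Wk * B with hW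
  set Ak := A + W with hAkdef
  have hnA : Module.finrank ℝ (LinearMap.ker A.mulVecLin) = k := by
    have := nullity_add_rank A
    rw [hrA] at this
    omega
  have hrAW : (Ak⁻¹ * W).rank = k := by
    rw [rank_mul_eq_right_of_isUnit_det _ _ (isUnit_nonsing_inv_det _ hAkd)]
    exact hrW
  have hle : LinearMap.ker A.mulVecLin ≤ LinearMap.range (Ak⁻¹ * W).mulVecLin := by
    intro x hx
    have hx' : A *ᵥ x = 0 := hx
    refine ⟨x, ?_⟩
    show (Ak⁻¹ * W) *ᵥ x = x
    have h1 : W *ᵥ x = Ak *ᵥ x := by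
      rw [hAkdef, add_mulVec, hx', zero_add]
    rw [← mulVec_mulVec, h1, mulVec_mulVec, nonsing_inv_mul _ hAkd, one_mulVec]
  have heq : LinearMap.ker A.mulVecLin = LinearMap.range (Ak⁻¹ * W).mulVecLin := by
    apply Submodule.eq_of_le_of_finrank_le hle
    have h2 : Module.finrank ℝ (LinearMap.range (Ak⁻¹ * W).mulVecLin) = k := hrAW
    omega
  have hz : ∀ v, (A * (Ak⁻¹ * W)) *ᵥ v = 0 := by
    intro v
    have hmem : (Ak⁻¹ * W).mulVecLin v ∈ LinearMap.range (Ak⁻¹ * W).mulVecLin :=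
      LinearMap.mem_range_self _ v
    rw [← heq] at hmem
    have h3 : A *ᵥ ((Ak⁻¹ * W) *ᵥ v) = 0 := hmem
    rwa [mulVec_mulVec] at h3
  have h0 : A * (Ak⁻¹ * W) = 0 := eq_zero_of_mulVec_eq_zero _ hz
  rw [← Matrix.mul_assoc] at h0
  exact h0

private noncomputable def liftL (C : Matrix (Fin m) (Fin n) ℝ) :
    (Fin n → ℝ) →ₗ[ℝ] (Fin n ⊕ Fin m → ℝ) where
  toFun x := Sum.elim x (C *ᵥ x)
  map_add' x y := by funext i; cases i <;> simp [mulVec_add]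
  map_smul' c x := by funext i; cases i <;> simp [mulVec_smul]

@[simp] private lemma liftL_apply (C : Matrix (Fin m) (Fin n) ℝ) (x : Fin n → ℝ) :
    liftL C x = Sum.elim x (C *ᵥ x) := rfl

private lemma liftL_inj (C : Matrix (Fin m) (Fin n) ℝ) : Function.Injective (liftL C) := by
  intro x y h
  funext i
  exact congrFun h (Sum.inl i)

private noncomputable def liftR : (Fin m → ℝ) →ₗ[ℝ] (Fin n ⊕ Fin m → ℝ) where
  toFun y := Sum.elim 0 y
  map_add' x y := by funext i; cases i <;> simp
  map_smul' c x := by funext i; cases i <;> simp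

@[simp] private lemma liftR_apply (y : Fin m → ℝ) :
    (liftR (n := n) y) = Sum.elim (0 : Fin n → ℝ) y := rfl

private lemma liftR_inj : Function.Injective (liftR (n := n) (m := m)) := by
  intro x y h
  funext i
  exact congrFun h (Sum.inr i)

private lemma ker_unit_mul {ι : Type*} [Fintype ι] [DecidableEq ι] (M X : Matrix ι ι ℝ)
    (hM : IsUnit M.det) :
    LinearMap.ker (M * X).mulVecLin = LinearMap.ker X.mulVecLin := by
  ext v
  simp only [LinearMap.mem_ker, mulVecLin_apply]
  constructor
  · intro hv
    rw [← mulVec_mulVec] at hv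
    have hinj := Matrix.mulVec_injective_iff_isUnit.mpr ((isUnit_iff_isUnit_det _).mpr hM)
    apply hinj
    rw [hv, mulVec_zero]
  · intro hv
    rw [← mulVec_mulVec, hv, mulVec_zero]

private lemma finrank_map_inj {V W : Type*} [AddCommGroup V] [Module ℝ V]
    [AddCommGroup W] [Module ℝ W] (f : V →ₗ[ℝ] W) (hf : Function.Injective f)
    (p : Submodule ℝ V) :
    Module.finrank ℝ (p.map f) = Module.finrank ℝ p :=
  (Submodule.equivMapOfInjective f hf p).finrank_eq.symm

private lemma rank_lmul_inj {p q r : ℕ} (M : Matrix (Fin p) (Fin q) ℝ)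
    (N : Matrix (Fin q) (Fin r) ℝ) (hM : LinearMap.ker M.mulVecLin = ⊥) :
    (M * N).rank = N.rank := by
  unfold Matrix.rank
  rw [mulVecLin_mul, LinearMap.range_comp]
  exact finrank_map_inj _ (LinearMap.ker_eq_bot.mp hM) _

private lemma X3_blocks {n m : ℕ} (A Ak W : Matrix (Fin n) (Fin n) ℝ)
    (B : Matrix (Fin m) (Fin n) ℝ) (Sk : Matrix (Fin m) (Fin m) ℝ)
    (hAksum : A + W = Ak) (hSk : B * (Ak⁻¹ * Bᵀ) = Sk)
    (hia : Ak * Ak⁻¹ = 1) (hai : Ak⁻¹ * Ak = 1) (hsi : Sk⁻¹ * Sk = 1)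
    (keyAA : A * Ak⁻¹ * A = A) :
    fromBlocks A Bᵀ B 0 * fromBlocks Ak⁻¹ 0 0 Sk⁻¹ * fromBlocks A Bᵀ B 0
      - fromBlocks A Bᵀ B 0 - fromBlocks Ak 0 0 Sk
    = fromBlocks (Bᵀ * (Sk⁻¹ * B) - Ak) (-(W * (Ak⁻¹ * Bᵀ)))
        (-(B * (Ak⁻¹ * W))) 0 := by
  have hsplitBt : A * (Ak⁻¹ * Bᵀ) + W * (Ak⁻¹ * Bᵀ) = Bᵀ := by
    have h := congrArg (fun M => M * (Ak⁻¹ * Bᵀ)) hAksum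
    simp only [Matrix.add_mul] at h
    rw [← Matrix.mul_assoc Ak Ak⁻¹ Bᵀ, hia, Matrix.one_mul] at h
    exact h
  have hsplitB : B * (Ak⁻¹ * A) + B * (Ak⁻¹ * W) = B := by
    have h := congrArg (fun M => B * (Ak⁻¹ * M)) hAksum
    simp only [Matrix.mul_add] at h
    rw [hai, Matrix.mul_one] at h
    exact h
  rw [fromBlocks_multiply, fromBlocks_multiply, sub_sub, fromBlocks_add,
    sub_eq_add_neg, fromBlocks_neg, fromBlocks_add, fromBlocks_inj]
  refine ⟨?_, ?_, ?_, ?_⟩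
  · simp only [Matrix.mul_zero, Matrix.zero_mul, add_zero, zero_add]
    rw [keyAA, Matrix.mul_assoc Bᵀ Sk⁻¹ B]
    abel
  · simp only [Matrix.mul_zero, Matrix.zero_mul, add_zero, zero_add]
    rw [Matrix.mul_assoc A Ak⁻¹ Bᵀ, eq_sub_of_add_eq hsplitBt]
    abel
  · simp only [Matrix.mul_zero, Matrix.zero_mul, add_zero, zero_add]
    rw [Matrix.mul_assoc B Ak⁻¹ A, eq_sub_of_add_eq hsplitB]
    abel
  · simp only [Matrix.mul_zero, Matrix.zero_mul, add_zero, zero_add]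
    rw [Matrix.mul_assoc B Ak⁻¹ Bᵀ, hSk]
    abel

end AuxLemmas

/-- eigenvalue multiplicities of the preconditioned operator `T = M_k⁻¹ K`:
the eigenvalue `-1` has multiplicity `k` (i.e. `dim ker (T + I) = k`), the eigenvalue `1`
has multiplicity `n - m + k` (i.e. `dim ker (T - I) = n - m + k`), and the eigenvalues
`(1 ± √5)/2` each have multiplicity `m - k` (i.e. `dim ker (T² - T - I) = 2(m - k)`). -/
theorem precondTk_eigenvalue_multiplicities {n m k : ℕ}
    (hk : 0 < k) (hkm : k < m) (hmn : m < n)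
    (A : Matrix (Fin n) (Fin n) ℝ) (B : Matrix (Fin m) (Fin n) ℝ)
    (Wk : Matrix (Fin m) (Fin m) ℝ)
    (hA : A.PosSemidef) (hrA : A.rank = n - k) (hrB : B.rank = m)
    (hK : IsUnit (Matrix.fromBlocks A Bᵀ B 0))
    (hWk : Wk.PosSemidef) (hrWk : Wk.rank = k)
    (hAk : (A + Bᵀ * Wk * B).PosDef) :
    Module.finrank ℝ (LinearMap.ker (Matrix.mulVecLin (precondTk A B Wk + 1))) = k ∧
    Module.finrank ℝ (LinearMap.ker (Matrix.mulVecLin (precondTk A B Wk - 1))) =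
      n - m + k ∧
    Module.finrank ℝ (LinearMap.ker (Matrix.mulVecLin
        (precondTk A B Wk * precondTk A B Wk - precondTk A B Wk - 1))) =
      2 * (m - k) := by
  have hT : precondTk A B Wk =
      (fromBlocks (A + Bᵀ * Wk * B) 0 0 (B * (A + Bᵀ * Wk * B)⁻¹ * Bᵀ))⁻¹ *
        fromBlocks A Bᵀ B 0 := rfl
  rw [hT]
  set W := Bᵀ * Wk * B with hWdef
  set Ak := A + W with hAkdef
  set Sk := B * Ak⁻¹ * Bᵀ with hSkdef
  set Km := fromBlocks A Bᵀ B (0 : Matrix (Fin m) (Fin m) ℝ) with hKmdef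
  set Mk := fromBlocks Ak 0 0 Sk with hMkdef
  -- basic symmetry facts
  have hAs : Aᵀ = A := by
    rw [← conjTranspose_eq_transpose_of_trivial]; exact hA.1
  have hWks : Wkᵀ = Wk := by
    rw [← conjTranspose_eq_transpose_of_trivial]; exact hWk.1
  have hWs : Wᵀ = W := by
    rw [hWdef]; simp [transpose_mul, hWks, Matrix.mul_assoc]
  have hAks : Akᵀ = Ak := by
    rw [hAkdef, transpose_add, hAs, hWs]
  -- invertibility of Ak
  have hAkd : IsUnit Ak.det := (Matrix.isUnit_iff_isUnit_det Ak).mp hAk.isUnit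
  have hai : Ak⁻¹ * Ak = 1 := nonsing_inv_mul _ hAkd
  have hia : Ak * Ak⁻¹ = 1 := mul_nonsing_inv _ hAkd
  have hAkiPD : Ak⁻¹.PosDef := hAk.inv
  have hAkis : (Ak⁻¹)ᵀ = Ak⁻¹ := by
    rw [← conjTranspose_eq_transpose_of_trivial]; exact hAkiPD.1
  -- injectivity of Bᵀ
  have hkerBt : LinearMap.ker Bᵀ.mulVecLin = ⊥ := by
    have h := nullity_add_rank Bᵀ
    rw [rank_transpose, hrB] at h
    have h0 : Module.finrank ℝ (LinearMap.ker Bᵀ.mulVecLin) = 0 := by omega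
    exact Submodule.finrank_eq_zero.mp h0
  have hBt_inj : ∀ y : Fin m → ℝ, Bᵀ *ᵥ y = 0 → y = 0 := by
    intro y hy
    have hmem : y ∈ LinearMap.ker Bᵀ.mulVecLin := hy
    rw [hkerBt] at hmem
    exact hmem
  -- Sk is positive definite
  have hSkPD : Sk.PosDef := by
    refine Matrix.PosDef.of_dotProduct_mulVec_pos ?_ (fun y hy => ?_)
    · show Skᴴ = Sk
      rw [conjTranspose_eq_transpose_of_trivial, hSkdef]
      simp [transpose_mul, hAkis, Matrix.mul_assoc]
    · have hne : Bᵀ *ᵥ y ≠ 0 := fun h0 => hy (hBt_inj y h0)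
      have hp := hAkiPD.dotProduct_mulVec_pos hne
      simp only [star_trivial] at hp ⊢
      have hexp : y ⬝ᵥ Sk *ᵥ y = (Bᵀ *ᵥ y) ⬝ᵥ Ak⁻¹ *ᵥ (Bᵀ *ᵥ y) := by
        rw [hSkdef, ← mulVec_mulVec, ← mulVec_mulVec, dotProduct_mulVec y B,
          ← mulVec_transpose]
      rw [hexp]
      exact hp
  have hSkd : IsUnit Sk.det := (Matrix.isUnit_iff_isUnit_det Sk).mp hSkPD.isUnit
  have hsi : Sk⁻¹ * Sk = 1 := nonsing_inv_mul _ hSkd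
  have his : Sk * Sk⁻¹ = 1 := mul_nonsing_inv _ hSkd
  have hSk_inj : Function.Injective Sk.mulVec :=
    Matrix.mulVec_injective_iff_isUnit.mpr hSkPD.isUnit
  -- Mk is invertible, with block diagonal inverse
  have hMkd : IsUnit Mk.det := by
    rw [hMkdef, det_fromBlocks_zero₂₁]
    exact hAkd.mul hSkd
  have hMkinv : Mk⁻¹ = fromBlocks Ak⁻¹ 0 0 Sk⁻¹ := by
    apply inv_eq_right_inv
    rw [hMkdef, fromBlocks_multiply]
    simp [hia, his, fromBlocks_one]
  have hMkiu : IsUnit (Mk⁻¹).det := isUnit_nonsing_inv_det _ hMkd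
  -- dimensions of basic kernels
  have hnA : Module.finrank ℝ (LinearMap.ker A.mulVecLin) = k := by
    have := nullity_add_rank A
    rw [hrA] at this
    omega
  have hnB : Module.finrank ℝ (LinearMap.ker B.mulVecLin) = n - m := by
    have := nullity_add_rank B
    rw [hrB] at this
    omega
  -- the key orthogonality identities
  have key0 : A * Ak⁻¹ * W = 0 := by
    have hkn : k ≤ n := by omega
    have := key_zero hkn A B Wk hrA (rank_W B Wk hWk hrWk hrB) hAkd
    exact this
  have key0' : W * Ak⁻¹ * A = 0 := by
    have h := congrArg Matrix.transpose key0
    simp only [transpose_mul, transpose_zero, hAs, hWs, hAkis, Matrix.mul_assoc] at h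
    rw [Matrix.mul_assoc]
    exact h
  have keyAA : A * Ak⁻¹ * A = A := by
    have h1 : A * Ak⁻¹ * Ak = A := by rw [Matrix.mul_assoc, hai, Matrix.mul_one]
    rw [hAkdef, Matrix.mul_add, key0, add_zero] at h1
    exact h1
  have key0assoc : A * (Ak⁻¹ * W) = 0 := by
    rw [← Matrix.mul_assoc]; exact key0
  have keyWW : W * Ak⁻¹ * W = W := by
    have h1 : W * Ak⁻¹ * Ak = W := by rw [Matrix.mul_assoc, hai, Matrix.mul_one]
    rw [hAkdef, Matrix.mul_add, key0', zero_add] at h1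
    exact h1
  -- helper facts about vectors in the kernel of A
  have hWxAk : ∀ x : Fin n → ℝ, A *ᵥ x = 0 → W *ᵥ x = Ak *ᵥ x := by
    intro x hx
    rw [hAkdef, add_mulVec, hx, zero_add]
  have hSkW : ∀ x : Fin n → ℝ, A *ᵥ x = 0 → Sk *ᵥ (Wk *ᵥ (B *ᵥ x)) = B *ᵥ x := by
    intro x hx
    have h2 : Sk * (Wk * B) = B * (Ak⁻¹ * W) := by
      rw [hSkdef, hWdef]; simp only [Matrix.mul_assoc]
    calc Sk *ᵥ (Wk *ᵥ (B *ᵥ x)) = (Sk * (Wk * B)) *ᵥ x := by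
          rw [mulVec_mulVec, mulVec_mulVec]; simp only [Matrix.mul_assoc]
      _ = B *ᵥ (Ak⁻¹ *ᵥ (W *ᵥ x)) := by
          rw [h2, ← mulVec_mulVec, ← mulVec_mulVec]
      _ = B *ᵥ x := by
          rw [hWxAk x hx, mulVec_mulVec, mulVec_mulVec, Matrix.mul_assoc, hai,
            Matrix.mul_one]
  -- reduce the three goals to kernels of K ± Mk etc.
  have hke1 : LinearMap.ker (Mk⁻¹ * Km + 1).mulVecLin
      = LinearMap.ker (Km + Mk).mulVecLin := by
    have h : Mk⁻¹ * Km + 1 = Mk⁻¹ * (Km + Mk) := by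
      rw [Matrix.mul_add, nonsing_inv_mul _ hMkd]
    rw [h, ker_unit_mul _ _ hMkiu]
  have hke2 : LinearMap.ker (Mk⁻¹ * Km - 1).mulVecLin
      = LinearMap.ker (Km - Mk).mulVecLin := by
    have h : Mk⁻¹ * Km - 1 = Mk⁻¹ * (Km - Mk) := by
      rw [Matrix.mul_sub, nonsing_inv_mul _ hMkd]
    rw [h, ker_unit_mul _ _ hMkiu]
  have hke3 : LinearMap.ker (Mk⁻¹ * Km * (Mk⁻¹ * Km) - Mk⁻¹ * Km - 1).mulVecLin
      = LinearMap.ker (Km * Mk⁻¹ * Km - Km - Mk).mulVecLin := by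
    have h : Mk⁻¹ * Km * (Mk⁻¹ * Km) - Mk⁻¹ * Km - 1
        = Mk⁻¹ * (Km * Mk⁻¹ * Km - Km - Mk) := by
      rw [Matrix.mul_sub, Matrix.mul_sub, nonsing_inv_mul _ hMkd]
      simp only [Matrix.mul_assoc]
    rw [h, ker_unit_mul _ _ hMkiu]
  -- PART 1
  have hpart1 : Module.finrank ℝ (LinearMap.ker (Km + Mk).mulVecLin) = k := by
    have hKM : Km + Mk = fromBlocks (A + Ak) Bᵀ B Sk := by
      rw [hKmdef, hMkdef, fromBlocks_add, add_zero, add_zero, zero_add]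
    have hset : LinearMap.ker (fromBlocks (A + Ak) Bᵀ B Sk).mulVecLin
        = (LinearMap.ker A.mulVecLin).map (liftL (-(Wk * B))) := by
      ext v
      simp only [LinearMap.mem_ker, mulVecLin_apply, Submodule.mem_map]
      constructor
      · intro hv
        rw [fromBlocks_mulVec] at hv
        have e1 : (A + Ak) *ᵥ (v ∘ Sum.inl) + Bᵀ *ᵥ (v ∘ Sum.inr) = 0 :=
          funext fun i => congrFun hv (Sum.inl i)
        have e2 : B *ᵥ (v ∘ Sum.inl) + Sk *ᵥ (v ∘ Sum.inr) = 0 :=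
          funext fun i => congrFun hv (Sum.inr i)
        set x := v ∘ Sum.inl with hxdef
        set y := v ∘ Sum.inr with hydef
        set w := Bᵀ *ᵥ y with hwdef
        set z := Ak⁻¹ *ᵥ w with hzdef
        set u := x + z with hudef
        have hAkz : Ak *ᵥ z = w := by
          rw [hzdef, mulVec_mulVec, hia, one_mulVec]
        have hAku : Ak *ᵥ u = Ak *ᵥ x + w := by
          rw [hudef, mulVec_add, hAkz]
        have hSky : Sk *ᵥ y = B *ᵥ z := by
          rw [hSkdef, ← mulVec_mulVec, ← mulVec_mulVec]
        have l1 : x ⬝ᵥ ((A + Ak) *ᵥ x + Bᵀ *ᵥ y)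
            = x ⬝ᵥ A *ᵥ x + x ⬝ᵥ Ak *ᵥ x + x ⬝ᵥ w := by
          rw [add_mulVec, dotProduct_add, dotProduct_add, ← hwdef]
        have hwx : w ⬝ᵥ x = y ⬝ᵥ B *ᵥ x := by
          rw [hwdef, dot_transpose]
        have hyBz : y ⬝ᵥ B *ᵥ z = z ⬝ᵥ w := by
          rw [← dot_transpose B y z, ← hwdef, dotProduct_comm]
        have l2 : y ⬝ᵥ (B *ᵥ x + Sk *ᵥ y) = w ⬝ᵥ x + z ⬝ᵥ w := by
          rw [dotProduct_add, hSky, hwx, hyBz]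
        have l3 : u ⬝ᵥ Ak *ᵥ u = x ⬝ᵥ Ak *ᵥ x + x ⬝ᵥ w + (w ⬝ᵥ x + z ⬝ᵥ w) := by
          rw [hAku, hudef, add_dotProduct, dotProduct_add, dotProduct_add,
            dot_symm Ak hAks z x, hAkz]
        have h1 : x ⬝ᵥ ((A + Ak) *ᵥ x + Bᵀ *ᵥ y) = 0 := by rw [e1, dotProduct_zero]
        have h2 : y ⬝ᵥ (B *ᵥ x + Sk *ᵥ y) = 0 := by rw [e2, dotProduct_zero]
        have g1 : 0 ≤ x ⬝ᵥ A *ᵥ x := by have := hA.dotProduct_mulVec_nonneg x; simpa using this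
        have g2 : 0 ≤ u ⬝ᵥ Ak *ᵥ u := by have := hAk.posSemidef.dotProduct_mulVec_nonneg u; simpa using this
        have hxA0 : x ⬝ᵥ A *ᵥ x = 0 := by
          rw [l1] at h1; rw [l2] at h2; linarith [l3]
        have huA0 : u ⬝ᵥ Ak *ᵥ u = 0 := by
          rw [l1] at h1; rw [l2] at h2; linarith [l3]
        have hAx : A *ᵥ x = 0 := by
          have hiff := hA.dotProduct_mulVec_zero_iff x
          simp only [star_trivial] at hiff
          exact hiff.mp hxA0
        have hu0 : u = 0 := by
          by_contra hne
          have := hAk.dotProduct_mulVec_pos hne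
          simp only [star_trivial] at this
          linarith
        have hy' : y = -(Wk *ᵥ (B *ᵥ x)) := by
          apply hSk_inj
          show Sk *ᵥ y = Sk *ᵥ _
          rw [mulVec_neg, hSkW x hAx]
          have : Sk *ᵥ y = B *ᵥ z := hSky
          have hz0 : z = -x := by
            have h := hu0
            rw [hudef] at h
            exact eq_neg_of_add_eq_zero_right h
          rw [hSky, hz0, mulVec_neg]
        refine ⟨x, hAx, ?_⟩
        rw [liftL_apply]
        funext i
        cases i with
        | inl i => rfl
        | inr j =>
          show ((-(Wk * B)) *ᵥ x) j = y j
          rw [hy', neg_mulVec, ← mulVec_mulVec]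
      · rintro ⟨x, hx, rfl⟩
        have hAx : A *ᵥ x = 0 := hx
        rw [liftL_apply, fromBlocks_mulVec]
        have hcl : (Sum.elim x ((-(Wk * B)) *ᵥ x) ∘ Sum.inl) = x := rfl
        have hcr : (Sum.elim x ((-(Wk * B)) *ᵥ x) ∘ Sum.inr) = (-(Wk * B)) *ᵥ x := rfl
        rw [hcl, hcr]
        have hBtW : Bᵀ *ᵥ ((-(Wk * B)) *ᵥ x) = -(W *ᵥ x) := by
          rw [neg_mulVec, mulVec_neg, mulVec_mulVec, hWdef, ← Matrix.mul_assoc]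
        have p0 : (A + Ak) *ᵥ x + Bᵀ *ᵥ ((-(Wk * B)) *ᵥ x) = 0 := by
          rw [hBtW, add_mulVec, hAx, zero_add, hWxAk x hAx]
          abel
        have q0 : B *ᵥ x + Sk *ᵥ ((-(Wk * B)) *ᵥ x) = 0 := by
          rw [neg_mulVec, mulVec_neg, ← mulVec_mulVec x Wk B, hSkW x hAx]
          abel
        rw [p0, q0]
        funext i
        cases i <;> rfl
    rw [hKM, hset, finrank_map_inj _ (liftL_inj _), hnA]
  -- PART 2
  have hpart2 : Module.finrank ℝ (LinearMap.ker (Km - Mk).mulVecLin) = n - m + k := by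
    have hKM : Km - Mk = fromBlocks (A - Ak) Bᵀ B (-Sk) := by
      rw [hKmdef, hMkdef, sub_eq_add_neg, fromBlocks_neg, fromBlocks_add]
      simp [sub_eq_add_neg]
    have hAmAk : ∀ x : Fin n → ℝ, (A - Ak) *ᵥ x = -(W *ᵥ x) := by
      intro x
      rw [hAkdef, sub_mulVec, add_mulVec]
      abel
    have hset : LinearMap.ker (fromBlocks (A - Ak) Bᵀ B (-Sk)).mulVecLin
        = (LinearMap.ker A.mulVecLin ⊔ LinearMap.ker B.mulVecLin).map
            (liftL (Sk⁻¹ * B)) := by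
      ext v
      simp only [LinearMap.mem_ker, mulVecLin_apply, Submodule.mem_map]
      constructor
      · intro hv
        rw [fromBlocks_mulVec] at hv
        have e1 : (A - Ak) *ᵥ (v ∘ Sum.inl) + Bᵀ *ᵥ (v ∘ Sum.inr) = 0 :=
          funext fun i => congrFun hv (Sum.inl i)
        have e2 : B *ᵥ (v ∘ Sum.inl) + (-Sk) *ᵥ (v ∘ Sum.inr) = 0 :=
          funext fun i => congrFun hv (Sum.inr i)
        set x := v ∘ Sum.inl with hxdef
        set y := v ∘ Sum.inr with hydef
        rw [hAmAk x] at e1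
        have hBty : Bᵀ *ᵥ y = W *ᵥ x := (neg_add_eq_zero.mp e1).symm
        have hSky : Sk *ᵥ y = B *ᵥ x := by
          rw [neg_mulVec] at e2
          exact (add_neg_eq_zero.mp e2).symm
        have hy : (Sk⁻¹ * B) *ᵥ x = y := by
          rw [← mulVec_mulVec x Sk⁻¹ B, ← hSky, mulVec_mulVec y Sk⁻¹ Sk, hsi,
            one_mulVec]
        set a := Ak⁻¹ *ᵥ (W *ᵥ x) with hadef
        have haA : A *ᵥ a = 0 := by
          rw [hadef, mulVec_mulVec (W *ᵥ x) A Ak⁻¹, mulVec_mulVec x (A * Ak⁻¹) W,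
            Matrix.mul_assoc, key0assoc, zero_mulVec]
        have hBa : B *ᵥ a = B *ᵥ x := by
          rw [hadef, ← hBty, mulVec_mulVec, mulVec_mulVec]
          have hsb : B * Ak⁻¹ * Bᵀ = Sk := hSkdef.symm
          rw [hsb]
          exact hSky.symm ▸ hSky
        have hbB : B *ᵥ (x - a) = 0 := by
          rw [mulVec_sub, hBa, sub_self]
        refine ⟨x, Submodule.mem_sup.mpr ⟨a, haA, x - a, hbB, by abel⟩, ?_⟩
        rw [liftL_apply]
        funext i
        cases i with
        | inl i => rfl
        | inr j => exact congrFun hy j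
      · rintro ⟨x, hxsup, rfl⟩
        obtain ⟨a, ha, b, hb, hab⟩ := Submodule.mem_sup.mp hxsup
        have haA : A *ᵥ a = 0 := ha
        have hbB : B *ᵥ b = 0 := hb
        have hBx : B *ᵥ x = B *ᵥ a := by
          rw [← hab, mulVec_add, hbB, add_zero]
        have hWb : W *ᵥ b = 0 := by
          rw [hWdef, ← mulVec_mulVec b (Bᵀ * Wk) B, hbB, mulVec_zero]
        have hWx2 : W *ᵥ x = W *ᵥ a := by
          rw [← hab, mulVec_add, hWb, add_zero]
        have hyval : (Sk⁻¹ * B) *ᵥ x = Wk *ᵥ (B *ᵥ a) := by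
          have h1 : Sk *ᵥ (Wk *ᵥ (B *ᵥ a)) = B *ᵥ a := hSkW a haA
          rw [← mulVec_mulVec x Sk⁻¹ B, hBx]
          conv_lhs => rw [← h1]
          rw [mulVec_mulVec _ Sk⁻¹ Sk, hsi, one_mulVec]
        rw [liftL_apply, fromBlocks_mulVec]
        have hcl : (Sum.elim x ((Sk⁻¹ * B) *ᵥ x) ∘ Sum.inl) = x := rfl
        have hcr : (Sum.elim x ((Sk⁻¹ * B) *ᵥ x) ∘ Sum.inr) = (Sk⁻¹ * B) *ᵥ x := rfl
        rw [hcl, hcr]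
        have p0 : (A - Ak) *ᵥ x + Bᵀ *ᵥ ((Sk⁻¹ * B) *ᵥ x) = 0 := by
          rw [hAmAk x, hyval, mulVec_mulVec _ Bᵀ Wk, mulVec_mulVec a (Bᵀ * Wk) B]
          rw [show Bᵀ * Wk * B = W from hWdef.symm, hWx2]
          abel
        have q0 : B *ᵥ x + (-Sk) *ᵥ ((Sk⁻¹ * B) *ᵥ x) = 0 := by
          rw [neg_mulVec, hyval, hSkW a haA, hBx]
          abel
        rw [p0, q0]
        funext i
        cases i <;> rfl
    have hinf : LinearMap.ker A.mulVecLin ⊓ LinearMap.ker B.mulVecLin = ⊥ := by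
      rw [Submodule.eq_bot_iff]
      intro x hx
      have hxa : A *ᵥ x = 0 := hx.1
      have hxb : B *ᵥ x = 0 := hx.2
      have hKinj : Function.Injective Km.mulVec :=
        Matrix.mulVec_injective_iff_isUnit.mpr hK
      have h0 : Km *ᵥ Sum.elim x (0 : Fin m → ℝ) = Km *ᵥ 0 := by
        rw [mulVec_zero, hKmdef, fromBlocks_mulVec]
        have hcl : (Sum.elim x (0 : Fin m → ℝ) ∘ Sum.inl) = x := rfl
        have hcr : (Sum.elim x (0 : Fin m → ℝ) ∘ Sum.inr) = 0 := rfl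
        rw [hcl, hcr, hxa, hxb, mulVec_zero, mulVec_zero]
        funext i
        cases i <;> simp
      have hz := hKinj h0
      funext i
      exact congrFun hz (Sum.inl i)
    have hsup := Submodule.finrank_sup_add_finrank_inf_eq
      (LinearMap.ker A.mulVecLin) (LinearMap.ker B.mulVecLin)
    rw [hinf, finrank_bot, hnA, hnB] at hsup
    rw [hKM, hset, finrank_map_inj _ (liftL_inj _)]
    omega
  -- PART 3
  have hBAkBt : B * (Ak⁻¹ * Bᵀ) = Sk := by rw [hSkdef, Matrix.mul_assoc]
  have hWkill : ∀ w' : Fin n → ℝ, B *ᵥ w' = 0 → W *ᵥ w' = 0 := by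
    intro w' hw
    rw [hWdef, ← mulVec_mulVec w' (Bᵀ * Wk) B, hw, mulVec_zero]
  have hWz : ∀ z : Fin n → ℝ, B *ᵥ (Ak⁻¹ *ᵥ (W *ᵥ z)) = 0 → W *ᵥ z = 0 := by
    intro z hz
    have h1 : W *ᵥ (Ak⁻¹ *ᵥ (W *ᵥ z)) = 0 := hWkill _ hz
    have h2 : W *ᵥ z = (W * Ak⁻¹ * W) *ᵥ z := by rw [keyWW]
    rw [h2, ← mulVec_mulVec z (W * Ak⁻¹) W, ← mulVec_mulVec (W *ᵥ z) W Ak⁻¹]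
    exact h1
  have hpart3 : Module.finrank ℝ
      (LinearMap.ker (Km * Mk⁻¹ * Km - Km - Mk).mulVecLin) = 2 * (m - k) := by
    -- block form of the matrix
    have hX3 : Km * Mk⁻¹ * Km - Km - Mk
        = fromBlocks (Bᵀ * (Sk⁻¹ * B) - Ak) (-(W * (Ak⁻¹ * Bᵀ)))
            (-(B * (Ak⁻¹ * W))) 0 := by
      rw [hKmdef, hMkdef, hMkinv]
      exact X3_blocks A Ak W B Sk hAkdef.symm hBAkBt hia hai hsi keyAA
    set P1 : Submodule ℝ (Fin n → ℝ) := LinearMap.ker W.mulVecLin ⊓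
      LinearMap.ker (Bᵀ * (Sk⁻¹ * B) - Ak).mulVecLin with hP1def
    set Q1 : Submodule ℝ (Fin m → ℝ) :=
      LinearMap.ker (W * (Ak⁻¹ * Bᵀ)).mulVecLin with hQ1def
    -- membership helpers
    have hmemP1 : ∀ x : Fin n → ℝ,
        x ∈ P1 ↔ W *ᵥ x = 0 ∧ (Bᵀ * (Sk⁻¹ * B) - Ak) *ᵥ x = 0 := by
      intro x
      rw [hP1def, Submodule.mem_inf]
      rfl
    have hmemQ1 : ∀ y : Fin m → ℝ, y ∈ Q1 ↔ (W * (Ak⁻¹ * Bᵀ)) *ᵥ y = 0 := by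
      intro y
      rw [hQ1def]
      rfl
    -- the kernel as a sup of two mapped submodules
    have hker3 : LinearMap.ker (fromBlocks (Bᵀ * (Sk⁻¹ * B) - Ak)
          (-(W * (Ak⁻¹ * Bᵀ))) (-(B * (Ak⁻¹ * W))) 0).mulVecLin
        = P1.map (liftL (0 : Matrix (Fin m) (Fin n) ℝ)) ⊔ Q1.map liftR := by
      ext v
      simp only [LinearMap.mem_ker, mulVecLin_apply]
      constructor
      · intro hv
        rw [fromBlocks_mulVec] at hv
        have e1 : (Bᵀ * (Sk⁻¹ * B) - Ak) *ᵥ (v ∘ Sum.inl)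
            + (-(W * (Ak⁻¹ * Bᵀ))) *ᵥ (v ∘ Sum.inr) = 0 :=
          funext fun i => congrFun hv (Sum.inl i)
        have e2 : (-(B * (Ak⁻¹ * W))) *ᵥ (v ∘ Sum.inl)
            + (0 : Matrix (Fin m) (Fin m) ℝ) *ᵥ (v ∘ Sum.inr) = 0 :=
          funext fun i => congrFun hv (Sum.inr i)
        set x := v ∘ Sum.inl with hxdef
        set y := v ∘ Sum.inr with hydef
        rw [zero_mulVec, add_zero, neg_mulVec, neg_eq_zero] at e2
        have hBAW : B *ᵥ (Ak⁻¹ *ᵥ (W *ᵥ x)) = 0 := by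
          rw [mulVec_mulVec (W *ᵥ x) B Ak⁻¹, mulVec_mulVec x (B * Ak⁻¹) W,
            Matrix.mul_assoc]
          exact e2
        have hWx0 : W *ᵥ x = 0 := hWz x hBAW
        have hterm : (-(W * (Ak⁻¹ * Bᵀ))) *ᵥ y
            = -(W *ᵥ (Ak⁻¹ *ᵥ (Bᵀ *ᵥ y))) := by
          rw [neg_mulVec, ← mulVec_mulVec y W (Ak⁻¹ * Bᵀ),
            ← mulVec_mulVec y Ak⁻¹ Bᵀ]
        have e1' : (Bᵀ * (Sk⁻¹ * B) - Ak) *ᵥ x = W *ᵥ (Ak⁻¹ *ᵥ (Bᵀ *ᵥ y)) := by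
          rw [hterm] at e1
          exact add_neg_eq_zero.mp e1
        have t1 : B *ᵥ (Ak⁻¹ *ᵥ ((Bᵀ * (Sk⁻¹ * B)) *ᵥ x)) = B *ᵥ x := by
          rw [← mulVec_mulVec x Bᵀ (Sk⁻¹ * B), ← mulVec_mulVec x Sk⁻¹ B,
            mulVec_mulVec (Sk⁻¹ *ᵥ (B *ᵥ x)) Ak⁻¹ Bᵀ,
            mulVec_mulVec (Sk⁻¹ *ᵥ (B *ᵥ x)) B (Ak⁻¹ * Bᵀ), hBAkBt,
            mulVec_mulVec (B *ᵥ x) Sk Sk⁻¹, his, one_mulVec]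
        have t2 : B *ᵥ (Ak⁻¹ *ᵥ (Ak *ᵥ x)) = B *ᵥ x := by
          rw [mulVec_mulVec (Ak *ᵥ x) B Ak⁻¹, mulVec_mulVec x (B * Ak⁻¹) Ak,
            Matrix.mul_assoc, hai, Matrix.mul_one]
        have happ : B *ᵥ (Ak⁻¹ *ᵥ (W *ᵥ (Ak⁻¹ *ᵥ (Bᵀ *ᵥ y)))) = 0 := by
          rw [← e1', sub_mulVec, mulVec_sub, mulVec_sub, t1, t2, sub_self]
        have hWq : W *ᵥ (Ak⁻¹ *ᵥ (Bᵀ *ᵥ y)) = 0 := hWz _ happ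
        have hx2 : (Bᵀ * (Sk⁻¹ * B) - Ak) *ᵥ x = 0 := by rw [e1', hWq]
        have hxP : x ∈ P1 := (hmemP1 x).mpr ⟨hWx0, hx2⟩
        have hyQ : y ∈ Q1 := by
          rw [hmemQ1]
          rw [← mulVec_mulVec y W (Ak⁻¹ * Bᵀ), ← mulVec_mulVec y Ak⁻¹ Bᵀ]
          exact hWq
        refine Submodule.mem_sup.mpr ⟨liftL 0 x, Submodule.mem_map_of_mem hxP,
          liftR y, Submodule.mem_map_of_mem hyQ, ?_⟩
        funext i
        cases i with
        | inl i => show x i + (0 : ℝ) = v (Sum.inl i); rw [add_zero]; rfl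
        | inr j =>
            show ((0 : Matrix (Fin m) (Fin n) ℝ) *ᵥ x) j + y j = v (Sum.inr j)
            rw [zero_mulVec]
            show (0 : ℝ) + y j = v (Sum.inr j)
            rw [zero_add]
            rfl
      · intro hv
        obtain ⟨p, hp, q, hq, rfl⟩ := Submodule.mem_sup.mp hv
        obtain ⟨x, hxP, rfl⟩ := hp
        obtain ⟨y, hyQ, rfl⟩ := hq
        obtain ⟨hWx0, hx2⟩ := (hmemP1 x).mp hxP
        have hyQ' : (W * (Ak⁻¹ * Bᵀ)) *ᵥ y = 0 := (hmemQ1 y).mp hyQ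
        have hsum : liftL (0 : Matrix (Fin m) (Fin n) ℝ) x + liftR y
            = Sum.elim x y := by
          funext i
          cases i with
          | inl i => show x i + (0 : ℝ) = x i; rw [add_zero]
          | inr j =>
              show ((0 : Matrix (Fin m) (Fin n) ℝ) *ᵥ x) j + y j = y j
              rw [zero_mulVec]
              show (0 : ℝ) + y j = y j
              rw [zero_add]
        rw [hsum, fromBlocks_mulVec]
        have hcl : (Sum.elim x y ∘ Sum.inl) = x := rfl
        have hcr : (Sum.elim x y ∘ Sum.inr) = y := rfl
        rw [hcl, hcr, hx2, neg_mulVec, hyQ', neg_zero, add_zero, zero_mulVec,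
          add_zero, neg_mulVec]
        have hBAW : (B * (Ak⁻¹ * W)) *ᵥ x = 0 := by
          rw [← mulVec_mulVec x B (Ak⁻¹ * W), ← mulVec_mulVec x Ak⁻¹ W, hWx0,
            mulVec_zero, mulVec_zero]
        rw [hBAW, neg_zero]
        funext i
        cases i <;> rfl
    -- dimension of Q1
    have hrQmat : (W * (Ak⁻¹ * Bᵀ)).rank = k := by
      have hform : W * (Ak⁻¹ * Bᵀ) = Bᵀ * (Wk * Sk) := by
        rw [← hBAkBt, hWdef]
        simp only [Matrix.mul_assoc]
      rw [hform, rank_lmul_inj Bᵀ (Wk * Sk) hkerBt,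
        rank_mul_eq_left_of_isUnit_det Sk Wk hSkd, hrWk]
    have hnQ1 : Module.finrank ℝ Q1 = m - k := by
      have := nullity_add_rank (W * (Ak⁻¹ * Bᵀ))
      rw [hrQmat] at this
      have h2 : Module.finrank ℝ Q1
          = Module.finrank ℝ (LinearMap.ker (W * (Ak⁻¹ * Bᵀ)).mulVecLin) := by
        rw [hQ1def]
      omega
    -- P1 is the image of Q1 under an injective map
    have hφinj : Function.Injective ((Ak⁻¹ * Bᵀ).mulVecLin) := by
      have hker : ∀ z : Fin m → ℝ, (Ak⁻¹ * Bᵀ) *ᵥ z = 0 → z = 0 := by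
        intro z hz
        apply hBt_inj
        have h := congrArg (fun t => Ak *ᵥ t) hz
        simp only [mulVec_zero] at h
        rw [mulVec_mulVec z Ak (Ak⁻¹ * Bᵀ), ← Matrix.mul_assoc, hia,
          Matrix.one_mul] at h
        exact h
      intro z1 z2 h
      simp only [mulVecLin_apply] at h
      have h2 : (Ak⁻¹ * Bᵀ) *ᵥ (z1 - z2) = 0 := by
        rw [mulVec_sub, h, sub_self]
      have h3 := hker _ h2
      exact sub_eq_zero.mp h3
    have hPQ : P1 = Q1.map ((Ak⁻¹ * Bᵀ).mulVecLin) := by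
      ext x
      rw [hmemP1 x]
      constructor
      · rintro ⟨h1, h2⟩
        rw [sub_mulVec, sub_eq_zero] at h2
        have hBtz : Bᵀ *ᵥ (Sk⁻¹ *ᵥ (B *ᵥ x)) = Ak *ᵥ x := by
          rw [mulVec_mulVec (B *ᵥ x) Bᵀ Sk⁻¹, mulVec_mulVec x (Bᵀ * Sk⁻¹) B,
            Matrix.mul_assoc]
          exact h2
        refine ⟨Sk⁻¹ *ᵥ (B *ᵥ x), ?_, ?_⟩
        · apply (hmemQ1 _).mpr
          rw [← mulVec_mulVec _ W (Ak⁻¹ * Bᵀ), ← mulVec_mulVec _ Ak⁻¹ Bᵀ, hBtz,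
            mulVec_mulVec x Ak⁻¹ Ak, hai, one_mulVec]
          exact h1
        · show (Ak⁻¹ * Bᵀ) *ᵥ (Sk⁻¹ *ᵥ (B *ᵥ x)) = x
          rw [← mulVec_mulVec _ Ak⁻¹ Bᵀ, hBtz, mulVec_mulVec x Ak⁻¹ Ak, hai,
            one_mulVec]
      · rintro ⟨z, hzQ, rfl⟩
        have hzQ' : (W * (Ak⁻¹ * Bᵀ)) *ᵥ z = 0 := hzQ
        constructor
        · show W *ᵥ ((Ak⁻¹ * Bᵀ) *ᵥ z) = 0
          rw [mulVec_mulVec z W (Ak⁻¹ * Bᵀ)]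
          exact hzQ'
        · show (Bᵀ * (Sk⁻¹ * B) - Ak) *ᵥ ((Ak⁻¹ * Bᵀ) *ᵥ z) = 0
          rw [sub_mulVec]
          have hAkz : Ak *ᵥ ((Ak⁻¹ * Bᵀ) *ᵥ z) = Bᵀ *ᵥ z := by
            rw [mulVec_mulVec z Ak (Ak⁻¹ * Bᵀ), ← Matrix.mul_assoc, hia,
              Matrix.one_mul]
          have hBz : (Bᵀ * (Sk⁻¹ * B)) *ᵥ ((Ak⁻¹ * Bᵀ) *ᵥ z) = Bᵀ *ᵥ z := by
            rw [mulVec_mulVec z (Bᵀ * (Sk⁻¹ * B)) (Ak⁻¹ * Bᵀ)]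
            have hassoc : Bᵀ * (Sk⁻¹ * B) * (Ak⁻¹ * Bᵀ)
                = Bᵀ * (Sk⁻¹ * (B * (Ak⁻¹ * Bᵀ))) := by
              simp only [Matrix.mul_assoc]
            rw [hassoc, hBAkBt, ← Matrix.mul_assoc, Matrix.mul_assoc Bᵀ Sk⁻¹ Sk,
              hsi, Matrix.mul_one]
          rw [hBz, hAkz, sub_self]
    have hnP1 : Module.finrank ℝ P1 = m - k := by
      rw [hPQ, finrank_map_inj _ hφinj, hnQ1]
    -- the two mapped submodules intersect trivially
    have hinf3 : P1.map (liftL (0 : Matrix (Fin m) (Fin n) ℝ)) ⊓ Q1.map liftR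
        = ⊥ := by
      rw [Submodule.eq_bot_iff]
      intro v hv
      obtain ⟨x, _, hvx⟩ := hv.1
      obtain ⟨y, _, hvy⟩ := hv.2
      funext i
      cases i with
      | inl i =>
          rw [← hvy]
          show (0 : Fin n → ℝ) i = 0
          rfl
      | inr j =>
          rw [← hvx]
          show ((0 : Matrix (Fin m) (Fin n) ℝ) *ᵥ x) j = 0
          rw [zero_mulVec]
          rfl
    have hsup := Submodule.finrank_sup_add_finrank_inf_eq
      (P1.map (liftL (0 : Matrix (Fin m) (Fin n) ℝ))) (Q1.map liftR)
    rw [hinf3, finrank_bot, finrank_map_inj _ (liftL_inj _),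
      finrank_map_inj _ liftR_inj, hnP1, hnQ1] at hsup
    rw [hX3, hker3]
    omega
  refine ⟨?_, ?_, ?_⟩
  · rw [hke1, hpart1]
  · rw [hke2, hpart2]
  · rw [hke3, hpart3]
end
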